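/- arXiv:2302.12210 — 10 statements merged into one kernel-verified Lean document; each statement's English description precedes it below -/
import Mathlib

section
/- With the hash-function setup below, let (v_1,…,v_{2k}) be a k-tuple of ordered pairs of vertices of G, i.e., each {v_{2i-1},v_{2i}} is an edge of G, and let Q = ∏_{j=1}^{2k} X_j(v_j). If there exists a function φ : V(H) → V(G) with φ(a_j) = v_j for every 1 ≤ j ≤ 2k (i.e., the assignment (a_{2i-1},a_{2i}) ↦ (v_{2i-1},v_{2i}) induces a homomorphism of directed graphs), then Q equals the identity of 𝒢 with probability 1. If no such φ exists, then Q is uniformly distributed on 𝒢. -/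
open Finset

section
variable {J T V 𝒢 : Type} [Fintype J] [DecidableEq J] [Fintype T] [DecidableEq T]
  [Fintype V] [DecidableEq V] [CommGroup 𝒢]

/-- Key product identity A. -/
theorem stmt1_prodA (a : J → T) (δsel : T → J) (hδ : ∀ b, a (δsel b) = b)
    (X : J → V → 𝒢)
    (hdist : ∀ (b : T) (x : V),
      X (δsel b) x = ∏ j ∈ univ.filter (fun j => a j = b ∧ j ≠ δsel b), (X j x)⁻¹)
    (v : J → V) :
    ∏ j : J, X j (v j)
      = ∏ j ∈ univ.filter (fun j => j ≠ δsel (a j)),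
          (X j (v j) * (X j (v (δsel (a j))))⁻¹) := by
  classical
  have hδinj : Function.Injective δsel := fun b1 b2 h => by
    have := hδ b1; rw [h, hδ b2] at this; exact this.symm
  have hsplit : ∏ j : J, X j (v j)
      = (∏ j ∈ univ.filter (fun j => ¬ j ≠ δsel (a j)), X j (v j))
        * ∏ j ∈ univ.filter (fun j => j ≠ δsel (a j)), X j (v j) := by
    rw [mul_comm]
    exact (prod_filter_mul_prod_filter_not univ _ _).symm
  have himg : univ.filter (fun j => ¬ j ≠ δsel (a j)) = univ.image δsel := by
    ext j
    simp only [mem_filter, mem_univ, true_and, mem_image, not_not]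
    constructor
    · intro h; exact ⟨a j, h.symm⟩
    · rintro ⟨b, rfl⟩; rw [hδ b]
  have hDprod : ∏ j ∈ univ.filter (fun j => ¬ j ≠ δsel (a j)), X j (v j)
      = ∏ j ∈ univ.filter (fun j => j ≠ δsel (a j)), (X j (v (δsel (a j))))⁻¹ := by
    rw [himg, prod_image (fun b _ b' _ h => hδinj h)]
    have step : ∀ b : T, X (δsel b) (v (δsel b))
        = ∏ j ∈ (univ.filter (fun j => j ≠ δsel (a j))).filter (fun j => a j = b),
            (X j (v (δsel (a j))))⁻¹ := by
      intro b
      rw [hdist b (v (δsel b))]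
      apply Finset.prod_congr
      · ext j
        simp only [mem_filter, mem_univ, true_and]
        constructor
        · rintro ⟨hab, hne⟩
          refine ⟨?_, hab⟩
          rw [hab]; exact hne
        · rintro ⟨hne, hab⟩
          refine ⟨hab, ?_⟩
          rw [← hab]; exact hne
      · intro j hj
        simp only [mem_filter, mem_univ, true_and] at hj
        rw [hj.2]
    calc ∏ b : T, X (δsel b) (v (δsel b))
        = ∏ b : T, ∏ j ∈ (univ.filter (fun j => j ≠ δsel (a j))).filter
            (fun j => a j = b), (X j (v (δsel (a j))))⁻¹ :=
          Finset.prod_congr rfl (fun b _ => step b)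
      _ = _ := Finset.prod_fiberwise _ a _
  rw [hsplit, hDprod, ← Finset.prod_mul_distrib]
  exact Finset.prod_congr rfl (fun j _ => mul_comm _ _)

/-- Key product identity B. -/
theorem stmt1_prodB (P : J → Prop) [DecidablePred P] (f : J → V → 𝒢) (v w : J → V) :
    ∏ j ∈ univ.filter P, (f j (v j) * (f j (w j))⁻¹)
      = ∏ p : {q : J × V // P q.1},
          (f p.1.1 p.1.2) ^ ((if p.1.2 = v p.1.1 then 1 else 0)
            - (if p.1.2 = w p.1.1 then (1 : ℤ) else 0)) := by
  classical
  rw [← Finset.prod_subtype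
    (univ.filter (fun q : J × V => P q.1))
    (fun q => by simp)
    (fun q : J × V => (f q.1 q.2) ^ ((if q.2 = v q.1 then 1 else 0)
      - (if q.2 = w q.1 then (1 : ℤ) else 0)))]
  have hprodset : univ.filter (fun q : J × V => P q.1)
      = (univ.filter P) ×ˢ (univ : Finset V) := by
    ext q; simp
  rw [hprodset, Finset.prod_product]
  apply Finset.prod_congr rfl
  intro j _
  have h1 : ∏ x : V, (f j x) ^ (if x = v j then (1 : ℤ) else 0) = f j (v j) := by
    rw [Finset.prod_congr rfl (fun x _ => show (f j x) ^ (if x = v j then (1 : ℤ) else 0)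
      = if x = v j then f j x else 1 by split <;> simp)]
    simp [Finset.prod_ite_eq']
  have h2 : ∏ x : V, (f j x) ^ (if x = w j then (1 : ℤ) else 0) = f j (w j) := by
    rw [Finset.prod_congr rfl (fun x _ => show (f j x) ^ (if x = w j then (1 : ℤ) else 0)
      = if x = w j then f j x else 1 by split <;> simp)]
    simp [Finset.prod_ite_eq']
  calc f j (v j) * (f j (w j))⁻¹
      = (∏ x : V, (f j x) ^ (if x = v j then (1 : ℤ) else 0))
        * (∏ x : V, (f j x) ^ (if x = w j then (1 : ℤ) else 0))⁻¹ := by rw [h1, h2]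
    _ = ∏ x : V, (f j x) ^ ((if x = v j then 1 else 0)
          - (if x = w j then (1 : ℤ) else 0)) := by
        rw [← Finset.prod_inv_distrib, ← Finset.prod_mul_distrib]
        exact Finset.prod_congr rfl
          (fun x _ => by rw [zpow_sub]; try rw [div_eq_mul_inv]
          )

end

open MeasureTheory ProbabilityTheory

/-- A uniform random variable times an independent random variable is uniform. -/
theorem stmt1_unif_mul {Ω : Type} [MeasurableSpace Ω] (μ : Measure Ω) [IsProbabilityMeasure μ]
    {𝒢 : Type} [CommGroup 𝒢] [Fintype 𝒢] [MeasurableSpace 𝒢] [DiscreteMeasurableSpace 𝒢]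
    (Y R : Ω → 𝒢) (hY : Measurable Y) (hR : Measurable R)
    (hind : IndepFun Y R μ)
    (hunif : ∀ g : 𝒢, μ {ω | Y ω = g} = ((Fintype.card 𝒢 : ENNReal))⁻¹) (g : 𝒢) :
    μ {ω | Y ω * R ω = g} = ((Fintype.card 𝒢 : ENNReal))⁻¹ := by
  classical
  have hset : {ω | Y ω * R ω = g} = ⋃ h : 𝒢, (Y ⁻¹' {g * h⁻¹} ∩ R ⁻¹' {h}) := by
    ext ω
    simp only [Set.mem_setOf_eq, Set.mem_iUnion, Set.mem_inter_iff, Set.mem_preimage,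
      Set.mem_singleton_iff]
    constructor
    · intro hm; exact ⟨R ω, by rw [← hm]; group, rfl⟩
    · rintro ⟨h, h1, h2⟩; rw [h1, h2]; group
  have hdisj : Pairwise (Function.onFun Disjoint
      fun h : 𝒢 => (Y ⁻¹' {g * h⁻¹} ∩ R ⁻¹' {h})) := by
    intro h1 h2 hne
    refine Set.disjoint_left.2 ?_
    rintro ω ⟨-, hr1⟩ ⟨-, hr2⟩
    exact hne (hr1.symm.trans hr2)
  have hmeas : ∀ h : 𝒢, MeasurableSet (Y ⁻¹' {g * h⁻¹} ∩ R ⁻¹' {h}) := fun h =>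
    (hY (measurableSet_singleton _)).inter (hR (measurableSet_singleton _))
  rw [hset, measure_iUnion hdisj hmeas, tsum_fintype]
  have hterm : ∀ h : 𝒢, μ (Y ⁻¹' {g * h⁻¹} ∩ R ⁻¹' {h})
      = ((Fintype.card 𝒢 : ENNReal))⁻¹ * μ (R ⁻¹' {h}) := by
    intro h
    rw [hind.measure_inter_preimage_eq_mul _ _ (measurableSet_singleton _)
      (measurableSet_singleton _)]
    congr 1
    simpa [Set.preimage, Set.mem_singleton_iff] using hunif (g * h⁻¹)
  simp only [hterm]
  rw [← Finset.mul_sum]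
  have hsum : ∑ h : 𝒢, μ (R ⁻¹' {h}) = 1 := by
    rw [sum_measure_preimage_singleton _ (fun h _ => hR (measurableSet_singleton h))]
    simp
  rw [hsum, mul_one]

set_option maxHeartbeats 1000000 in
/-- With the hash-function setup (one hash function per half-edge of `H`,
the distinguished one at each vertex defined as the inverse of the product of the others,
the remaining ones mutually independent and uniform on a finite commutative group `𝒢`):
for a `k`-tuple of ordered pairs of adjacent vertices of `G`, if the assignment
`a j ↦ v j` extends to a map `φ : V(H) → V(G)` (i.e. induces a digraph homomorphism), then
`Q = ∏ j, X j (v j)` is the identity with probability 1; otherwise `Q` is uniformly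
distributed on `𝒢`.  Half-edges are indexed by `Fin k × Bool`: `(i, false)` is the tail and
`(i, true)` the head of the `i`-th directed edge `(a (i,false), a (i,true))` of `H`. -/
theorem stmt1
    {t k : ℕ}
    (H : SimpleGraph (Fin t)) [DecidableRel H.Adj]
    (hHconn : H.Connected) (hHdeg : ∀ b : Fin t, 2 ≤ H.degree b)
    (a : Fin k × Bool → Fin t)
    (ha : ∀ i : Fin k, H.Adj (a (i, false)) (a (i, true)))
    (henum : ∀ e ∈ H.edgeSet, ∃! i : Fin k, e = s(a (i, false), a (i, true)))
    {VG : Type} [Fintype VG] [DecidableEq VG] (G : SimpleGraph VG) [DecidableRel G.Adj]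
    {Ω : Type} [MeasurableSpace Ω] (μ : Measure Ω) [IsProbabilityMeasure μ]
    {𝒢 : Type} [CommGroup 𝒢] [Fintype 𝒢] [MeasurableSpace 𝒢] [DiscreteMeasurableSpace 𝒢]
    (δsel : Fin t → Fin k × Bool) (hδ : ∀ b : Fin t, a (δsel b) = b)
    (X : Fin k × Bool → VG → Ω → 𝒢)
    (hXmeas : ∀ j v, Measurable (X j v))
    (hXindep : iIndepFun
      (fun p : {q : (Fin k × Bool) × VG // q.1 ≠ δsel (a q.1)} => X p.1.1 p.1.2) μ)
    (hXunif : ∀ (j : Fin k × Bool) (x : VG), j ≠ δsel (a j) →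
      ∀ g : 𝒢, μ {ω | X j x ω = g} = ((Fintype.card 𝒢 : ENNReal))⁻¹)
    (hXdist : ∀ (b : Fin t) (x : VG) (ω : Ω),
      X (δsel b) x ω
        = ∏ j ∈ Finset.univ.filter (fun j : Fin k × Bool => a j = b ∧ j ≠ δsel b),
            (X j x ω)⁻¹)
    (v : Fin k × Bool → VG)
    (hv : ∀ i : Fin k, G.Adj (v (i, false)) (v (i, true))) :
    ((∃ φ : Fin t → VG, ∀ j : Fin k × Bool, φ (a j) = v j) →
        μ {ω | ∏ j : Fin k × Bool, X j (v j) ω = 1} = 1) ∧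
    ((¬ ∃ φ : Fin t → VG, ∀ j : Fin k × Bool, φ (a j) = v j) →
        ∀ g : 𝒢, μ {ω | ∏ j : Fin k × Bool, X j (v j) ω = g}
          = ((Fintype.card 𝒢 : ENNReal))⁻¹) := by
  classical
  have key : ∀ ω : Ω, ∏ j : Fin k × Bool, X j (v j) ω
      = ∏ j ∈ Finset.univ.filter (fun j : Fin k × Bool => j ≠ δsel (a j)),
          (X j (v j) ω * (X j (v (δsel (a j))) ω)⁻¹) := fun ω =>
    stmt1_prodA a δsel hδ (fun j x => X j x ω) (fun b x => hXdist b x ω) v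
  refine ⟨?_, ?_⟩
  · rintro ⟨φ, hφ⟩
    have hφδ : ∀ b : Fin t, φ b = v (δsel b) := fun b => by rw [← hφ (δsel b), hδ b]
    have hvw : ∀ j : Fin k × Bool, v j = v (δsel (a j)) := fun j => by
      rw [← hφ j, hφδ (a j)]
    have hone : ∀ ω : Ω, ∏ j : Fin k × Bool, X j (v j) ω = 1 := by
      intro ω
      rw [key ω]
      apply Finset.prod_eq_one
      intro j _
      rw [← hvw j, mul_inv_cancel]
    have hU : {ω : Ω | ∏ j : Fin k × Bool, X j (v j) ω = 1} = Set.univ := by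
      ext ω; simp [hone ω]
    rw [hU]; exact measure_univ
  · intro hno g
    have hbad : ∃ j : Fin k × Bool, v j ≠ v (δsel (a j)) := by
      by_contra hc
      push_neg at hc
      exact hno ⟨fun b => v (δsel b), fun j => (hc j).symm⟩
    obtain ⟨j0, hne⟩ := hbad
    have hj0 : j0 ≠ δsel (a j0) := fun h => hne (by rw [← h])
    set e : (Fin k × Bool) × VG → ℤ := fun q =>
      (if q.2 = v q.1 then 1 else 0) - (if q.2 = v (δsel (a q.1)) then 1 else 0)
      with hedef
    set f' : {q : (Fin k × Bool) × VG // q.1 ≠ δsel (a q.1)} → Ω → 𝒢 :=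
      fun p ω => (X p.1.1 p.1.2 ω) ^ e p.1 with hf'def
    have key2 : ∀ ω : Ω,
        ∏ j ∈ Finset.univ.filter (fun j : Fin k × Bool => j ≠ δsel (a j)),
          (X j (v j) ω * (X j (v (δsel (a j))) ω)⁻¹)
        = ∏ p : {q : (Fin k × Bool) × VG // q.1 ≠ δsel (a q.1)}, f' p ω := fun ω =>
      stmt1_prodB (fun j : Fin k × Bool => j ≠ δsel (a j))
        (fun j x => X j x ω) v (fun j => v (δsel (a j)))
    have hf'meas : ∀ p, Measurable (f' p) := fun p =>
      (Measurable.of_discrete (f := fun x : 𝒢 => x ^ e p.1)).comp (hXmeas p.1.1 p.1.2)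
    have hindep' : iIndepFun f' μ :=
      hXindep.comp (fun p x => x ^ e p.1) (fun p => Measurable.of_discrete)
    set p0 : {q : (Fin k × Bool) × VG // q.1 ≠ δsel (a q.1)} := ⟨(j0, v j0), hj0⟩
      with hp0def
    have hind : IndepFun (f' p0) (∏ p ∈ Finset.univ.erase p0, f' p) μ :=
      (hindep'.indepFun_finsetProd_of_notMem hf'meas
        (Finset.notMem_erase p0 Finset.univ)).symm
    have hRfn : (∏ p ∈ Finset.univ.erase p0, f' p)
        = fun ω => ∏ p ∈ Finset.univ.erase p0, f' p ω := by
      funext ω; exact Finset.prod_apply ω _ _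
    have hRmeas : Measurable (∏ p ∈ Finset.univ.erase p0, f' p) := by
      rw [hRfn]
      exact Finset.measurable_prod _ (fun p _ => hf'meas p)
    have hYeq : ∀ ω : Ω, f' p0 ω = X j0 (v j0) ω := by
      intro ω
      have he1 : e (j0, v j0) = 1 := by simp [hedef, hne]
      rw [hf'def]
      simp only [hp0def]
      rw [he1, zpow_one]
    have hYunif : ∀ g' : 𝒢, μ {ω | f' p0 ω = g'} = ((Fintype.card 𝒢 : ENNReal))⁻¹ := by
      intro g'
      have : {ω | f' p0 ω = g'} = {ω | X j0 (v j0) ω = g'} := by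
        ext ω; rw [Set.mem_setOf_eq, hYeq ω]; rfl
      rw [this]
      exact hXunif j0 (v j0) hj0 g'
    have hfinal := stmt1_unif_mul μ (f' p0) (∏ p ∈ Finset.univ.erase p0, f' p)
      (hf'meas p0) hRmeas hind hYunif g
    have hseteq : {ω : Ω | ∏ j : Fin k × Bool, X j (v j) ω = g}
        = {ω | f' p0 ω * (∏ p ∈ Finset.univ.erase p0, f' p) ω = g} := by
      ext ω
      rw [Set.mem_setOf_eq, Set.mem_setOf_eq, key ω, key2 ω, hRfn,
        ← Finset.mul_prod_erase Finset.univ (fun p => f' p ω) (Finset.mem_univ p0)]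
    rw [hseteq]
    exact hfinal
end

section
/- With the setup below, fix any (deterministic) coloring 𝒞 : V(G) → {1,…,C} and any pairwise distinct colors c_1,…,c_t ∈ {1,…,C}. Then the expectation over the hash functions of tr(S_{(c_1,…,c_t)})/d equals the number of k-tuples (v_1,…,v_{2k}) of vertices of G such that each {v_{2i-1},v_{2i}} is an edge of G, 𝒞(v_j) = c_{a_j} for every 1 ≤ j ≤ 2k, and there exists an injective function φ : V(H) → V(G) with φ(a_j) = v_j for all 1 ≤ j ≤ 2k. -/
open MeasureTheory ProbabilityTheory

def chiHom {𝒢 : Type*} [CommGroup 𝒢] {m : Type*} [Fintype m] [DecidableEq m]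
    (ρ : 𝒢 →* Matrix m m ℂ) (hdiag : ∀ g : 𝒢, ∃ f : m → ℂ, ρ g = Matrix.diagonal f) (e : m) :
    𝒢 →* ℂ where
  toFun g := ρ g e e
  map_one' := by show (ρ 1) e e = 1; rw [map_one]; exact Matrix.one_apply_eq e
  map_mul' g g' := by
    show (ρ (g * g')) e e = (ρ g) e e * (ρ g') e e
    obtain ⟨f, hf⟩ := hdiag g
    rw [map_mul, hf, Matrix.diagonal_mul, Matrix.diagonal_apply_eq]

@[simp] lemma chiHom_apply {𝒢 : Type*} [CommGroup 𝒢] {m : Type*} [Fintype m] [DecidableEq m]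
    (ρ : 𝒢 →* Matrix m m ℂ) (hdiag : ∀ g : 𝒢, ∃ f : m → ℂ, ρ g = Matrix.diagonal f) (e : m)
    (g : 𝒢) : chiHom ρ hdiag e g = ρ g e e := rfl

lemma isDiag_list_prod_apply {m : Type*} [Fintype m] [DecidableEq m] (e : m) :
    ∀ (L : List (Matrix m m ℂ)), (∀ M ∈ L, M.IsDiag) →
      L.prod e e = (L.map fun M => M e e).prod
  | [], _ => by simp [Matrix.one_apply_eq]
  | M :: L, h => by
    simp only [List.prod_cons, List.map_cons]
    have hM : M.IsDiag := h M List.mem_cons_self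
    rw [Matrix.mul_apply, Finset.sum_eq_single e
      (fun b _ hb => by rw [hM (Ne.symm hb), zero_mul]) (by simp),
      isDiag_list_prod_apply e L (fun M' hM' => h M' (List.mem_cons_of_mem _ hM'))]

lemma integral_comp_fintype {Ω : Type*} [MeasurableSpace Ω] (μ : Measure Ω) [IsFiniteMeasure μ]
    {α : Type*} [Fintype α] (Y : Ω → α) (hY : ∀ v : α, MeasurableSet {ω | Y ω = v})
    (F : α → ℂ) :
    ∫ ω, F (Y ω) ∂μ = ∑ v : α, (μ {ω | Y ω = v}).toReal • F v := by
  classical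
  have hfun : (fun ω => F (Y ω))
      = fun ω => ∑ v : α, Set.indicator {ω' | Y ω' = v} (fun _ => F v) ω := by
    funext ω
    rw [Finset.sum_eq_single (Y ω)]
    · simp [Set.indicator_apply]
    · intro v _ hv
      simp only [Set.indicator_apply, Set.mem_setOf_eq]
      exact if_neg (fun h => hv h.symm)
    · simp
  rw [hfun, integral_finset_sum _ (fun v _ => (integrable_const (F v)).indicator (hY v))]
  exact Finset.sum_congr rfl fun v _ => integral_indicator_const _ (hY v)

set_option maxHeartbeats 2000000 in
/-- (Lemma `distinct_color`.)  The finite commutative group of complex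
`d × d` diagonal matrices summing to zero is modelled by an injective monoid homomorphism
`ρ : 𝒢 →* Matrix (Fin d) (Fin d) ℂ` from a finite commutative group `𝒢`, with every `ρ g`
diagonal and `∑ g, ρ g = 0`.  With the hash-function setup, a fixed coloring
`𝒞 : V(G) → Fin C` and pairwise distinct colors `c : Fin t → Fin C`, the expectation of
`tr(S_{(c₁,…,c_t)})/d` equals the number of `k`-tuples `(v₁,…,v_{2k})` of vertices of `G`
forming edges, colored compatibly with `c`, and extending to an injective map
`φ : V(H) → V(G)`. -/
theorem stmt2
    {t k : ℕ}
    (H : SimpleGraph (Fin t)) [DecidableRel H.Adj]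
    (hHconn : H.Connected) (hHdeg : ∀ b : Fin t, 2 ≤ H.degree b)
    (a : Fin k × Bool → Fin t)
    (ha : ∀ i : Fin k, H.Adj (a (i, false)) (a (i, true)))
    (henum : ∀ e ∈ H.edgeSet, ∃! i : Fin k, e = s(a (i, false), a (i, true)))
    {VG : Type} [Fintype VG] [DecidableEq VG] (G : SimpleGraph VG) [DecidableRel G.Adj]
    {Ω : Type} [MeasurableSpace Ω] (μ : Measure Ω) [IsProbabilityMeasure μ]
    {𝒢 : Type} [CommGroup 𝒢] [Fintype 𝒢] [MeasurableSpace 𝒢] [DiscreteMeasurableSpace 𝒢]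
    (d : ℕ) (hd : 0 < d)
    (ρ : 𝒢 →* Matrix (Fin d) (Fin d) ℂ)
    (hρinj : Function.Injective ρ)
    (hρdiag : ∀ g : 𝒢, ∃ f : Fin d → ℂ, ρ g = Matrix.diagonal f)
    (hρsum : ∑ g : 𝒢, ρ g = 0)
    (δsel : Fin t → Fin k × Bool) (hδ : ∀ b : Fin t, a (δsel b) = b)
    (X : Fin k × Bool → VG → Ω → 𝒢)
    (hXmeas : ∀ j x, Measurable (X j x))
    (hXindep : iIndepFun
      (fun p : {q : (Fin k × Bool) × VG // q.1 ≠ δsel (a q.1)} => X p.1.1 p.1.2) μ)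
    (hXunif : ∀ (j : Fin k × Bool) (x : VG), j ≠ δsel (a j) →
      ∀ g : 𝒢, μ {ω | X j x ω = g} = ((Fintype.card 𝒢 : ENNReal))⁻¹)
    (hXdist : ∀ (b : Fin t) (x : VG) (ω : Ω),
      X (δsel b) x ω
        = ∏ j ∈ Finset.univ.filter (fun j : Fin k × Bool => a j = b ∧ j ≠ δsel b),
            (X j x ω)⁻¹)
    -- the (deterministic) coloring and the pairwise distinct colors
    {C : ℕ} (𝒞 : VG → Fin C) (c : Fin t → Fin C) (hc : Function.Injective c)
    -- the sums `Z_i^{c₁,c₂}`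
    (Z : Fin k → Fin C → Fin C → Ω → Matrix (Fin d) (Fin d) ℂ)
    (hZ : ∀ (i : Fin k) (c₁ c₂ : Fin C) (ω : Ω),
      Z i c₁ c₂ ω = ∑ p : VG × VG,
        if G.Adj p.1 p.2 ∧ 𝒞 p.1 = c₁ ∧ 𝒞 p.2 = c₂ then
          ρ (X (i, false) p.1 ω) * ρ (X (i, true) p.2 ω)
        else 0)
    -- `S_{(c₁,…,c_t)}`, the (ordered) product of the `Z_i`
    (S : Ω → Matrix (Fin d) (Fin d) ℂ)
    (hS : ∀ ω : Ω,
      S ω = (List.ofFn fun i : Fin k =>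
        Z i (c (a (i, false))) (c (a (i, true))) ω).prod) :
    ∫ ω, Matrix.trace (S ω) / (d : ℂ) ∂μ
      = (Nat.card {v : Fin k × Bool → VG //
          (∀ i : Fin k, G.Adj (v (i, false)) (v (i, true))) ∧
          (∀ j : Fin k × Bool, 𝒞 (v j) = c (a j)) ∧
          ∃ φ : Fin t → VG, Function.Injective φ ∧
            ∀ j : Fin k × Bool, φ (a j) = v j} : ℂ) := by
  classical
  -- abbreviations
  let Pt := {q : (Fin k × Bool) × VG // q.1 ≠ δsel (a q.1)}
  let χ : Fin d → 𝒢 →* ℂ := fun e => chiHom ρ hρdiag e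
  let ψ : Fin d → (Fin k × Bool → VG) → Pt → 𝒢 → ℂ := fun e w p g =>
    (if w p.1.1 = p.1.2 then χ e g else 1) *
    (if w (δsel (a p.1.1)) = p.1.2 then χ e g⁻¹ else 1)
  let cond : (Fin k × Bool → VG) → Prop := fun w =>
    ∀ i : Fin k, G.Adj (w (i, false)) (w (i, true)) ∧
      𝒞 (w (i, false)) = c (a (i, false)) ∧ 𝒞 (w (i, true)) = c (a (i, true))
  let F : (Pt → 𝒢) → ℂ := fun h =>
    (∑ e : Fin d, ∑ w : Fin k × Bool → VG,
      if cond w then ∏ p : Pt, ψ e w p (h p) else 0) / d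
  let D : Finset (Fin k × Bool) := Finset.univ.filter (fun j => j ≠ δsel (a j))
  have hχ : ∀ (e : Fin d) (g : 𝒢), χ e g = ρ g e e := fun _ _ => rfl
  have hψ : ∀ (e : Fin d) (w : Fin k × Bool → VG) (p : Pt) (g : 𝒢),
      ψ e w p g = (if w p.1.1 = p.1.2 then χ e g else 1) *
        (if w (δsel (a p.1.1)) = p.1.2 then χ e g⁻¹ else 1) := fun _ _ _ _ => rfl
  have hF : ∀ h : Pt → 𝒢, F h = (∑ e : Fin d, ∑ w : Fin k × Bool → VG,
      if cond w then ∏ p : Pt, ψ e w p (h p) else 0) / d := fun _ => rfl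
  have hJprod : ∀ (f : Fin k × Bool → ℂ),
      (∏ j : Fin k × Bool, f j) = ∏ i : Fin k, (f (i, false) * f (i, true)) := by
    intro f
    rw [Fintype.prod_prod_type]
    exact Finset.prod_congr rfl fun i _ => by rw [Fintype.prod_bool]; exact mul_comm _ _
  -- the number of elements of 𝒢
  have hNne : ((Fintype.card 𝒢 : ℂ)) ≠ 0 := by
    exact_mod_cast Nat.cast_ne_zero.mpr Fintype.card_ne_zero
  -- the character sums
  have hchisum : ∀ e : Fin d, ∑ g : 𝒢, χ e g = 0 := by
    intro e
    have := congrArg (fun M : Matrix (Fin d) (Fin d) ℂ => M e e) hρsum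
    simpa [Matrix.sum_apply, hχ] using this
  have hchiinv : ∀ (e : Fin d) (g : 𝒢), χ e g * χ e g⁻¹ = 1 := by
    intro e g
    rw [← map_mul, mul_inv_cancel, map_one]
  have hchisuminv : ∀ e : Fin d, ∑ g : 𝒢, χ e g⁻¹ = 0 := by
    intro e
    exact (Fintype.sum_equiv (Equiv.inv 𝒢) (fun g => χ e g⁻¹) (fun g => χ e g)
      (fun g => rfl)).trans (hchisum e)
  -- STEP 2 : group-theoretic reshuffle of the product
  have step2 : ∀ (e : Fin d) (w : Fin k × Bool → VG) (ω : Ω),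
      (∏ j : Fin k × Bool, χ e (X j (w j) ω)) = ∏ p : Pt, ψ e w p (X p.1.1 p.1.2 ω) := by
    intro e w ω
    have hDcompl : (∏ j ∈ Finset.univ.filter (fun j : Fin k × Bool => ¬ j ≠ δsel (a j)),
          X j (w j) ω)
        = ∏ j ∈ D, (X j (w (δsel (a j))) ω)⁻¹ := by
      calc ∏ j ∈ Finset.univ.filter (fun j : Fin k × Bool => ¬ j ≠ δsel (a j)), X j (w j) ω
          = ∏ b : Fin t, X (δsel b) (w (δsel b)) ω := by
            refine (Finset.prod_nbij' (fun b => δsel b) (fun j => a j)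
              (fun b _ => ?_) (fun j hj => Finset.mem_univ _)
              (fun b _ => hδ b) (fun j hj => ?_) (fun b _ => rfl)).symm
            · simp only [Finset.mem_filter, Finset.mem_univ, true_and, not_not, hδ]
            · simp only [Finset.mem_filter, Finset.mem_univ, true_and, not_not] at hj
              exact hj.symm
        _ = ∏ b : Fin t, ∏ j' ∈ Finset.univ.filter
              (fun j' : Fin k × Bool => a j' = b ∧ j' ≠ δsel b), (X j' (w (δsel b)) ω)⁻¹ :=
            Finset.prod_congr rfl (fun b _ => hXdist b (w (δsel b)) ω)
        _ = ∏ b : Fin t, ∏ j' ∈ D.filter (fun j' => a j' = b),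
              (X j' (w (δsel (a j'))) ω)⁻¹ := by
            refine Finset.prod_congr rfl (fun b _ => ?_)
            refine Finset.prod_congr ?_ (fun j' hj' => ?_)
            · ext j'
              simp only [Finset.mem_filter, Finset.mem_univ, true_and, D]
              constructor
              · rintro ⟨hab, hne⟩
                exact ⟨by rw [hab]; exact hne, hab⟩
              · rintro ⟨hne, hab⟩
                exact ⟨hab, by rw [hab] at hne; exact hne⟩
            · obtain ⟨-, hab⟩ := Finset.mem_filter.mp hj'
              rw [hab]
        _ = ∏ j' ∈ D, (X j' (w (δsel (a j'))) ω)⁻¹ :=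
            Finset.prod_fiberwise_of_maps_to (fun _ _ => Finset.mem_univ _) _
    have hgrp : (∏ j : Fin k × Bool, X j (w j) ω)
        = ∏ j ∈ D, (X j (w j) ω * (X j (w (δsel (a j))) ω)⁻¹) := by
      rw [← Finset.prod_filter_mul_prod_filter_not Finset.univ
        (fun j : Fin k × Bool => j ≠ δsel (a j)) (fun j => X j (w j) ω),
        hDcompl, ← Finset.prod_mul_distrib]
    have hgrpχ := congrArg (χ e) hgrp
    rw [map_prod, map_prod] at hgrpχ
    simp only [map_mul] at hgrpχ
    rw [hgrpχ]
    calc ∏ j ∈ D, (χ e (X j (w j) ω) * χ e ((X j (w (δsel (a j))) ω)⁻¹))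
        = ∏ j ∈ D, ∏ x : VG,
            ((if w j = x then χ e (X j x ω) else 1) *
              (if w (δsel (a j)) = x then χ e ((X j x ω)⁻¹) else 1)) := by
          refine Finset.prod_congr rfl fun j _ => ?_
          rw [Finset.prod_mul_distrib, Finset.prod_ite_eq, Finset.prod_ite_eq]
          simp
      _ = ∏ q ∈ D ×ˢ (Finset.univ : Finset VG),
            ((if w q.1 = q.2 then χ e (X q.1 q.2 ω) else 1) *
              (if w (δsel (a q.1)) = q.2 then χ e ((X q.1 q.2 ω)⁻¹) else 1)) :=
          (Finset.prod_product D Finset.univ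
            (fun q => (if w q.1 = q.2 then χ e (X q.1 q.2 ω) else 1) *
              (if w (δsel (a q.1)) = q.2 then χ e ((X q.1 q.2 ω)⁻¹) else 1))).symm
      _ = ∏ p : Pt, ψ e w p (X p.1.1 p.1.2 ω) := by
          have hmem : ∀ q : (Fin k × Bool) × VG,
              q ∈ D ×ˢ (Finset.univ : Finset VG) ↔ q.1 ≠ δsel (a q.1) := by
            intro q; simp [D, Finset.mem_product]
          exact Finset.prod_subtype (D ×ˢ (Finset.univ : Finset VG)) hmem
            (fun q => (if w q.1 = q.2 then χ e (X q.1 q.2 ω) else 1) *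
              (if w (δsel (a q.1)) = q.2 then χ e ((X q.1 q.2 ω)⁻¹) else 1))
  -- STEP 1 : pointwise formula for the integrand
  have key : ∀ ω : Ω, Matrix.trace (S ω) / (d : ℂ)
      = F (fun p : Pt => X p.1.1 p.1.2 ω) := by
    intro ω
    have hZdiag : ∀ i : Fin k, (Z i (c (a (i, false))) (c (a (i, true))) ω).IsDiag := by
      intro i
      rw [hZ]
      intro e f hef
      rw [Matrix.sum_apply]
      refine Finset.sum_eq_zero fun p _ => ?_
      obtain ⟨f1, hf1⟩ := hρdiag (X (i, false) p.1 ω)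
      obtain ⟨f2, hf2⟩ := hρdiag (X (i, true) p.2 ω)
      rw [apply_ite (fun M : Matrix (Fin d) (Fin d) ℂ => M e f), Matrix.zero_apply,
        hf1, hf2, Matrix.diagonal_mul_diagonal, Matrix.diagonal_apply_ne _ hef, ite_self]
    have hZentry : ∀ (i : Fin k) (e : Fin d),
        (Z i (c (a (i, false))) (c (a (i, true))) ω) e e
        = ∑ p : VG × VG,
            if G.Adj p.1 p.2 ∧ 𝒞 p.1 = c (a (i, false)) ∧ 𝒞 p.2 = c (a (i, true)) then
              χ e (X (i, false) p.1 ω) * χ e (X (i, true) p.2 ω)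
            else 0 := by
      intro i e
      rw [hZ, Matrix.sum_apply]
      refine Finset.sum_congr rfl fun p _ => ?_
      rw [apply_ite (fun M : Matrix (Fin d) (Fin d) ℂ => M e e), Matrix.zero_apply]
      refine if_congr Iff.rfl ?_ rfl
      rw [hχ, hχ]
      obtain ⟨f1, hf1⟩ := hρdiag (X (i, false) p.1 ω)
      rw [hf1, Matrix.diagonal_mul, Matrix.diagonal_apply_eq]
    have hSe : ∀ e : Fin d, S ω e e
        = ∏ i : Fin k, (Z i (c (a (i, false))) (c (a (i, true))) ω) e e := by
      intro e
      rw [hS, isDiag_list_prod_apply e _ (fun M hM => ?_), List.map_ofFn, List.prod_ofFn]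
      · rfl
      · rw [List.mem_ofFn] at hM
        obtain ⟨i, rfl⟩ := hM
        exact hZdiag i
    let Eqv : (Fin k × Bool → VG) ≃ (Fin k → VG × VG) :=
      { toFun := fun w i => (w (i, false), w (i, true))
        invFun := fun v j => match j.2 with | false => (v j.1).1 | true => (v j.1).2
        left_inv := by intro w; funext j; rcases j with ⟨i, b⟩; cases b <;> rfl
        right_inv := by intro v; funext i; exact Prod.mk.eta }
    have htr : Matrix.trace (S ω)
        = ∑ e : Fin d, ∑ w : Fin k × Bool → VG,
            (if cond w then ∏ j : Fin k × Bool, χ e (X j (w j) ω) else 0) := by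
      refine Finset.sum_congr rfl fun e _ => ?_
      calc S ω e e = ∏ i : Fin k, (Z i (c (a (i, false))) (c (a (i, true))) ω) e e := hSe e
        _ = ∏ i : Fin k, ∑ p : VG × VG,
            (if G.Adj p.1 p.2 ∧ 𝒞 p.1 = c (a (i, false)) ∧ 𝒞 p.2 = c (a (i, true)) then
              χ e (X (i, false) p.1 ω) * χ e (X (i, true) p.2 ω) else 0) :=
            Finset.prod_congr rfl fun i _ => hZentry i e
        _ = ∑ v ∈ Fintype.piFinset (fun _ : Fin k => (Finset.univ : Finset (VG × VG))),
            ∏ i : Fin k,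
            (if G.Adj (v i).1 (v i).2 ∧ 𝒞 (v i).1 = c (a (i, false))
                ∧ 𝒞 (v i).2 = c (a (i, true)) then
              χ e (X (i, false) (v i).1 ω) * χ e (X (i, true) (v i).2 ω) else 0) :=
            Finset.prod_univ_sum _ _
        _ = ∑ v : Fin k → VG × VG, ∏ i : Fin k,
            (if G.Adj (v i).1 (v i).2 ∧ 𝒞 (v i).1 = c (a (i, false))
                ∧ 𝒞 (v i).2 = c (a (i, true)) then
              χ e (X (i, false) (v i).1 ω) * χ e (X (i, true) (v i).2 ω) else 0) := by
            rw [Fintype.piFinset_univ]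
        _ = ∑ w : Fin k × Bool → VG, ∏ i : Fin k,
            (if G.Adj (w (i, false)) (w (i, true)) ∧ 𝒞 (w (i, false)) = c (a (i, false))
                ∧ 𝒞 (w (i, true)) = c (a (i, true)) then
              χ e (X (i, false) (w (i, false)) ω) * χ e (X (i, true) (w (i, true)) ω)
            else 0) :=
            (Fintype.sum_equiv Eqv _ _ (fun w => rfl)).symm
        _ = ∑ w : Fin k × Bool → VG,
            (if cond w then ∏ j : Fin k × Bool, χ e (X j (w j) ω) else 0) := by
            refine Finset.sum_congr rfl fun w _ => ?_
            by_cases hcw : cond w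
            · rw [if_pos hcw, hJprod (fun j => χ e (X j (w j) ω))]
              exact Finset.prod_congr rfl fun i _ => if_pos (hcw i)
            · rw [if_neg hcw]
              obtain ⟨i, hi⟩ := not_forall.mp hcw
              exact Finset.prod_eq_zero (Finset.mem_univ i) (if_neg hi)
    rw [hF, htr]
    congr 1
    refine Finset.sum_congr rfl fun e _ => Finset.sum_congr rfl fun w _ => ?_
    exact if_congr Iff.rfl (step2 e w ω) rfl
  -- STEP 3 : the law of Y
  have hYmeas : ∀ v : Pt → 𝒢, MeasurableSet {ω | (fun p : Pt => X p.1.1 p.1.2 ω) = v} := by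
    intro v
    have : {ω | (fun p : Pt => X p.1.1 p.1.2 ω) = v}
        = ⋂ p : Pt, (X p.1.1 p.1.2) ⁻¹' {v p} := by
      ext ω; simp [funext_iff, Set.mem_iInter]
    rw [this]
    exact MeasurableSet.iInter fun p => hXmeas _ _ (measurableSet_singleton (v p))
  have hYunif : ∀ v : Pt → 𝒢, μ {ω | (fun p : Pt => X p.1.1 p.1.2 ω) = v}
      = ((Fintype.card 𝒢 : ENNReal))⁻¹ ^ (Fintype.card Pt) := by
    intro v
    have hset : {ω | (fun p : Pt => X p.1.1 p.1.2 ω) = v}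
        = ⋂ p : Pt, (X p.1.1 p.1.2) ⁻¹' {v p} := by
      ext ω; simp [funext_iff]
    rw [hset, hXindep.meas_iInter (fun p => ⟨{v p}, measurableSet_singleton _, rfl⟩)]
    have huni : ∀ p : Pt, μ ((X p.1.1 p.1.2) ⁻¹' {v p}) = ((Fintype.card 𝒢 : ENNReal))⁻¹ :=
      fun p => hXunif p.1.1 p.1.2 p.2 (v p)
    rw [Finset.prod_congr rfl (fun p _ => huni p), Finset.prod_const, Finset.card_univ]
  -- STEP 4 : compute the single-site averages
  have hsingle : ∀ (e : Fin d) (w : Fin k × Bool → VG) (p : Pt),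
      ∑ g : 𝒢, ((Fintype.card 𝒢 : ℂ))⁻¹ * ψ e w p g
        = if (w p.1.1 = p.1.2 ↔ w (δsel (a p.1.1)) = p.1.2) then 1 else 0 := by
    intro e w p
    by_cases h1 : w p.1.1 = p.1.2 <;> by_cases h2 : w (δsel (a p.1.1)) = p.1.2
    · rw [if_pos (iff_of_true h1 h2)]
      calc ∑ g : 𝒢, ((Fintype.card 𝒢 : ℂ))⁻¹ * ψ e w p g
          = ∑ _g : 𝒢, ((Fintype.card 𝒢 : ℂ))⁻¹ := Finset.sum_congr rfl fun g _ => by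
            rw [hψ, if_pos h1, if_pos h2, hchiinv, mul_one]
        _ = 1 := by
            rw [Finset.sum_const, Finset.card_univ, nsmul_eq_mul, mul_inv_cancel₀ hNne]
    · rw [if_neg (fun h => h2 (h.mp h1))]
      calc ∑ g : 𝒢, ((Fintype.card 𝒢 : ℂ))⁻¹ * ψ e w p g
          = ∑ g : 𝒢, ((Fintype.card 𝒢 : ℂ))⁻¹ * χ e g := Finset.sum_congr rfl fun g _ => by
            rw [hψ, if_pos h1, if_neg h2, mul_one]
        _ = 0 := by rw [← Finset.mul_sum, hchisum, mul_zero]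
    · rw [if_neg (fun h => h1 (h.mpr h2))]
      calc ∑ g : 𝒢, ((Fintype.card 𝒢 : ℂ))⁻¹ * ψ e w p g
          = ∑ g : 𝒢, ((Fintype.card 𝒢 : ℂ))⁻¹ * χ e g⁻¹ := Finset.sum_congr rfl fun g _ => by
            rw [hψ, if_neg h1, if_pos h2, one_mul]
        _ = 0 := by rw [← Finset.mul_sum, hchisuminv, mul_zero]
    · rw [if_pos (iff_of_false h1 h2)]
      calc ∑ g : 𝒢, ((Fintype.card 𝒢 : ℂ))⁻¹ * ψ e w p g
          = ∑ _g : 𝒢, ((Fintype.card 𝒢 : ℂ))⁻¹ := Finset.sum_congr rfl fun g _ => by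
            rw [hψ, if_neg h1, if_neg h2, mul_one, mul_one]
        _ = 1 := by
            rw [Finset.sum_const, Finset.card_univ, nsmul_eq_mul, mul_inv_cancel₀ hNne]
  -- STEP 5 : the combinatorial equivalence
  have hiff : ∀ w : Fin k × Bool → VG,
      (cond w ∧ ∀ p : Pt, (w p.1.1 = p.1.2 ↔ w (δsel (a p.1.1)) = p.1.2)) ↔
      ((∀ i : Fin k, G.Adj (w (i, false)) (w (i, true))) ∧
        (∀ j : Fin k × Bool, 𝒞 (w j) = c (a j)) ∧
        ∃ φ : Fin t → VG, Function.Injective φ ∧ ∀ j : Fin k × Bool, φ (a j) = w j) := by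
    intro w
    constructor
    · rintro ⟨hcond', hgood'⟩
      have hgood : ∀ j : Fin k × Bool, w j = w (δsel (a j)) := by
        intro j
        by_cases hj : j = δsel (a j)
        · conv_lhs => rw [hj]
        · exact ((hgood' ⟨(j, w j), hj⟩).mp rfl).symm
      have hcol : ∀ j : Fin k × Bool, 𝒞 (w j) = c (a j) := by
        rintro ⟨i, b⟩
        cases b
        · exact (hcond' i).2.1
        · exact (hcond' i).2.2
      refine ⟨fun i => (hcond' i).1, hcol, fun b => w (δsel b), ?_, ?_⟩
      · intro b b' hbb
        have hbb' : w (δsel b) = w (δsel b') := hbb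
        apply hc
        have h1 := hcol (δsel b); rw [hδ] at h1
        have h2 := hcol (δsel b'); rw [hδ] at h2
        rw [← h1, ← h2, hbb']
      · intro j
        exact (hgood j).symm
    · rintro ⟨hadj, hcol, φ, hφinj, hφ⟩
      have hgood : ∀ j : Fin k × Bool, w j = w (δsel (a j)) := by
        intro j; rw [← hφ j, ← hφ (δsel (a j)), hδ]
      refine ⟨fun i => ⟨hadj i, hcol _, hcol _⟩, fun p => ?_⟩
      rw [← hgood p.1.1]
  -- the single-tuple average
  have hinner : ∀ (e : Fin d) (w : Fin k × Bool → VG),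
      ∑ v : Pt → 𝒢, ((Fintype.card 𝒢 : ℂ))⁻¹ ^ (Fintype.card Pt) * (∏ p : Pt, ψ e w p (v p))
      = if (∀ p : Pt, (w p.1.1 = p.1.2 ↔ w (δsel (a p.1.1)) = p.1.2)) then 1 else 0 := by
    intro e w
    calc ∑ v : Pt → 𝒢, ((Fintype.card 𝒢 : ℂ))⁻¹ ^ (Fintype.card Pt) * ∏ p : Pt, ψ e w p (v p)
        = ∑ v : Pt → 𝒢, ∏ p : Pt, (((Fintype.card 𝒢 : ℂ))⁻¹ * ψ e w p (v p)) := by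
          refine Finset.sum_congr rfl fun v _ => Eq.symm ?_
          rw [Finset.prod_mul_distrib, Finset.prod_const, Finset.card_univ]
      _ = ∏ p : Pt, ∑ g : 𝒢, (((Fintype.card 𝒢 : ℂ))⁻¹ * ψ e w p g) := by
          rw [Finset.prod_univ_sum (fun _ : Pt => (Finset.univ : Finset 𝒢))
            (fun p g => ((Fintype.card 𝒢 : ℂ))⁻¹ * ψ e w p g), Fintype.piFinset_univ]
      _ = ∏ p : Pt, (if (w p.1.1 = p.1.2 ↔ w (δsel (a p.1.1)) = p.1.2) then (1 : ℂ) else 0) :=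
          Finset.prod_congr rfl fun p _ => hsingle e w p
      _ = if (∀ p : Pt, (w p.1.1 = p.1.2 ↔ w (δsel (a p.1.1)) = p.1.2)) then 1 else 0 :=
          Fintype.prod_boole
  -- put everything together
  calc ∫ ω, Matrix.trace (S ω) / (d : ℂ) ∂μ
      = ∫ ω, F (fun p : Pt => X p.1.1 p.1.2 ω) ∂μ := by simp_rw [key]
    _ = ∑ v : Pt → 𝒢, (μ {ω | (fun p : Pt => X p.1.1 p.1.2 ω) = v}).toReal • F v :=
        integral_comp_fintype μ _ hYmeas F
    _ = ∑ v : Pt → 𝒢, ((Fintype.card 𝒢 : ℂ))⁻¹ ^ (Fintype.card Pt) * F v := by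
        refine Finset.sum_congr rfl fun v _ => ?_
        rw [hYunif v, ENNReal.toReal_pow, ENNReal.toReal_inv, ENNReal.toReal_natCast,
          Complex.real_smul]
        push_cast
        ring
    _ = (∑ e : Fin d, ∑ w : Fin k × Bool → VG,
          if cond w then
            (if (∀ p : Pt, (w p.1.1 = p.1.2 ↔ w (δsel (a p.1.1)) = p.1.2)) then (1 : ℂ) else 0)
          else 0) / d := by
        simp only [hF, ← mul_div_assoc]
        rw [← Finset.sum_div]
        congr 1
        simp only [Finset.mul_sum]
        rw [Finset.sum_comm]
        refine Finset.sum_congr rfl fun e _ => ?_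
        rw [Finset.sum_comm]
        refine Finset.sum_congr rfl fun w _ => ?_
        by_cases hcw : cond w
        · simp only [if_pos hcw]
          exact hinner e w
        · simp only [if_neg hcw, mul_zero, Finset.sum_const_zero]
    _ = ∑ w : Fin k × Bool → VG,
          if cond w ∧ (∀ p : Pt, (w p.1.1 = p.1.2 ↔ w (δsel (a p.1.1)) = p.1.2)) then (1 : ℂ)
          else 0 := by
        rw [Finset.sum_const, Finset.card_univ, Fintype.card_fin, nsmul_eq_mul,
          mul_div_cancel_left₀ _ (Nat.cast_ne_zero.mpr hd.ne' : (d : ℂ) ≠ 0)]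
        exact Finset.sum_congr rfl fun w _ => (ite_and _ _ _ _).symm
    _ = ∑ w : Fin k × Bool → VG,
          if ((∀ i : Fin k, G.Adj (w (i, false)) (w (i, true))) ∧
            (∀ j : Fin k × Bool, 𝒞 (w j) = c (a j)) ∧
            ∃ φ : Fin t → VG, Function.Injective φ ∧ ∀ j : Fin k × Bool, φ (a j) = w j)
          then (1 : ℂ) else 0 :=
        Finset.sum_congr rfl fun w _ => if_congr (hiff w) rfl rfl
    _ = ((Finset.univ.filter (fun w : Fin k × Bool → VG =>
            (∀ i : Fin k, G.Adj (w (i, false)) (w (i, true))) ∧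
            (∀ j : Fin k × Bool, 𝒞 (w j) = c (a j)) ∧
            ∃ φ : Fin t → VG, Function.Injective φ ∧ ∀ j : Fin k × Bool, φ (a j) = w j)).card
          : ℂ) := by
        rw [Finset.sum_boole]
    _ = (Nat.card {v : Fin k × Bool → VG //
          (∀ i : Fin k, G.Adj (v (i, false)) (v (i, true))) ∧
          (∀ j : Fin k × Bool, 𝒞 (v j) = c (a j)) ∧
          ∃ φ : Fin t → VG, Function.Injective φ ∧
            ∀ j : Fin k × Bool, φ (a j) = v j} : ℂ) := by
        rw [Nat.card_eq_fintype_card, Fintype.card_subtype]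
end

section
/- With the setup below, let T = (T1,T2) be a 2k-tuple of edges of G, and for a vertex b of H define P_b(T1) = ∏_{i ∈ Γ(b)} X_i(v_i) and P_b(T2) = ∏_{i ∈ Γ(b)} X_i(w_i). Then: (1) if T satisfies Condition 1 at b, then P_b(T1) and P_b(T2) both equal the identity with probability 1; (2) if T satisfies Condition 2 at b but not Condition 1 at b, then P_b(T1) = P_b(T2) with probability 1 and each is uniformly distributed on 𝒢; (3) if T satisfies Condition 3 at b but not Condition 1 at b, then P_b(T1) = P_b(T2)^{-1} with probability 1 and each is uniformly distributed on 𝒢; (4) if T satisfies none of Conditions 1, 2, 3 at b, then P_b(T1) and P_b(T2) are independent and at least one of them is uniformly distributed on 𝒢. -/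
open MeasureTheory ProbabilityTheory

section Helpers

variable {Ω : Type*} [MeasurableSpace Ω] {μ : Measure Ω} [IsProbabilityMeasure μ]
variable {𝒢 : Type*} [CommGroup 𝒢] [Fintype 𝒢] [MeasurableSpace 𝒢] [DiscreteMeasurableSpace 𝒢]

local instance : MeasurableMul₂ 𝒢 := ⟨measurable_of_countable _⟩
local instance : MeasurableInv 𝒢 := ⟨measurable_of_countable _⟩

/-- If `U` is uniform and independent of `V`, then for any `φ`, `S`,
`μ {U * φ(V) = c ∧ V ∈ S} = n⁻¹ * μ {V ∈ S}`. -/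
lemma helper_measure_mul_eq {F : Type*} [Fintype F] [MeasurableSpace F]
    [MeasurableSingletonClass F]
    (U : Ω → 𝒢) (V : Ω → F) (hU : Measurable U) (hV : Measurable V)
    (hind : IndepFun U V μ)
    (hunif : ∀ g : 𝒢, μ {ω | U ω = g} = ((Fintype.card 𝒢 : ENNReal))⁻¹)
    (φ : F → 𝒢) (S : Set F) (c : 𝒢) :
    μ {ω | U ω * φ (V ω) = c ∧ V ω ∈ S}
      = ((Fintype.card 𝒢 : ENNReal))⁻¹ * μ {ω | V ω ∈ S} := by
  classical
  have hpre : ∀ g : 𝒢, μ (U ⁻¹' {g}) = ((Fintype.card 𝒢 : ENNReal))⁻¹ := by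
    intro g; exact hunif g
  have hset : {ω | U ω * φ (V ω) = c ∧ V ω ∈ S}
      = ⋃ h ∈ S, (V ⁻¹' {h} ∩ U ⁻¹' {c * (φ h)⁻¹}) := by
    ext ω
    simp only [Set.mem_setOf_eq, Set.mem_iUnion, Set.mem_inter_iff, Set.mem_preimage,
      Set.mem_singleton_iff, exists_prop]
    constructor
    · rintro ⟨hc, hS⟩
      exact ⟨V ω, hS, rfl, by rw [← hc]; group⟩
    · rintro ⟨h, hS, hVh, hUc⟩
      rw [hVh]
      exact ⟨by rw [hUc]; group, hS⟩
  have hset2 : {ω | V ω ∈ S} = ⋃ h ∈ S, V ⁻¹' {h} := by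
    ext ω; simp
  have hdisjV : S.PairwiseDisjoint (fun h => V ⁻¹' {h}) := by
    intro h _ h' _ hne
    exact Disjoint.preimage V (by simpa using hne)
  have hdisj : S.PairwiseDisjoint (fun h => V ⁻¹' {h} ∩ U ⁻¹' {c * (φ h)⁻¹}) := by
    intro h hh h' hh' hne
    exact Disjoint.mono Set.inter_subset_left Set.inter_subset_left (hdisjV hh hh' hne)
  rw [hset, hset2,
    measure_biUnion S.to_countable hdisj
      (fun h _ => ((hV (measurableSet_singleton _)).inter (hU (measurableSet_singleton _)))),
    measure_biUnion S.to_countable hdisjV (fun h _ => hV (measurableSet_singleton _)),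
    ← ENNReal.tsum_mul_left]
  refine tsum_congr fun h => ?_
  rw [Set.inter_comm,
    hind.measure_inter_preimage_eq_mul _ _ (measurableSet_singleton _) (measurableSet_singleton _),
    hpre]

/-- Independence from singleton fibers, for countable discrete codomains. -/
lemma helper_indepFun_of_singletons {E F : Type*} [Countable E] [Countable F]
    [MeasurableSpace E] [MeasurableSpace F]
    [MeasurableSingletonClass E] [MeasurableSingletonClass F]
    {f : Ω → E} {g : Ω → F} (hf : Measurable f) (hg : Measurable g)
    (h : ∀ c d, μ (f ⁻¹' {c} ∩ g ⁻¹' {d}) = μ (f ⁻¹' {c}) * μ (g ⁻¹' {d})) :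
    IndepFun f g μ := by
  rw [indepFun_iff_map_prod_eq_prod_map_map hf.aemeasurable hg.aemeasurable]
  apply Measure.ext_of_singleton
  rintro ⟨c, d⟩
  have hpre : (fun ω => (f ω, g ω)) ⁻¹' {(c, d)} = f ⁻¹' {c} ∩ g ⁻¹' {d} := by
    ext ω; simp [Prod.ext_iff]
  rw [Measure.map_apply (hf.prodMk hg) (measurableSet_singleton _), hpre,
    ← Set.singleton_prod_singleton, Measure.prod_prod,
    Measure.map_apply hf (measurableSet_singleton _),
    Measure.map_apply hg (measurableSet_singleton _), h]


variable {I : Type*} [Fintype I] [DecidableEq I]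

local instance : MeasurableMul₂ (𝒢 × 𝒢) := ⟨measurable_of_countable _⟩

lemma helper_unif_zpow (Y₀ : Ω → 𝒢)
    (hunif : ∀ g : 𝒢, μ {ω | Y₀ ω = g} = ((Fintype.card 𝒢 : ENNReal))⁻¹)
    (s : ℤ) (hs : s = 1 ∨ s = -1) :
    ∀ g : 𝒢, μ {ω | (Y₀ ω) ^ s = g} = ((Fintype.card 𝒢 : ENNReal))⁻¹ := by
  intro g
  rcases hs with hs | hs
  · subst hs; simpa [zpow_one] using hunif g
  · subst hs
    have : {ω | (Y₀ ω) ^ (-1 : ℤ) = g} = {ω | Y₀ ω = g⁻¹} := by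
      ext ω; simp [zpow_neg, inv_eq_iff_eq_inv]
    rw [this]; exact hunif g⁻¹


lemma helper_uniform_prod (Y : I → Ω → 𝒢) (hmeas : ∀ q, Measurable (Y q))
    (hind : iIndepFun Y μ)
    (e : I → ℤ) (q₀ : I) (he : e q₀ = 1 ∨ e q₀ = -1)
    (hunif : ∀ g : 𝒢, μ {ω | Y q₀ ω = g} = ((Fintype.card 𝒢 : ENNReal))⁻¹) :
    ∀ g : 𝒢, μ {ω | ∏ q, (Y q ω) ^ (e q) = g} = ((Fintype.card 𝒢 : ENNReal))⁻¹ := by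
  classical
  intro g
  set Z : I → Ω → 𝒢 := fun q ω => (Y q ω) ^ (e q) with hZ
  have hZmeas : ∀ q, Measurable (Z q) := fun q =>
    (measurable_of_countable (fun x : 𝒢 => x ^ (e q))).comp (hmeas q)
  have hZind : iIndepFun Z μ :=
    hind.comp (fun q x => x ^ (e q)) (fun q => measurable_of_countable _)
  have hR : Measurable (fun ω => ∏ q ∈ Finset.univ.erase q₀, Z q ω) := by
    apply Finset.measurable_prod
    exact fun q _ => hZmeas q
  have hindUR : IndepFun (Z q₀) (fun ω => ∏ q ∈ Finset.univ.erase q₀, Z q ω) μ := by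
    have h := (hZind.indepFun_finsetProd_of_notMem hZmeas
      (Finset.notMem_erase q₀ Finset.univ)).symm
    have hfun : (∏ q ∈ Finset.univ.erase q₀, Z q)
        = fun ω => ∏ q ∈ Finset.univ.erase q₀, Z q ω := by
      funext ω; exact Finset.prod_apply ω _ _
    rwa [hfun] at h
  have hunifZ : ∀ g : 𝒢, μ {ω | Z q₀ ω = g} = ((Fintype.card 𝒢 : ENNReal))⁻¹ :=
    helper_unif_zpow (Y q₀) hunif (e q₀) he
  have hkey := helper_measure_mul_eq (Z q₀) (fun ω => ∏ q ∈ Finset.univ.erase q₀, Z q ω)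
    (hZmeas q₀) hR hindUR hunifZ id Set.univ g
  have hset : {ω | Z q₀ ω * id ((fun ω => ∏ q ∈ Finset.univ.erase q₀, Z q ω) ω) = g ∧
      (fun ω => ∏ q ∈ Finset.univ.erase q₀, Z q ω) ω ∈ Set.univ}
      = {ω | ∏ q, (Y q ω) ^ (e q) = g} := by
    ext ω
    simp only [Set.mem_setOf_eq, id_eq, Set.mem_univ, and_true]
    rw [Finset.mul_prod_erase Finset.univ (fun q => Z q ω) (Finset.mem_univ q₀)]
  rw [hset] at hkey
  simpa using hkey

lemma helper_indep_prod (Y : I → Ω → 𝒢) (hmeas : ∀ q, Measurable (Y q))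
    (hind : iIndepFun Y μ)
    (e f : I → ℤ) (q₀ : I) (he : e q₀ = 1 ∨ e q₀ = -1) (hf0 : f q₀ = 0)
    (hunif : ∀ g : 𝒢, μ {ω | Y q₀ ω = g} = ((Fintype.card 𝒢 : ENNReal))⁻¹) :
    IndepFun (fun ω => ∏ q, (Y q ω) ^ (e q)) (fun ω => ∏ q, (Y q ω) ^ (f q)) μ := by
  classical
  set P : Ω → 𝒢 := fun ω => ∏ q, (Y q ω) ^ (e q) with hP
  set Q : Ω → 𝒢 := fun ω => ∏ q, (Y q ω) ^ (f q) with hQ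
  set U : Ω → 𝒢 := fun ω => (Y q₀ ω) ^ (e q₀) with hU
  set R : Ω → 𝒢 := fun ω => ∏ q ∈ Finset.univ.erase q₀, (Y q ω) ^ (e q) with hR
  set B : I → Ω → 𝒢 × 𝒢 := fun q ω => ((Y q ω) ^ (e q), (Y q ω) ^ (f q)) with hB
  have hBmeas : ∀ q, Measurable (B q) := fun q =>
    (measurable_of_countable (fun x : 𝒢 => (x ^ (e q), x ^ (f q)))).comp (hmeas q)
  have hBind : iIndepFun B μ :=
    hind.comp (fun q x => (x ^ (e q), x ^ (f q))) (fun q => measurable_of_countable _)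
  have hQerase : ∀ ω, Q ω = ∏ q ∈ Finset.univ.erase q₀, (Y q ω) ^ (f q) := by
    intro ω
    rw [hQ]
    exact (Finset.prod_erase Finset.univ (by rw [hf0, zpow_zero])).symm
  have hBprod : (∏ q ∈ Finset.univ.erase q₀, B q) = fun ω => (R ω, Q ω) := by
    funext ω
    rw [Finset.prod_apply]
    ext
    · simp only [Prod.fst_prod]; rfl
    · simp only [Prod.snd_prod]
      exact (hQerase ω).symm
  have hkey : IndepFun (B q₀) (fun ω => (R ω, Q ω)) μ := by
    have h := (hBind.indepFun_finsetProd_of_notMem hBmeas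
      (Finset.notMem_erase q₀ Finset.univ)).symm
    rwa [hBprod] at h
  have hUV : IndepFun U (fun ω => (R ω, Q ω)) μ := by
    have h := hkey.comp (measurable_fst) (measurable_id)
    exact h
  have hPmeas : Measurable P := by
    apply Finset.measurable_prod
    exact fun q _ => (measurable_of_countable (fun x : 𝒢 => x ^ (e q))).comp (hmeas q)
  have hQmeas : Measurable Q := by
    apply Finset.measurable_prod
    exact fun q _ => (measurable_of_countable (fun x : 𝒢 => x ^ (f q))).comp (hmeas q)
  have hRmeas : Measurable R := by
    apply Finset.measurable_prod
    exact fun q _ => (measurable_of_countable (fun x : 𝒢 => x ^ (e q))).comp (hmeas q)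
  have hVmeas : Measurable (fun ω => (R ω, Q ω)) := hRmeas.prodMk hQmeas
  have hUmeas : Measurable U := (measurable_of_countable _).comp (hmeas q₀)
  have hunifU : ∀ g : 𝒢, μ {ω | U ω = g} = ((Fintype.card 𝒢 : ENNReal))⁻¹ :=
    helper_unif_zpow (Y q₀) hunif (e q₀) he
  have hPunif : ∀ g : 𝒢, μ {ω | P ω = g} = ((Fintype.card 𝒢 : ENNReal))⁻¹ :=
    helper_uniform_prod Y hmeas hind e q₀ he hunif
  apply helper_indepFun_of_singletons hPmeas hQmeas
  intro c d
  have h1 : P ⁻¹' {c} ∩ Q ⁻¹' {d}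
      = {ω | U ω * Prod.fst ((fun ω => (R ω, Q ω)) ω) = c ∧
          (fun ω => (R ω, Q ω)) ω ∈ {p : 𝒢 × 𝒢 | p.2 = d}} := by
    ext ω
    simp only [Set.mem_inter_iff, Set.mem_preimage, Set.mem_singleton_iff, Set.mem_setOf_eq]
    constructor
    · rintro ⟨hc, hd⟩
      refine ⟨?_, hd⟩
      rw [← hc, hP]
      exact (Finset.mul_prod_erase Finset.univ (fun q => (Y q ω) ^ (e q))
        (Finset.mem_univ q₀))
    · rintro ⟨hc, hd⟩
      refine ⟨?_, hd⟩
      rw [← hc, hP]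
      exact (Finset.mul_prod_erase Finset.univ (fun q => (Y q ω) ^ (e q))
        (Finset.mem_univ q₀)).symm
  have h2 := helper_measure_mul_eq U (fun ω => (R ω, Q ω)) hUmeas hVmeas hUV hunifU
    Prod.fst {p : 𝒢 × 𝒢 | p.2 = d} c
  rw [h1, h2]
  have h3 : {ω | (fun ω => (R ω, Q ω)) ω ∈ {p : 𝒢 × 𝒢 | p.2 = d}} = Q ⁻¹' {d} := by
    ext ω; simp
  have h4 : μ (P ⁻¹' {c}) = ((Fintype.card 𝒢 : ENNReal))⁻¹ := hPunif c
  rw [h3, h4]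



end Helpers

lemma ite_sub_ite_eq_zero_iff (A B : Prop) [Decidable A] [Decidable B] :
    ((if A then (1:ℤ) else 0) - (if B then 1 else 0) = 0) ↔ (A ↔ B) := by
  by_cases hA : A <;> by_cases hB : B <;> simp [hA, hB]

lemma ite_sub_ite_cases (A B : Prop) [Decidable A] [Decidable B] :
    ((if A then (1:ℤ) else 0) - (if B then 1 else 0) = 0) ∨
    ((if A then (1:ℤ) else 0) - (if B then 1 else 0) = 1) ∨
    ((if A then (1:ℤ) else 0) - (if B then 1 else 0) = -1) := by
  by_cases hA : A <;> by_cases hB : B <;> simp [hA, hB]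

/-- The joint family of hash values, indexed by non-distinguished (edge-slot, vertex) pairs. -/
def Ysub {k t : ℕ} {VG Ω 𝒢 : Type} (a : Fin k × Bool → Fin t) (δsel : Fin t → Fin k × Bool)
    (X : Fin k × Bool → VG → Ω → 𝒢)
    (q : {q : (Fin k × Bool) × VG // q.1 ≠ δsel (a q.1)}) : Ω → 𝒢 :=
  X q.1.1 q.1.2

/-- The exponent with which the hash value `q` occurs in `P_b` for the assignment `u`. -/
def Esub {k t : ℕ} {VG : Type} [DecidableEq VG] (a : Fin k × Bool → Fin t)
    (δsel : Fin t → Fin k × Bool) (b : Fin t) (u : Fin k × Bool → VG)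
    (q : {q : (Fin k × Bool) × VG // q.1 ≠ δsel (a q.1)}) : ℤ :=
  (if (a q.1.1 = b ∧ q.1.1 ≠ δsel b) ∧ q.1.2 = u q.1.1 then 1 else 0)
  - (if (a q.1.1 = b ∧ q.1.1 ≠ δsel b) ∧ q.1.2 = u (δsel b) then 1 else 0)

/-- (Lemma on `P_b`.)  With the hash-function setup, let
`T = (v, w)` be a `2k`-tuple of edges of `G` and `b` a vertex of `H`; set
`P_b(T1) ω = ∏_{j ∈ Γ(b)} X j (v j) ω` and `P_b(T2) ω = ∏_{j ∈ Γ(b)} X j (w j) ω`.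
Then: (1) under Condition 1 both are a.s. the identity; (2) under Condition 2 but not 1
they are a.s. equal and each uniform on `𝒢`; (3) under Condition 3 but not 1 they are
a.s. inverse to each other and each uniform; (4) if none of the Conditions holds, they
are independent and at least one is uniform. -/
theorem stmt4
    {t k : ℕ}
    (H : SimpleGraph (Fin t)) [DecidableRel H.Adj]
    (hHconn : H.Connected) (hHdeg : ∀ b : Fin t, 2 ≤ H.degree b)
    (a : Fin k × Bool → Fin t)
    (ha : ∀ i : Fin k, H.Adj (a (i, false)) (a (i, true)))
    (henum : ∀ e ∈ H.edgeSet, ∃! i : Fin k, e = s(a (i, false), a (i, true)))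
    {VG : Type} [Fintype VG] [DecidableEq VG] (G : SimpleGraph VG) [DecidableRel G.Adj]
    {Ω : Type} [MeasurableSpace Ω] (μ : Measure Ω) [IsProbabilityMeasure μ]
    {𝒢 : Type} [CommGroup 𝒢] [Fintype 𝒢] [MeasurableSpace 𝒢] [DiscreteMeasurableSpace 𝒢]
    (δsel : Fin t → Fin k × Bool) (hδ : ∀ b : Fin t, a (δsel b) = b)
    (X : Fin k × Bool → VG → Ω → 𝒢)
    (hXmeas : ∀ j v, Measurable (X j v))
    (hXindep : iIndepFun
      (fun p : {q : (Fin k × Bool) × VG // q.1 ≠ δsel (a q.1)} => X p.1.1 p.1.2) μ)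
    (hXunif : ∀ (j : Fin k × Bool) (x : VG), j ≠ δsel (a j) →
      ∀ g : 𝒢, μ {ω | X j x ω = g} = ((Fintype.card 𝒢 : ENNReal))⁻¹)
    (hXdist : ∀ (b : Fin t) (x : VG) (ω : Ω),
      X (δsel b) x ω
        = ∏ j ∈ Finset.univ.filter (fun j : Fin k × Bool => a j = b ∧ j ≠ δsel b),
            (X j x ω)⁻¹)
    (v w : Fin k × Bool → VG)
    (hv : ∀ i : Fin k, G.Adj (v (i, false)) (v (i, true)))
    (hw : ∀ i : Fin k, G.Adj (w (i, false)) (w (i, true)))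
    (b : Fin t)
    -- `P_b(T1)` and `P_b(T2)`
    (P₁ P₂ : Ω → 𝒢)
    (hP₁ : ∀ ω, P₁ ω = ∏ j ∈ Finset.univ.filter (fun j : Fin k × Bool => a j = b),
      X j (v j) ω)
    (hP₂ : ∀ ω, P₂ ω = ∏ j ∈ Finset.univ.filter (fun j : Fin k × Bool => a j = b),
      X j (w j) ω)
    -- the three Conditions at `b`
    (Cond1 Cond2 Cond3 : Prop)
    (hCond1 : Cond1 ↔ ((∀ i j : Fin k × Bool, a i = b → a j = b → v i = v j) ∧
      (∀ i j : Fin k × Bool, a i = b → a j = b → w i = w j)))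
    (hCond2 : Cond2 ↔ (∀ i : Fin k × Bool, a i = b → v i = w i))
    (hCond3 : Cond3 ↔ (∃ x y : VG, ∀ i : Fin k × Bool, a i = b →
      (v i = x ∧ w i = y) ∨ (v i = y ∧ w i = x))) :
    (Cond1 → μ {ω | P₁ ω = 1 ∧ P₂ ω = 1} = 1) ∧
    (Cond2 → ¬ Cond1 →
      μ {ω | P₁ ω = P₂ ω} = 1 ∧
      (∀ g : 𝒢, μ {ω | P₁ ω = g} = ((Fintype.card 𝒢 : ENNReal))⁻¹) ∧
      (∀ g : 𝒢, μ {ω | P₂ ω = g} = ((Fintype.card 𝒢 : ENNReal))⁻¹)) ∧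
    (Cond3 → ¬ Cond1 →
      μ {ω | P₁ ω = (P₂ ω)⁻¹} = 1 ∧
      (∀ g : 𝒢, μ {ω | P₁ ω = g} = ((Fintype.card 𝒢 : ENNReal))⁻¹) ∧
      (∀ g : 𝒢, μ {ω | P₂ ω = g} = ((Fintype.card 𝒢 : ENNReal))⁻¹)) ∧
    (¬ Cond1 → ¬ Cond2 → ¬ Cond3 →
      IndepFun P₁ P₂ μ ∧
      ((∀ g : 𝒢, μ {ω | P₁ ω = g} = ((Fintype.card 𝒢 : ENNReal))⁻¹) ∨
       (∀ g : 𝒢, μ {ω | P₂ ω = g} = ((Fintype.card 𝒢 : ENNReal))⁻¹))) := by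
  classical
  set Γ : Finset (Fin k × Bool) := Finset.univ.filter (fun j : Fin k × Bool => a j = b) with hΓ
  have hδΓ : δsel b ∈ Γ := by
    rw [hΓ]; exact Finset.mem_filter.mpr ⟨Finset.mem_univ _, hδ b⟩
  have hYmeas : ∀ q, Measurable (Ysub a δsel X q) := fun q => hXmeas _ _
  have hYind : iIndepFun (Ysub a δsel X) μ := hXindep
  have hYunif : ∀ q, ∀ g : 𝒢, μ {ω | Ysub a δsel X q ω = g} = ((Fintype.card 𝒢 : ENNReal))⁻¹ :=
    fun q g => hXunif q.1.1 q.1.2 q.2 g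
  -- Step 1: split off the distinguished index
  have hfilter : Finset.univ.filter (fun j : Fin k × Bool => a j = b ∧ j ≠ δsel b)
      = Γ.erase (δsel b) := by
    ext j
    simp only [hΓ, Finset.mem_filter, Finset.mem_erase, Finset.mem_univ, true_and]
    tauto
  have hsplit : ∀ (u : Fin k × Bool → VG) (ω : Ω),
      ∏ j ∈ Γ, X j (u j) ω
        = ∏ j ∈ Γ.erase (δsel b), (X j (u j) ω * (X j (u (δsel b)) ω)⁻¹) := by
    intro u ω
    calc ∏ j ∈ Γ, X j (u j) ω
        = X (δsel b) (u (δsel b)) ω * ∏ j ∈ Γ.erase (δsel b), X j (u j) ω :=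
          (Finset.mul_prod_erase Γ (fun j => X j (u j) ω) hδΓ).symm
      _ = (∏ j ∈ Γ.erase (δsel b), (X j (u (δsel b)) ω)⁻¹)
            * ∏ j ∈ Γ.erase (δsel b), X j (u j) ω := by
          rw [hXdist b (u (δsel b)) ω, hfilter]
      _ = ∏ j ∈ Γ.erase (δsel b), (X j (u j) ω * (X j (u (δsel b)) ω)⁻¹) := by
          rw [← Finset.prod_mul_distrib]
          exact Finset.prod_congr rfl fun j _ => mul_comm _ _
  -- products of a constant assignment are trivial
  have hconst : ∀ (c : VG) (ω : Ω), ∏ j ∈ Γ, X j c ω = 1 := by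
    intro c ω
    rw [hsplit (fun _ => c) ω]
    exact Finset.prod_eq_one fun j _ => by simp
  -- Step 2: canonical exponent form
  have key_ite_prod : ∀ (m : Fin k × Bool → VG) (ω : Ω),
      (∏ q : {q : (Fin k × Bool) × VG // q.1 ≠ δsel (a q.1)},
          if (a q.1.1 = b ∧ q.1.1 ≠ δsel b) ∧ q.1.2 = m q.1.1 then Ysub a δsel X q ω else 1)
        = ∏ j ∈ Γ.erase (δsel b), X j (m j) ω := by
    intro m ω
    have h1 : (∏ q : {q : (Fin k × Bool) × VG // q.1 ≠ δsel (a q.1)},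
        if (a q.1.1 = b ∧ q.1.1 ≠ δsel b) ∧ q.1.2 = m q.1.1 then Ysub a δsel X q ω else 1)
        = ∏ p ∈ Finset.univ.filter (fun p : (Fin k × Bool) × VG => p.1 ≠ δsel (a p.1)),
          (if (a p.1 = b ∧ p.1 ≠ δsel b) ∧ p.2 = m p.1 then X p.1 p.2 ω else 1) :=
      (Finset.prod_subtype
        (Finset.univ.filter (fun p : (Fin k × Bool) × VG => p.1 ≠ δsel (a p.1)))
        (fun p => by simp)
        (fun p : (Fin k × Bool) × VG =>
          if (a p.1 = b ∧ p.1 ≠ δsel b) ∧ p.2 = m p.1 then X p.1 p.2 ω else 1)).symm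
    rw [h1, ← Finset.prod_filter]
    have h2 : (Finset.univ.filter (fun p : (Fin k × Bool) × VG => p.1 ≠ δsel (a p.1))).filter
          (fun p : (Fin k × Bool) × VG => (a p.1 = b ∧ p.1 ≠ δsel b) ∧ p.2 = m p.1)
        = (Γ.erase (δsel b)).image (fun j => (j, m j)) := by
      ext p
      simp only [Finset.mem_filter, Finset.mem_image, Finset.mem_erase, Finset.mem_univ,
        true_and, hΓ]
      constructor
      · rintro ⟨hpred, ⟨⟨haj, hjδ⟩, hm⟩⟩
        exact ⟨p.1, ⟨hjδ, by simp [haj]⟩, by rw [← hm]⟩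
      · rintro ⟨j, ⟨hjδ, hj⟩, rfl⟩
        exact ⟨by simp [hj, hjδ], ⟨⟨hj, hjδ⟩, rfl⟩⟩
    rw [h2, Finset.prod_image (fun x _ y _ h => congrArg Prod.fst h)]
  have hfactor : ∀ (u : Fin k × Bool → VG) (q : {q : (Fin k × Bool) × VG // q.1 ≠ δsel (a q.1)})
      (ω : Ω), (Ysub a δsel X q ω) ^ (Esub a δsel b u q)
        = (if (a q.1.1 = b ∧ q.1.1 ≠ δsel b) ∧ q.1.2 = u q.1.1 then Ysub a δsel X q ω else 1)
          * (if (a q.1.1 = b ∧ q.1.1 ≠ δsel b) ∧ q.1.2 = u (δsel b)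
              then Ysub a δsel X q ω else 1)⁻¹ := by
    intro u q ω
    by_cases hA : (a q.1.1 = b ∧ q.1.1 ≠ δsel b) ∧ q.1.2 = u q.1.1 <;>
      by_cases hB : (a q.1.1 = b ∧ q.1.1 ≠ δsel b) ∧ q.1.2 = u (δsel b) <;>
      simp [Esub, hA, hB, zpow_sub, zpow_one, zpow_neg, div_eq_mul_inv]
  have hform : ∀ (u : Fin k × Bool → VG) (ω : Ω),
      ∏ j ∈ Γ, X j (u j) ω
        = ∏ q : {q : (Fin k × Bool) × VG // q.1 ≠ δsel (a q.1)},
            (Ysub a δsel X q ω) ^ (Esub a δsel b u q) := by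
    intro u ω
    rw [hsplit u ω]
    calc ∏ j ∈ Γ.erase (δsel b), (X j (u j) ω * (X j (u (δsel b)) ω)⁻¹)
        = (∏ j ∈ Γ.erase (δsel b), X j (u j) ω)
            * (∏ j ∈ Γ.erase (δsel b), X j (u (δsel b)) ω)⁻¹ := by
          rw [Finset.prod_mul_distrib, Finset.prod_inv_distrib]
      _ = (∏ q : {q : (Fin k × Bool) × VG // q.1 ≠ δsel (a q.1)},
            if (a q.1.1 = b ∧ q.1.1 ≠ δsel b) ∧ q.1.2 = u q.1.1 then Ysub a δsel X q ω else 1)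
          * (∏ q : {q : (Fin k × Bool) × VG // q.1 ≠ δsel (a q.1)},
            if (a q.1.1 = b ∧ q.1.1 ≠ δsel b) ∧ q.1.2 = u (δsel b)
              then Ysub a δsel X q ω else 1)⁻¹ := by
          rw [key_ite_prod u ω]
          have h := key_ite_prod (fun _ => u (δsel b)) ω
          rw [h]
      _ = ∏ q : {q : (Fin k × Bool) × VG // q.1 ≠ δsel (a q.1)},
            (Ysub a δsel X q ω) ^ (Esub a δsel b u q) := by
          rw [← Finset.prod_inv_distrib, ← Finset.prod_mul_distrib]
          exact (Finset.prod_congr rfl fun q _ => hfactor u q ω).symm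
  have hP₁' : P₁ = fun ω => ∏ q : {q : (Fin k × Bool) × VG // q.1 ≠ δsel (a q.1)},
      (Ysub a δsel X q ω) ^ (Esub a δsel b v q) :=
    funext fun ω => (hP₁ ω).trans (hform v ω)
  have hP₂' : P₂ = fun ω => ∏ q : {q : (Fin k × Bool) × VG // q.1 ≠ δsel (a q.1)},
      (Ysub a δsel X q ω) ^ (Esub a δsel b w q) :=
    funext fun ω => (hP₂ ω).trans (hform w ω)
  -- uniformity from a non-degenerate index
  have keyUnif : ∀ (u : Fin k × Bool → VG) (j₀ : Fin k × Bool), a j₀ = b →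
      u j₀ ≠ u (δsel b) → ∀ g : 𝒢,
      μ {ω | (∏ q : {q : (Fin k × Bool) × VG // q.1 ≠ δsel (a q.1)},
          (Ysub a δsel X q ω) ^ (Esub a δsel b u q)) = g}
        = ((Fintype.card 𝒢 : ENNReal))⁻¹ := by
    intro u j₀ haj₀ hne g
    have hjδ : j₀ ≠ δsel b := by rintro rfl; exact hne rfl
    have pf : ((j₀, u j₀) : (Fin k × Bool) × VG).1
        ≠ δsel (a ((j₀, u j₀) : (Fin k × Bool) × VG).1) := by
      simpa [haj₀] using hjδ
    have hE1 : Esub a δsel b u ⟨(j₀, u j₀), pf⟩ = 1 := by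
      simp [Esub, haj₀, hjδ, hne]
    exact helper_uniform_prod (Ysub a δsel X) hYmeas hYind (Esub a δsel b u)
      ⟨(j₀, u j₀), pf⟩ (Or.inl hE1) (hYunif _) g
  refine ⟨?_, ?_, ?_, ?_⟩
  -- Part 1
  · intro hc1
    obtain ⟨hA, hB⟩ := hCond1.mp hc1
    have h1 : ∀ ω, P₁ ω = 1 := by
      intro ω
      rw [hP₁ ω, hsplit v ω]
      refine Finset.prod_eq_one fun j hj => ?_
      have haj : a j = b := by
        have h := (Finset.mem_erase.mp hj).2
        rw [hΓ, Finset.mem_filter] at h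
        exact h.2
      rw [hA j (δsel b) haj (hδ b)]
      simp
    have h2 : ∀ ω, P₂ ω = 1 := by
      intro ω
      rw [hP₂ ω, hsplit w ω]
      refine Finset.prod_eq_one fun j hj => ?_
      have haj : a j = b := by
        have h := (Finset.mem_erase.mp hj).2
        rw [hΓ, Finset.mem_filter] at h
        exact h.2
      rw [hB j (δsel b) haj (hδ b)]
      simp
    have huniv : {ω | P₁ ω = 1 ∧ P₂ ω = 1} = Set.univ :=
      Set.eq_univ_of_forall fun ω => ⟨h1 ω, h2 ω⟩
    rw [huniv]; exact measure_univ
  -- Part 2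
  · intro hc2 hnc1
    have hvw : ∀ j, a j = b → v j = w j := hCond2.mp hc2
    have hPeq : ∀ ω, P₁ ω = P₂ ω := by
      intro ω
      rw [hP₁ ω, hP₂ ω]
      refine Finset.prod_congr rfl fun j hj => ?_
      have haj : a j = b := by
        rw [hΓ, Finset.mem_filter] at hj; exact hj.2
      rw [hvw j haj]
    have hwit : ∃ j₀, a j₀ = b ∧ v j₀ ≠ v (δsel b) := by
      have h := hnc1
      rw [hCond1] at h
      rcases not_and_or.mp h with h | h
      · push_neg at h
        obtain ⟨i, j, hi, hj, hne⟩ := h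
        by_cases hvi : v i = v (δsel b)
        · exact ⟨j, hj, fun hvj => hne (by rw [hvi, hvj])⟩
        · exact ⟨i, hi, hvi⟩
      · push_neg at h
        obtain ⟨i, j, hi, hj, hne⟩ := h
        have hne' : v i ≠ v j := by rw [hvw i hi, hvw j hj]; exact hne
        by_cases hvi : v i = v (δsel b)
        · exact ⟨j, hj, fun hvj => hne' (by rw [hvi, hvj])⟩
        · exact ⟨i, hi, hvi⟩
    obtain ⟨j₀, haj₀, hne₀⟩ := hwit
    have hU1 : ∀ g : 𝒢, μ {ω | P₁ ω = g} = ((Fintype.card 𝒢 : ENNReal))⁻¹ := by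
      intro g
      simp only [hP₁']
      exact keyUnif v j₀ haj₀ hne₀ g
    refine ⟨?_, hU1, ?_⟩
    · have huniv : {ω | P₁ ω = P₂ ω} = Set.univ :=
        Set.eq_univ_of_forall fun ω => hPeq ω
      rw [huniv]; exact measure_univ
    · intro g
      have hseteq : {ω | P₂ ω = g} = {ω | P₁ ω = g} := Set.ext fun ω => by simp only [Set.mem_setOf_eq, hPeq ω]
      rw [hseteq]; exact hU1 g
  -- Part 3
  · intro hc3 hnc1
    obtain ⟨x, y, hxy⟩ := hCond3.mp hc3
    have hmul : ∀ ω, P₁ ω * P₂ ω = 1 := by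
      intro ω
      rw [hP₁ ω, hP₂ ω, ← Finset.prod_mul_distrib]
      have hcongr : ∀ j ∈ Γ, X j (v j) ω * X j (w j) ω = X j x ω * X j y ω := by
        intro j hj
        have haj : a j = b := by rw [hΓ, Finset.mem_filter] at hj; exact hj.2
        rcases hxy j haj with ⟨h1, h2⟩ | ⟨h1, h2⟩
        · rw [h1, h2]
        · rw [h1, h2, mul_comm]
      rw [Finset.prod_congr rfl hcongr, Finset.prod_mul_distrib, hconst x ω, hconst y ω,
        one_mul]
    have hinv : ∀ ω, P₁ ω = (P₂ ω)⁻¹ := fun ω => eq_inv_iff_mul_eq_one.mpr (hmul ω)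
    have hsym1 : (∀ i j, a i = b → a j = b → v i = v j)
        → (∀ i j, a i = b → a j = b → w i = w j) := by
      intro hall i j hi hj
      rcases hxy i hi with ⟨h1, h2⟩ | ⟨h1, h2⟩ <;> rcases hxy j hj with ⟨h3, h4⟩ | ⟨h3, h4⟩
      · rw [h2, h4]
      · have hxyeq : x = y := by rw [← h1, hall i j hi hj, h3]
        rw [h2, h4, hxyeq]
      · have hxyeq : x = y := by rw [← h3, ← hall i j hi hj, h1]
        rw [h2, h4, ← hxyeq]
      · rw [h2, h4]
    have hsym2 : (∀ i j, a i = b → a j = b → w i = w j)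
        → (∀ i j, a i = b → a j = b → v i = v j) := by
      intro hall i j hi hj
      rcases hxy i hi with ⟨h1, h2⟩ | ⟨h1, h2⟩ <;> rcases hxy j hj with ⟨h3, h4⟩ | ⟨h3, h4⟩
      · rw [h1, h3]
      · have hxyeq : y = x := by rw [← h2, hall i j hi hj, h4]
        rw [h1, h3, hxyeq]
      · have hxyeq : y = x := by rw [← h4, ← hall i j hi hj, h2]
        rw [h1, h3, ← hxyeq]
      · rw [h1, h3]
    have hnotallv : ¬ (∀ i j, a i = b → a j = b → v i = v j) :=
      fun hall => hnc1 (hCond1.mpr ⟨hall, hsym1 hall⟩)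
    have hnotallw : ¬ (∀ i j, a i = b → a j = b → w i = w j) :=
      fun hall => hnc1 (hCond1.mpr ⟨hsym2 hall, hall⟩)
    have hwitv : ∃ j₀, a j₀ = b ∧ v j₀ ≠ v (δsel b) := by
      push_neg at hnotallv
      obtain ⟨i, j, hi, hj, hne⟩ := hnotallv
      by_cases hvi : v i = v (δsel b)
      · exact ⟨j, hj, fun hvj => hne (by rw [hvi, hvj])⟩
      · exact ⟨i, hi, hvi⟩
    have hwitw : ∃ j₀, a j₀ = b ∧ w j₀ ≠ w (δsel b) := by
      push_neg at hnotallw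
      obtain ⟨i, j, hi, hj, hne⟩ := hnotallw
      by_cases hwi : w i = w (δsel b)
      · exact ⟨j, hj, fun hwj => hne (by rw [hwi, hwj])⟩
      · exact ⟨i, hi, hwi⟩
    obtain ⟨j₀, haj₀, hne₀⟩ := hwitv
    obtain ⟨j₁, haj₁, hne₁⟩ := hwitw
    have hU1 : ∀ g : 𝒢, μ {ω | P₁ ω = g} = ((Fintype.card 𝒢 : ENNReal))⁻¹ := by
      intro g
      simp only [hP₁']
      exact keyUnif v j₀ haj₀ hne₀ g
    have hU2 : ∀ g : 𝒢, μ {ω | P₂ ω = g} = ((Fintype.card 𝒢 : ENNReal))⁻¹ := by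
      intro g
      simp only [hP₂']
      exact keyUnif w j₁ haj₁ hne₁ g
    refine ⟨?_, hU1, hU2⟩
    have huniv : {ω | P₁ ω = (P₂ ω)⁻¹} = Set.univ :=
      Set.eq_univ_of_forall fun ω => hinv ω
    rw [huniv]; exact measure_univ
  -- Part 4
  · intro hnc1 hnc2 hnc3
    have hEP : (∀ q : {q : (Fin k × Bool) × VG // q.1 ≠ δsel (a q.1)},
        Esub a δsel b v q = 0 ↔ Esub a δsel b w q = 0) → False := by
      intro hq
      have EP : ∀ (j : Fin k × Bool), a j = b → j ≠ δsel b → ∀ x : VG,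
          ((x = v j ↔ x = v (δsel b)) ↔ (x = w j ↔ x = w (δsel b))) := by
        intro j haj hjδ x
        have pf : ((j, x) : (Fin k × Bool) × VG).1
            ≠ δsel (a ((j, x) : (Fin k × Bool) × VG).1) := by
          simpa [haj] using hjδ
        have h := hq ⟨(j, x), pf⟩
        simp only [Esub] at h
        rw [ite_sub_ite_eq_zero_iff, ite_sub_ite_eq_zero_iff] at h
        simpa [haj, hjδ] using h
      have step1 : ∀ j, a j = b → j ≠ δsel b → (v j = v (δsel b) ↔ w j = w (δsel b)) := by
        intro j haj hjδ
        constructor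
        · intro hv
          have h1 : (w j = v j ↔ w j = v (δsel b)) := by rw [hv]
          exact ((EP j haj hjδ (w j)).mp h1).mp rfl
        · intro hw
          have h1 : (v j = w j ↔ v j = w (δsel b)) := by rw [hw]
          exact ((EP j haj hjδ (v j)).mpr h1).mp rfl
      by_cases hδvw : v (δsel b) = w (δsel b)
      · apply hnc2
        rw [hCond2]
        intro i hai
        by_cases hiδ : i = δsel b
        · rw [hiδ]; exact hδvw
        · by_cases hvi : v i = v (δsel b)
          · rw [hvi, hδvw]
            exact ((step1 i hai hiδ).mp hvi).symm
          · have hwi : ¬ w i = w (δsel b) := fun h => hvi ((step1 i hai hiδ).mpr h)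
            have h := EP i hai hiδ (w i)
            have hR : ¬ (w i = w i ↔ w i = w (δsel b)) := by simp [hwi]
            have hL : ¬ (w i = v i ↔ w i = v (δsel b)) := fun hh => hR (h.mp hh)
            by_contra hne
            have hB : w i = v (δsel b) := by
              by_contra hB
              exact hL ⟨fun h' => absurd h'.symm hne, fun h' => absurd h' hB⟩
            exact hwi (hB.trans hδvw)
      · apply hnc3
        rw [hCond3]
        refine ⟨v (δsel b), w (δsel b), fun i hai => ?_⟩
        by_cases hiδ : i = δsel b
        · left; rw [hiδ]; exact ⟨rfl, rfl⟩
        · by_cases hvi : v i = v (δsel b)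
          · left; exact ⟨hvi, (step1 i hai hiδ).mp hvi⟩
          · right
            have hwi : ¬ w i = w (δsel b) := fun h => hvi ((step1 i hai hiδ).mpr h)
            constructor
            · have h := EP i hai hiδ (w (δsel b))
              have hR : ¬ (w (δsel b) = w i ↔ w (δsel b) = w (δsel b)) :=
                fun hh => hwi (hh.mpr rfl).symm
              have hL : ¬ (w (δsel b) = v i ↔ w (δsel b) = v (δsel b)) :=
                fun hh => hR (h.mp hh)
              have hB : w (δsel b) = v i := by
                by_contra hB
                exact hL ⟨fun h' => absurd h' hB, fun h' => absurd h'.symm hδvw⟩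
              exact hB.symm
            · have h := EP i hai hiδ (v (δsel b))
              have hLf : ¬ (v (δsel b) = v i ↔ v (δsel b) = v (δsel b)) :=
                fun hh => hvi (hh.mpr rfl).symm
              have hRf : ¬ (v (δsel b) = w i ↔ v (δsel b) = w (δsel b)) :=
                fun hh => hLf (h.mpr hh)
              have hB : v (δsel b) = w i := by
                by_contra hB
                exact hRf ⟨fun h' => absurd h' hB, fun h' => absurd h' hδvw⟩
              exact hB.symm
    have hex : ∃ q : {q : (Fin k × Bool) × VG // q.1 ≠ δsel (a q.1)},
        ¬ (Esub a δsel b v q = 0 ↔ Esub a δsel b w q = 0) := by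
      by_contra h
      push_neg at h
      exact hEP h
    obtain ⟨q₀, hq₀⟩ := hex
    have hpm : ∀ (u : Fin k × Bool → VG) q, Esub a δsel b u q = 0 ∨ Esub a δsel b u q = 1
        ∨ Esub a δsel b u q = -1 := by
      intro u q
      unfold Esub
      exact ite_sub_ite_cases _ _
    rcases (by tauto : (Esub a δsel b v q₀ ≠ 0 ∧ Esub a δsel b w q₀ = 0)
        ∨ (Esub a δsel b w q₀ ≠ 0 ∧ Esub a δsel b v q₀ = 0)) with ⟨h1, h2⟩ | ⟨h1, h2⟩
    · have he : Esub a δsel b v q₀ = 1 ∨ Esub a δsel b v q₀ = -1 := by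
        rcases hpm v q₀ with h | h | h
        · exact absurd h h1
        · exact Or.inl h
        · exact Or.inr h
      have hind := helper_indep_prod (Ysub a δsel X) hYmeas hYind
        (Esub a δsel b v) (Esub a δsel b w) q₀ he h2 (hYunif q₀)
      constructor
      · rw [hP₁', hP₂']; exact hind
      · left
        intro g
        simp only [hP₁']
        exact helper_uniform_prod (Ysub a δsel X) hYmeas hYind (Esub a δsel b v) q₀ he
          (hYunif q₀) g
    · have he : Esub a δsel b w q₀ = 1 ∨ Esub a δsel b w q₀ = -1 := by
        rcases hpm w q₀ with h | h | h
        · exact absurd h h1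
        · exact Or.inl h
        · exact Or.inr h
      have hind := helper_indep_prod (Ysub a δsel X) hYmeas hYind
        (Esub a δsel b w) (Esub a δsel b v) q₀ he h2 (hYunif q₀)
      constructor
      · rw [hP₁', hP₂']; exact hind.symm
      · right
        intro g
        simp only [hP₂']
        exact helper_uniform_prod (Ysub a δsel X) hYmeas hYind (Esub a δsel b w) q₀ he
          (hYunif q₀) g
end

section
/- With the setup below, where 𝒢 is the group of complex r-th roots of unity for a fixed integer r ≥ 2, let T = (T1,T2) be a 2k-tuple of edges of G, and set Q(T1) = ∏_{j=1}^{2k} X_j(v_j) and Q(T2) = ∏_{j=1}^{2k} X_j(w_j). If T satisfies Condition 1 or Condition 2 at every vertex of H, or if r = 2 and T satisfies Condition 1, 2, or 3 at every vertex of H, then Q(T1) · conj(Q(T2)) = 1 with probability 1. Otherwise, E[ Q(T1) · conj(Q(T2)) ] = 0. -/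
open MeasureTheory ProbabilityTheory

private def eps {VG : Type} [DecidableEq VG] (A B C D x : VG) : ℤ :=
  (if A = x then 1 else 0) - (if B = x then 1 else 0)
    - (if C = x then 1 else 0) + (if D = x then 1 else 0)

private lemma eps_wit1 {VG : Type} [DecidableEq VG] {A B C D : VG}
    (h1 : ¬(A = B ∧ C = D)) (h2 : ¬(A = C ∧ B = D)) :
    ∃ x : VG, eps A B C D x = 1 ∨ eps A B C D x = -1 ∨ eps A B C D x = 2 := by
  by_cases hAB : A = B
  · subst hAB
    have hCD : C ≠ D := fun h => h1 ⟨rfl, h⟩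
    refine ⟨C, ?_⟩
    simp only [eps]
    split_ifs <;> first | omega | simp_all
  · by_cases hAC : A = C
    · subst hAC
      have hBD : B ≠ D := fun h => h2 ⟨rfl, h⟩
      refine ⟨B, ?_⟩
      simp only [eps]
      split_ifs <;> first | omega | simp_all
    · refine ⟨A, ?_⟩
      simp only [eps]
      split_ifs <;> first | omega | simp_all

private lemma eps_wit2 {VG : Type} [DecidableEq VG] {A B C D : VG}
    (h1 : ¬(A = B ∧ C = D)) (h2 : ¬(A = C ∧ B = D)) (h3 : ¬(A = D ∧ B = C)) :
    ∃ x : VG, eps A B C D x = 1 ∨ eps A B C D x = -1 := by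
  by_cases hAB : A = B
  · subst hAB
    have hCD : C ≠ D := fun h => h1 ⟨rfl, h⟩
    refine ⟨C, ?_⟩
    simp only [eps]
    split_ifs <;> first | omega | simp_all
  · by_cases hAC : A = C
    · subst hAC
      have hBD : B ≠ D := fun h => h2 ⟨rfl, h⟩
      refine ⟨B, ?_⟩
      simp only [eps]
      split_ifs <;> first | omega | simp_all
    · by_cases hAD : A = D
      · subst hAD
        have hBC : B ≠ C := fun h => h3 ⟨rfl, h⟩
        refine ⟨B, ?_⟩
        simp only [eps]
        split_ifs <;> first | omega | simp_all
      · refine ⟨A, ?_⟩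
        simp only [eps]
        split_ifs <;> first | omega | simp_all
set_option maxHeartbeats 2000000 in
/-- (Theorem classifying contributions to the variance, roots-of-unity case.) -/
theorem stmt5
    {t k : ℕ}
    (H : SimpleGraph (Fin t)) [DecidableRel H.Adj]
    (hHconn : H.Connected) (hHdeg : ∀ b : Fin t, 2 ≤ H.degree b)
    (a : Fin k × Bool → Fin t)
    (ha : ∀ i : Fin k, H.Adj (a (i, false)) (a (i, true)))
    (henum : ∀ e ∈ H.edgeSet, ∃! i : Fin k, e = s(a (i, false), a (i, true)))
    {VG : Type} [Fintype VG] [DecidableEq VG] (G : SimpleGraph VG) [DecidableRel G.Adj]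
    {Ω : Type} [MeasurableSpace Ω] (μ : Measure Ω) [IsProbabilityMeasure μ]
    (r : ℕ) (hr : 2 ≤ r)
    (δsel : Fin t → Fin k × Bool) (hδ : ∀ b : Fin t, a (δsel b) = b)
    (X : Fin k × Bool → VG → Ω → ℂ)
    (hXroot : ∀ (j : Fin k × Bool) (x : VG) (ω : Ω), (X j x ω) ^ r = 1)
    (hXmeas : ∀ j x, Measurable (X j x))
    (hXindep : iIndepFun
      (fun p : {q : (Fin k × Bool) × VG // q.1 ≠ δsel (a q.1)} => X p.1.1 p.1.2) μ)
    (hXunif : ∀ (j : Fin k × Bool) (x : VG), j ≠ δsel (a j) →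
      ∀ z : ℂ, z ^ r = 1 → μ {ω | X j x ω = z} = ((r : ENNReal))⁻¹)
    (hXdist : ∀ (b : Fin t) (x : VG) (ω : Ω),
      X (δsel b) x ω
        = ∏ j ∈ Finset.univ.filter (fun j : Fin k × Bool => a j = b ∧ j ≠ δsel b),
            (X j x ω)⁻¹)
    (v w : Fin k × Bool → VG)
    (hv : ∀ i : Fin k, G.Adj (v (i, false)) (v (i, true)))
    (hw : ∀ i : Fin k, G.Adj (w (i, false)) (w (i, true)))
    -- the three Conditions at a vertex `b` of `H`
    (Cond1 Cond2 Cond3 : Fin t → Prop)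
    (hCond1 : ∀ b, Cond1 b ↔ ((∀ i j : Fin k × Bool, a i = b → a j = b → v i = v j) ∧
      (∀ i j : Fin k × Bool, a i = b → a j = b → w i = w j)))
    (hCond2 : ∀ b, Cond2 b ↔ (∀ i : Fin k × Bool, a i = b → v i = w i))
    (hCond3 : ∀ b, Cond3 b ↔ (∃ x y : VG, ∀ i : Fin k × Bool, a i = b →
      (v i = x ∧ w i = y) ∨ (v i = y ∧ w i = x))) :
    (((∀ b : Fin t, Cond1 b ∨ Cond2 b) ∨
        (r = 2 ∧ ∀ b : Fin t, Cond1 b ∨ Cond2 b ∨ Cond3 b)) →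
      μ {ω | (∏ j : Fin k × Bool, X j (v j) ω) *
          (starRingEnd ℂ) (∏ j : Fin k × Bool, X j (w j) ω) = 1} = 1) ∧
    ((¬ ((∀ b : Fin t, Cond1 b ∨ Cond2 b) ∨
        (r = 2 ∧ ∀ b : Fin t, Cond1 b ∨ Cond2 b ∨ Cond3 b))) →
      ∫ ω, (∏ j : Fin k × Bool, X j (v j) ω) *
          (starRingEnd ℂ) (∏ j : Fin k × Bool, X j (w j) ω) ∂μ = 0) := by
  classical
  have hr0 : r ≠ 0 := by omega
  haveI : NeZero r := ⟨hr0⟩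
  have hXne : ∀ (j : Fin k × Bool) (x : VG) (ω : Ω), X j x ω ≠ 0 := by
    intro j x ω h
    have h2 := hXroot j x ω
    rw [h, zero_pow hr0] at h2
    exact zero_ne_one h2
  have hconj : ∀ z : ℂ, z ^ r = 1 → (starRingEnd ℂ) z = z⁻¹ := by
    intro z hz
    have hns : Complex.normSq z = 1 := by
      have h1 : ((Complex.normSq z : ℝ) : ℂ) ^ r = 1 := by
        rw [← Complex.mul_conj z, mul_pow, ← map_pow, hz, map_one, one_mul]
      have h2 : (Complex.normSq z : ℝ) ^ r = 1 := by
        have := h1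
        rw [← Complex.ofReal_pow] at this
        exact_mod_cast this
      have h0 : 0 ≤ Complex.normSq z := Complex.normSq_nonneg z
      by_contra hne
      rcases lt_or_gt_of_ne hne with hlt | hgt
      · have := pow_lt_one₀ h0 hlt hr0
        rw [h2] at this; exact lt_irrefl _ this
      · have := one_lt_pow₀ hgt hr0
        rw [h2] at this; exact lt_irrefl _ this
    have hmul : z * (starRingEnd ℂ) z = 1 := by
      rw [Complex.mul_conj, hns, Complex.ofReal_one]
    exact eq_inv_of_mul_eq_one_right hmul
  set ND : Finset (Fin k × Bool) := Finset.univ.filter (fun j => j ≠ δsel (a j)) with hND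
  -- Key pointwise identity
  have key : ∀ ω : Ω,
      (∏ j : Fin k × Bool, X j (v j) ω) * (starRingEnd ℂ) (∏ j : Fin k × Bool, X j (w j) ω)
        = ∏ j ∈ ND, (X j (v j) ω * (X j (w j) ω)⁻¹ *
            ((X j (v (δsel (a j))) ω)⁻¹ * X j (w (δsel (a j))) ω)) := by
    intro ω
    rw [map_prod, ← Finset.prod_mul_distrib]
    have hcstep : (∏ j : Fin k × Bool, X j (v j) ω * (starRingEnd ℂ) (X j (w j) ω))
        = ∏ j : Fin k × Bool, X j (v j) ω * (X j (w j) ω)⁻¹ :=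
      Finset.prod_congr rfl fun j _ => by rw [hconj _ (hXroot j (w j) ω)]
    rw [hcstep]
    rw [← Finset.prod_filter_mul_prod_filter_not Finset.univ (fun j => j ≠ δsel (a j))
        (fun j => X j (v j) ω * (X j (w j) ω)⁻¹)]
    have himg : Finset.univ.filter (fun j : Fin k × Bool => ¬ j ≠ δsel (a j))
        = Finset.univ.image δsel := by
      ext j
      simp only [Finset.mem_filter, Finset.mem_univ, true_and, Finset.mem_image, not_not]
      constructor
      · intro h; exact ⟨a j, h.symm⟩
      · rintro ⟨b, _, rfl⟩; rw [hδ]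
    have hinj : ∀ b ∈ Finset.univ, ∀ b' ∈ Finset.univ, δsel b = δsel b' → b = b' := by
      intro b _ b' _ h
      have h2 := congrArg a h
      rwa [hδ, hδ] at h2
    rw [himg, Finset.prod_image hinj]
    have hDval : ∀ b : Fin t,
        X (δsel b) (v (δsel b)) ω * (X (δsel b) (w (δsel b)) ω)⁻¹
          = ∏ j ∈ ND.filter (fun j => a j = b),
              ((X j (v (δsel (a j))) ω)⁻¹ * X j (w (δsel (a j))) ω) := by
      intro b
      have hset : Finset.univ.filter (fun j : Fin k × Bool => a j = b ∧ j ≠ δsel b)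
          = ND.filter (fun j => a j = b) := by
        ext j
        simp only [hND, Finset.mem_filter, Finset.mem_univ, true_and, Finset.filter_filter]
        constructor
        · rintro ⟨rfl, h2⟩; exact ⟨h2, rfl⟩
        · rintro ⟨h1, rfl⟩; exact ⟨rfl, h1⟩
      rw [hXdist b (v (δsel b)) ω, hXdist b (w (δsel b)) ω, hset,
        Finset.prod_inv_distrib, Finset.prod_inv_distrib, inv_inv, ← Finset.prod_inv_distrib,
        ← Finset.prod_mul_distrib]
      refine Finset.prod_congr rfl ?_
      intro j hj
      rw [Finset.mem_filter] at hj
      rw [hj.2]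
    rw [Finset.prod_congr rfl (fun b (_ : b ∈ Finset.univ) => hDval b)]
    rw [Finset.prod_fiberwise_of_maps_to (fun j _ => Finset.mem_univ (a j))]
    rw [← Finset.prod_mul_distrib]
  -- deterministic case: each factor is 1
  have hg1 : (((∀ b : Fin t, Cond1 b ∨ Cond2 b) ∨
        (r = 2 ∧ ∀ b : Fin t, Cond1 b ∨ Cond2 b ∨ Cond3 b))) →
      ∀ (j : Fin k × Bool) (ω : Ω),
        X j (v j) ω * (X j (w j) ω)⁻¹ *
          ((X j (v (δsel (a j))) ω)⁻¹ * X j (w (δsel (a j))) ω) = 1 := by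
    intro hyp j ω
    have had : a (δsel (a j)) = a j := hδ (a j)
    have hne1 := hXne j (v j) ω
    have hne2 := hXne j (w j) ω
    have hne3 := hXne j (v (δsel (a j))) ω
    have hne4 := hXne j (w (δsel (a j))) ω
    have case1 : Cond1 (a j) →
        X j (v j) ω * (X j (w j) ω)⁻¹ *
          ((X j (v (δsel (a j))) ω)⁻¹ * X j (w (δsel (a j))) ω) = 1 := fun hc => by
      rw [hCond1 (a j)] at hc
      have h1 := hc.1 j (δsel (a j)) rfl had
      have h2 := hc.2 j (δsel (a j)) rfl had
      rw [h1, h2]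
      field_simp
    have case2 : Cond2 (a j) →
        X j (v j) ω * (X j (w j) ω)⁻¹ *
          ((X j (v (δsel (a j))) ω)⁻¹ * X j (w (δsel (a j))) ω) = 1 := fun hc => by
      rw [hCond2 (a j)] at hc
      have h1 := hc j rfl
      have h2 := hc (δsel (a j)) had
      rw [h1, h2]
      field_simp
    rcases hyp with hyp | ⟨hr2, hyp⟩
    · rcases hyp (a j) with hc | hc
      · exact case1 hc
      · exact case2 hc
    · rcases hyp (a j) with hc | hc | hc
      · exact case1 hc
      · exact case2 hc
      · subst hr2
        rw [hCond3 (a j)] at hc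
        obtain ⟨x, y, hxy⟩ := hc
        have pat1 : ∀ u u' : VG, X j u ω * (X j u' ω)⁻¹ * ((X j u ω)⁻¹ * X j u' ω) = 1 := by
          intro u u'
          have e1 := hXne j u ω
          have e2 := hXne j u' ω
          field_simp
        have pat2 : ∀ u u' : VG, X j u ω * (X j u' ω)⁻¹ * ((X j u' ω)⁻¹ * X j u ω) = 1 := by
          intro u u'
          have e1 : X j u ω * X j u ω = 1 := by
            have h := hXroot j u ω; rwa [pow_two] at h
          have e2 : X j u' ω * X j u' ω = 1 := by
            have h := hXroot j u' ω; rwa [pow_two] at h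
          calc X j u ω * (X j u' ω)⁻¹ * ((X j u' ω)⁻¹ * X j u ω)
              = (X j u ω * X j u ω) * ((X j u' ω)⁻¹ * (X j u' ω)⁻¹) := by ring
            _ = (X j u ω * X j u ω) * (X j u' ω * X j u' ω)⁻¹ := by rw [mul_inv]
            _ = 1 * (1 : ℂ)⁻¹ := by rw [e1, e2]
            _ = 1 := by norm_num
        rcases hxy j rfl with ⟨h1, h2⟩ | ⟨h1, h2⟩ <;>
          rcases hxy (δsel (a j)) had with ⟨h3, h4⟩ | ⟨h3, h4⟩
        · rw [h1, h2, h3, h4]; exact pat1 x y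
        · rw [h1, h2, h3, h4]; exact pat2 x y
        · rw [h1, h2, h3, h4]; exact pat2 y x
        · rw [h1, h2, h3, h4]; exact pat1 y x
  refine ⟨?_, ?_⟩
  · -- probability-one case
    intro hyp
    have hset : {ω : Ω | (∏ j : Fin k × Bool, X j (v j) ω) *
        (starRingEnd ℂ) (∏ j : Fin k × Bool, X j (w j) ω) = 1} = Set.univ := by
      ext ω
      simp only [Set.mem_setOf_eq, Set.mem_univ, iff_true]
      rw [key ω]
      exact Finset.prod_eq_one fun j _ => hg1 hyp j ω
    rw [hset]
    exact measure_univ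
  · -- expectation-zero case
    intro hyp
    push_neg at hyp
    obtain ⟨hnP, hn2⟩ := hyp
    -- a witness index with exponent not divisible by r
    have hwit : ∃ p : {q : (Fin k × Bool) × VG // q.1 ≠ δsel (a q.1)},
        ¬ ((r : ℤ) ∣ eps (v p.1.1) (w p.1.1) (v (δsel (a p.1.1))) (w (δsel (a p.1.1))) p.1.2) := by
      have hrZ : (2 : ℤ) ≤ (r : ℤ) := by exact_mod_cast hr
      by_cases hr2 : r = 2
      · obtain ⟨b, hb1, hb2, hb3⟩ := hn2 hr2
        have hex : ∃ j, a j = b ∧ ¬((v j = w j ∧ v (δsel b) = w (δsel b)) ∨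
            (v j = v (δsel b) ∧ w j = w (δsel b)) ∨ (v j = w (δsel b) ∧ w j = v (δsel b))) := by
          by_contra hcon
          push_neg at hcon
          by_cases hvd : v (δsel b) = w (δsel b)
          · apply hb2
            rw [hCond2]
            intro i hi
            rcases hcon i hi with ⟨h1, _⟩ | ⟨h1, h2⟩ | ⟨h1, h2⟩
            · exact h1
            · rw [h1, hvd, ← h2]
            · rw [h1, ← hvd, ← h2]
          · apply hb3
            rw [hCond3]
            refine ⟨v (δsel b), w (δsel b), ?_⟩
            intro i hi
            rcases hcon i hi with ⟨_, h2⟩ | h | h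
            · exact absurd h2 hvd
            · exact Or.inl h
            · exact Or.inr h
        obtain ⟨j, haj, hnrel⟩ := hex
        have hjd : δsel (a j) = δsel b := by rw [haj]
        have h1 : ¬(v j = w j ∧ v (δsel (a j)) = w (δsel (a j))) := by
          rw [hjd]; tauto
        have h2 : ¬(v j = v (δsel (a j)) ∧ w j = w (δsel (a j))) := by
          rw [hjd]; tauto
        have h3 : ¬(v j = w (δsel (a j)) ∧ w j = v (δsel (a j))) := by
          rw [hjd]; tauto
        obtain ⟨x, hx⟩ := eps_wit2 h1 h2 h3
        have hjnd : j ≠ δsel (a j) := by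
          intro hje
          exact hnrel (Or.inr (Or.inl
            ⟨congrArg v (hje.trans hjd), congrArg w (hje.trans hjd)⟩))
        refine ⟨⟨(j, x), hjnd⟩, ?_⟩
        intro hdvd
        rcases hx with h | h <;> rw [h] at hdvd
        · have := Int.le_of_dvd one_pos hdvd; omega
        · rw [dvd_neg] at hdvd
          have := Int.le_of_dvd one_pos hdvd; omega
      · obtain ⟨b, hb1, hb2⟩ := hnP
        have hex : ∃ j, a j = b ∧ ¬((v j = w j ∧ v (δsel b) = w (δsel b)) ∨
            (v j = v (δsel b) ∧ w j = w (δsel b))) := by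
          by_contra hcon
          push_neg at hcon
          by_cases hvd : v (δsel b) = w (δsel b)
          · apply hb2
            rw [hCond2]
            intro i hi
            rcases hcon i hi with ⟨h1, _⟩ | ⟨h1, h2⟩
            · exact h1
            · rw [h1, hvd, ← h2]
          · apply hb1
            rw [hCond1]
            constructor
            · intro i i' hi hi'
              rcases hcon i hi with ⟨_, hq⟩ | ⟨hq1, _⟩
              · exact absurd hq hvd
              · rcases hcon i' hi' with ⟨_, hq⟩ | ⟨hq1', _⟩
                · exact absurd hq hvd
                · rw [hq1, hq1']
            · intro i i' hi hi'
              rcases hcon i hi with ⟨_, hq⟩ | ⟨_, hq2⟩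
              · exact absurd hq hvd
              · rcases hcon i' hi' with ⟨_, hq⟩ | ⟨_, hq2'⟩
                · exact absurd hq hvd
                · rw [hq2, hq2']
        obtain ⟨j, haj, hnrel⟩ := hex
        have hjd : δsel (a j) = δsel b := by rw [haj]
        have h1 : ¬(v j = w j ∧ v (δsel (a j)) = w (δsel (a j))) := by
          rw [hjd]; tauto
        have h2 : ¬(v j = v (δsel (a j)) ∧ w j = w (δsel (a j))) := by
          rw [hjd]; tauto
        obtain ⟨x, hx⟩ := eps_wit1 h1 h2
        have hjnd : j ≠ δsel (a j) := by
          intro hje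
          exact hnrel (Or.inr
            ⟨congrArg v (hje.trans hjd), congrArg w (hje.trans hjd)⟩)
        refine ⟨⟨(j, x), hjnd⟩, ?_⟩
        intro hdvd
        rcases hx with h | h | h <;> rw [h] at hdvd
        · have := Int.le_of_dvd one_pos hdvd; omega
        · rw [dvd_neg] at hdvd
          have := Int.le_of_dvd one_pos hdvd; omega
        · have := Int.le_of_dvd two_pos hdvd; omega
    obtain ⟨p₀, hp₀⟩ := hwit
    -- abbreviations
    set n : {q : (Fin k × Bool) × VG // q.1 ≠ δsel (a q.1)} → ℕ :=
      fun p => ((eps (v p.1.1) (w p.1.1) (v (δsel (a p.1.1))) (w (δsel (a p.1.1))) p.1.2)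
        % (r : ℤ)).toNat with hn
    have hrZ0 : (r : ℤ) ≠ 0 := by exact_mod_cast hr0
    have hrZpos : (0 : ℤ) < (r : ℤ) := by positivity
    have hnlt : ∀ p, n p < r := by
      intro p
      simp only [hn]
      have h1 := Int.emod_nonneg
        (eps (v p.1.1) (w p.1.1) (v (δsel (a p.1.1))) (w (δsel (a p.1.1))) p.1.2) hrZ0
      have h2 := Int.emod_lt_of_pos
        (eps (v p.1.1) (w p.1.1) (v (δsel (a p.1.1))) (w (δsel (a p.1.1))) p.1.2) hrZpos
      omega
    have hnpos : 0 < n p₀ := by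
      simp only [hn]
      have h1 := Int.emod_nonneg
        (eps (v p₀.1.1) (w p₀.1.1) (v (δsel (a p₀.1.1))) (w (δsel (a p₀.1.1))) p₀.1.2) hrZ0
      have h3 : (eps (v p₀.1.1) (w p₀.1.1) (v (δsel (a p₀.1.1))) (w (δsel (a p₀.1.1))) p₀.1.2)
          % (r : ℤ) ≠ 0 := fun h => hp₀ (Int.dvd_of_emod_eq_zero h)
      omega
    -- zpow to npow conversion
    have hmodpow : ∀ (z : ℂ), z ^ r = 1 → ∀ m : ℤ, z ^ m = z ^ ((m % (r : ℤ)).toNat) := by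
      intro z hz m
      have hz0 : z ≠ 0 := by
        intro h; rw [h, zero_pow hr0] at hz; exact zero_ne_one hz
      conv_lhs => rw [← Int.emod_add_mul_ediv m (r : ℤ)]
      rw [zpow_add₀ hz0, zpow_mul]
      have hzr : z ^ (r : ℤ) = 1 := by rw [zpow_natCast, hz]
      rw [hzr, one_zpow, mul_one, ← zpow_natCast z ((m % (r : ℤ)).toNat),
        Int.toNat_of_nonneg (Int.emod_nonneg m hrZ0)]
    -- second key identity
    have key2 : ∀ ω : Ω,
        (∏ j ∈ ND, (X j (v j) ω * (X j (w j) ω)⁻¹ *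
            ((X j (v (δsel (a j))) ω)⁻¹ * X j (w (δsel (a j))) ω)))
          = ∏ p : {q : (Fin k × Bool) × VG // q.1 ≠ δsel (a q.1)},
              (X p.1.1 p.1.2 ω) ^ (n p) := by
      intro ω
      have stepA : ∀ j ∈ ND,
          X j (v j) ω * (X j (w j) ω)⁻¹ * ((X j (v (δsel (a j))) ω)⁻¹ * X j (w (δsel (a j))) ω)
            = ∏ x : VG, (X j x ω) ^
                (((eps (v j) (w j) (v (δsel (a j))) (w (δsel (a j))) x) % (r : ℤ)).toNat) := by
        intro j _
        have hsplit : ∀ x : VG,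
            (X j x ω) ^ (eps (v j) (w j) (v (δsel (a j))) (w (δsel (a j))) x)
              = (if v j = x then X j x ω else 1) * (if w j = x then X j x ω else 1)⁻¹
                * ((if v (δsel (a j)) = x then X j x ω else 1)⁻¹
                  * (if w (δsel (a j)) = x then X j x ω else 1)) := by
          intro x
          have h0 := hXne j x ω
          have hite : ∀ (c : Prop) (inst : Decidable c), (X j x ω) ^ (if c then (1 : ℤ) else 0)
              = (if c then X j x ω else 1) := by
            intro c inst
            split_ifs <;> simp
          simp only [eps]
          rw [sub_eq_add_neg, sub_eq_add_neg, zpow_add₀ h0, zpow_add₀ h0, zpow_add₀ h0,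
            zpow_neg, zpow_neg, hite, hite, hite, hite]
          ring
        calc X j (v j) ω * (X j (w j) ω)⁻¹ *
            ((X j (v (δsel (a j))) ω)⁻¹ * X j (w (δsel (a j))) ω)
            = ∏ x : VG, (X j x ω) ^ (eps (v j) (w j) (v (δsel (a j))) (w (δsel (a j))) x) := by
              rw [Finset.prod_congr rfl (fun x (_ : x ∈ Finset.univ) => hsplit x),
                Finset.prod_mul_distrib, Finset.prod_mul_distrib, Finset.prod_mul_distrib,
                Finset.prod_inv_distrib, Finset.prod_inv_distrib,
                Finset.prod_ite_eq, Finset.prod_ite_eq, Finset.prod_ite_eq, Finset.prod_ite_eq]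
              simp
          _ = _ := Finset.prod_congr rfl fun x _ =>
              hmodpow (X j x ω) (hXroot j x ω) _
      rw [Finset.prod_congr rfl stepA]
      have hsetprod : Finset.univ.filter (fun q : (Fin k × Bool) × VG => q.1 ≠ δsel (a q.1))
          = ND ×ˢ (Finset.univ : Finset VG) := by
        ext q
        simp only [hND, Finset.mem_filter, Finset.mem_univ, true_and, Finset.mem_product,
          and_true]
      rw [← Finset.prod_product' ND Finset.univ (fun j x => (X j x ω) ^
        (((eps (v j) (w j) (v (δsel (a j))) (w (δsel (a j))) x) % (r : ℤ)).toNat))]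
      rw [← hsetprod]
      rw [Finset.prod_subtype (p := fun q : (Fin k × Bool) × VG => q.1 ≠ δsel (a q.1))
        (Finset.univ.filter (fun q : (Fin k × Bool) × VG => q.1 ≠ δsel (a q.1)))
        (by intro q; simp) (fun q : (Fin k × Bool) × VG => (X q.1 q.2 ω) ^
          (((eps (v q.1) (w q.1) (v (δsel (a q.1))) (w (δsel (a q.1))) q.2) % (r : ℤ)).toNat))]
    -- roots of unity setup
    set ζ : ℂ := Complex.exp (2 * Real.pi * Complex.I / r) with hζdef
    have hζ : IsPrimitiveRoot ζ r := Complex.isPrimitiveRoot_exp r hr0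
    have hroot : ∀ m : ℕ, (ζ ^ m) ^ r = 1 := by
      intro m
      rw [← pow_mul, mul_comm, pow_mul, hζ.pow_eq_one, one_pow]
    have hmeasA : ∀ c : {q : (Fin k × Bool) × VG // q.1 ≠ δsel (a q.1)} → Fin r,
        MeasurableSet (⋂ p, (fun ω => X p.1.1 p.1.2 ω) ⁻¹' {ζ ^ ((c p : ℕ))}) := fun c =>
      MeasurableSet.iInter fun p => (hXmeas p.1.1 p.1.2) (measurableSet_singleton _)
    have hμA : ∀ c : {q : (Fin k × Bool) × VG // q.1 ≠ δsel (a q.1)} → Fin r,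
        μ (⋂ p, (fun ω => X p.1.1 p.1.2 ω) ⁻¹' {ζ ^ ((c p : ℕ))})
          = ((r : ENNReal))⁻¹ ^ (Fintype.card {q : (Fin k × Bool) × VG // q.1 ≠ δsel (a q.1)}) := by
      intro c
      rw [hXindep.meas_iInter (fun p => ⟨{ζ ^ ((c p : ℕ))}, measurableSet_singleton _, rfl⟩)]
      have heach : ∀ p : {q : (Fin k × Bool) × VG // q.1 ≠ δsel (a q.1)},
          μ ((fun ω => X p.1.1 p.1.2 ω) ⁻¹' {ζ ^ ((c p : ℕ))}) = ((r : ENNReal))⁻¹ := by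
        intro p
        have h := hXunif p.1.1 p.1.2 p.2 (ζ ^ ((c p : ℕ))) (hroot _)
        exact h
      rw [Finset.prod_congr rfl (fun p _ => heach p), Finset.prod_const, Finset.card_univ]
    -- pointwise decomposition as a finite sum of indicators
    have hpoint : ∀ ω : Ω,
        (∏ j : Fin k × Bool, X j (v j) ω) * (starRingEnd ℂ) (∏ j : Fin k × Bool, X j (w j) ω)
          = ∑ c : {q : (Fin k × Bool) × VG // q.1 ≠ δsel (a q.1)} → Fin r,
              Set.indicator (⋂ p, (fun ω' => X p.1.1 p.1.2 ω') ⁻¹' {ζ ^ ((c p : ℕ))})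
                (fun _ => ∏ p, (ζ ^ ((c p : ℕ))) ^ (n p)) ω := by
      intro ω
      rw [key ω, key2 ω]
      have hex : ∀ p : {q : (Fin k × Bool) × VG // q.1 ≠ δsel (a q.1)},
          ∃ m : Fin r, X p.1.1 p.1.2 ω = ζ ^ (m : ℕ) := by
        intro p
        obtain ⟨i, hi, hieq⟩ := hζ.eq_pow_of_pow_eq_one (hXroot p.1.1 p.1.2 ω)
        exact ⟨⟨i, hi⟩, hieq.symm⟩
      choose c hc using hex
      rw [Finset.sum_eq_single_of_mem c (Finset.mem_univ c)]
      · rw [Set.indicator_of_mem]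
        · exact Finset.prod_congr rfl fun p _ => by rw [hc p]
        · exact Set.mem_iInter.mpr fun p => by
            simp only [Set.mem_preimage, Set.mem_singleton_iff]; exact hc p
      · intro c' _ hne
        rw [Set.indicator_of_notMem]
        intro hmem
        apply hne
        funext p
        rw [Set.mem_iInter] at hmem
        have hmp := hmem p
        rw [Set.mem_preimage, Set.mem_singleton_iff] at hmp
        exact Fin.ext (hζ.pow_inj (c' p).isLt (c p).isLt (by rw [← hmp, hc p]))
    -- compute the integral
    calc ∫ ω, (∏ j : Fin k × Bool, X j (v j) ω) *
          (starRingEnd ℂ) (∏ j : Fin k × Bool, X j (w j) ω) ∂μ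
        = ∫ ω, ∑ c : {q : (Fin k × Bool) × VG // q.1 ≠ δsel (a q.1)} → Fin r,
            Set.indicator (⋂ p, (fun ω' => X p.1.1 p.1.2 ω') ⁻¹' {ζ ^ ((c p : ℕ))})
              (fun _ => ∏ p, (ζ ^ ((c p : ℕ))) ^ (n p)) ω ∂μ := by
          exact integral_congr_ae (Filter.Eventually.of_forall hpoint)
      _ = ∑ c : {q : (Fin k × Bool) × VG // q.1 ≠ δsel (a q.1)} → Fin r,
            ∫ ω, Set.indicator (⋂ p, (fun ω' => X p.1.1 p.1.2 ω') ⁻¹' {ζ ^ ((c p : ℕ))})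
              (fun _ => ∏ p, (ζ ^ ((c p : ℕ))) ^ (n p)) ω ∂μ := by
          exact integral_finset_sum _ fun c _ => (integrable_const _).indicator (hmeasA c)
      _ = ∑ c : {q : (Fin k × Bool) × VG // q.1 ≠ δsel (a q.1)} → Fin r,
            (((r : ENNReal))⁻¹ ^ (Fintype.card {q : (Fin k × Bool) × VG // q.1 ≠ δsel (a q.1)})).toReal
              • ∏ p, (ζ ^ ((c p : ℕ))) ^ (n p) := by
          refine Finset.sum_congr rfl fun c _ => ?_
          rw [integral_indicator_const _ (hmeasA c), measureReal_def, hμA c]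
      _ = (((r : ENNReal))⁻¹ ^ (Fintype.card {q : (Fin k × Bool) × VG // q.1 ≠ δsel (a q.1)})).toReal
            • ∑ c : {q : (Fin k × Bool) × VG // q.1 ≠ δsel (a q.1)} → Fin r,
              ∏ p, (ζ ^ ((c p : ℕ))) ^ (n p) := by
          rw [Finset.smul_sum]
      _ = 0 := by
          have hswap : ∑ c : {q : (Fin k × Bool) × VG // q.1 ≠ δsel (a q.1)} → Fin r,
              ∏ p, (ζ ^ ((c p : ℕ))) ^ (n p)
                = ∏ p : {q : (Fin k × Bool) × VG // q.1 ≠ δsel (a q.1)},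
                    ∑ m : Fin r, (ζ ^ (n p)) ^ ((m : ℕ)) := by
            rw [show (∑ c : {q : (Fin k × Bool) × VG // q.1 ≠ δsel (a q.1)} → Fin r,
                ∏ p, (ζ ^ ((c p : ℕ))) ^ (n p))
                  = ∑ c : {q : (Fin k × Bool) × VG // q.1 ≠ δsel (a q.1)} → Fin r,
                      ∏ p, (ζ ^ (n p)) ^ ((c p : ℕ)) from
              Finset.sum_congr rfl fun c _ => Finset.prod_congr rfl fun p _ =>
                pow_right_comm ζ _ _]
            rw [Finset.prod_univ_sum, Fintype.piFinset_univ]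
          rw [hswap]
          have hfac : ∑ m : Fin r, (ζ ^ (n p₀)) ^ ((m : ℕ)) = 0 := by
            have hne1 : ζ ^ (n p₀) ≠ 1 := hζ.pow_ne_one_of_pos_of_lt hnpos.ne' (hnlt p₀)
            rw [Fin.sum_univ_eq_sum_range (fun i => (ζ ^ (n p₀)) ^ i) r, geom_sum_eq hne1,
              hroot (n p₀)]
            simp
          rw [Finset.prod_eq_zero (Finset.mem_univ p₀) hfac, smul_zero]
end

section
/- With the setup below, where 𝒢 = {±I, ±M, …, ±M^{d-1}} for a fixed integer d ≥ 2, let T = (T1,T2) be a 2k-tuple of edges of G, and set Q(T1) = ∏_{j=1}^{2k} X_j(v_j) and Q(T2) = ∏_{j=1}^{2k} X_j(w_j). Then: (1) if T satisfies Condition 1 at every vertex of H, then tr(Q(T1)) · tr(Q(T2)) = d² with probability 1; (2) if T satisfies Condition 1, 2, or 3 at every vertex of H but does not satisfy Condition 1 at every vertex, then 0 < E[ tr(Q(T1)) · tr(Q(T2)) ] ≤ d; (3) otherwise, E[ tr(Q(T1)) · tr(Q(T2)) ] = 0. -/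
open MeasureTheory ProbabilityTheory

/-- The diagonal matrix `M` with diagonal entries `1, ω, ω², …, ω^{d-1}`, `ω = e^{2πi/d}`. -/
noncomputable def stmt6M (d : ℕ) : Matrix (Fin d) (Fin d) ℂ :=
  Matrix.diagonal fun j : Fin d =>
    Complex.exp (2 * Real.pi * Complex.I * (j : ℕ) / (d : ℕ))

/-- Orthogonality of characters. -/
lemma stmt6_orth {G : Type*} [CommGroup G] [Fintype G] (χ : G →* ℂˣ) :
    ∑ g : G, ((χ g : ℂ)) = if (∀ g : G, (χ g : ℂ) = 1) then (Fintype.card G : ℂ) else 0 := by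
  split_ifs with h
  · simp [h, Finset.card_univ]
  · push_neg at h
    obtain ⟨g₀, h₀⟩ := h
    have key : (χ g₀ : ℂ) * ∑ g : G, ((χ g : ℂ)) = ∑ g : G, ((χ g : ℂ)) := by
      rw [Finset.mul_sum]
      refine Fintype.sum_equiv (Equiv.mulLeft g₀) _ _ (fun g => ?_)
      simp [Units.val_mul]
    have this : ((χ g₀ : ℂ) - 1) * ∑ g : G, ((χ g : ℂ)) = 0 := by
      rw [sub_mul, one_mul, key, sub_self]
    rcases mul_eq_zero.1 this with h' | h'
    · exact absurd (sub_eq_zero.1 h') h₀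
    · exact h'

/-- Rewrite the full product of hash values as a product over the free variables. -/
lemma stmt6_keyA {k t : ℕ} {VG : Type} [Fintype VG] [DecidableEq VG] {𝒢 : Type} [CommGroup 𝒢]
    (a : Fin k × Bool → Fin t) (δsel : Fin t → Fin k × Bool) (hδ : ∀ b, a (δsel b) = b)
    (Z : Fin k × Bool → VG → 𝒢)
    (hZ : ∀ b x, Z (δsel b) x
      = ∏ j ∈ Finset.univ.filter (fun j : Fin k × Bool => a j = b ∧ j ≠ δsel b), (Z j x)⁻¹)
    (u : Fin k × Bool → VG) :
    ∏ j : Fin k × Bool, Z j (u j)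
      = ∏ p : {q : (Fin k × Bool) × VG // q.1 ≠ δsel (a q.1)},
          (Z p.1.1 p.1.2) ^ ((if u p.1.1 = p.1.2 then (1:ℤ) else 0)
            - (if u (δsel (a p.1.1)) = p.1.2 then (1:ℤ) else 0)) := by
  classical
  set F : Finset (Fin k × Bool) := Finset.univ.filter (fun j => j ≠ δsel (a j)) with hF
  -- RHS as a double product
  have hRHS : ∏ p : {q : (Fin k × Bool) × VG // q.1 ≠ δsel (a q.1)},
          (Z p.1.1 p.1.2) ^ ((if u p.1.1 = p.1.2 then (1:ℤ) else 0)
            - (if u (δsel (a p.1.1)) = p.1.2 then (1:ℤ) else 0))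
      = ∏ j ∈ F, ∏ x : VG, (Z j x) ^ ((if u j = x then (1:ℤ) else 0)
            - (if u (δsel (a j)) = x then (1:ℤ) else 0)) := by
    rw [← Finset.prod_subtype (Finset.univ.filter
        (fun q : (Fin k × Bool) × VG => q.1 ≠ δsel (a q.1)))
        (by intro q; simp) (fun q => (Z q.1 q.2) ^ ((if u q.1 = q.2 then (1:ℤ) else 0)
            - (if u (δsel (a q.1)) = q.2 then (1:ℤ) else 0)))]
    have hset : Finset.univ.filter (fun q : (Fin k × Bool) × VG => q.1 ≠ δsel (a q.1))
        = F ×ˢ Finset.univ := by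
      ext q; simp [hF]
    rw [hset, Finset.prod_product]
  -- each inner product
  have hinner : ∀ j ∈ F, (∏ x : VG, (Z j x) ^ ((if u j = x then (1:ℤ) else 0)
            - (if u (δsel (a j)) = x then (1:ℤ) else 0)))
      = Z j (u j) * (Z j (u (δsel (a j))))⁻¹ := by
    intro j _
    have h1 : ∀ (y : VG), ∏ x : VG, (Z j x) ^ (if y = x then (1:ℤ) else 0) = Z j y := by
      intro y
      have : ∀ x : VG, (Z j x) ^ (if y = x then (1:ℤ) else 0)
          = if y = x then Z j x else 1 := by
        intro x; split <;> simp
      simp_rw [this]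
      simp [Finset.prod_ite_eq]
    calc ∏ x : VG, (Z j x) ^ ((if u j = x then (1:ℤ) else 0)
            - (if u (δsel (a j)) = x then (1:ℤ) else 0))
        = ∏ x : VG, ((Z j x) ^ (if u j = x then (1:ℤ) else 0)
            * ((Z j x) ^ (if u (δsel (a j)) = x then (1:ℤ) else 0))⁻¹) := by
          refine Finset.prod_congr rfl (fun x _ => ?_); rw [zpow_sub]
      _ = (∏ x : VG, (Z j x) ^ (if u j = x then (1:ℤ) else 0))
            * (∏ x : VG, (Z j x) ^ (if u (δsel (a j)) = x then (1:ℤ) else 0))⁻¹ := by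
          rw [Finset.prod_mul_distrib, Finset.prod_inv_distrib]
      _ = Z j (u j) * (Z j (u (δsel (a j))))⁻¹ := by rw [h1, h1]
  -- LHS decomposition
  have hsplit : ∏ j : Fin k × Bool, Z j (u j)
      = (∏ j ∈ F, Z j (u j)) * ∏ j ∈ Finset.univ.filter (fun j => ¬ (j ≠ δsel (a j))), Z j (u j) :=
    (Finset.prod_filter_mul_prod_filter_not Finset.univ _ _).symm
  have hdep : ∏ j ∈ Finset.univ.filter (fun j : Fin k × Bool => ¬ (j ≠ δsel (a j))), Z j (u j)
      = ∏ b : Fin t, Z (δsel b) (u (δsel b)) := by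
    refine (Finset.prod_bij (fun b _ => δsel b) ?_ ?_ ?_ ?_).symm
    · intro b _; simp [hδ b]
    · intro b _ b' _ h
      have := congrArg a h; rwa [hδ, hδ] at this
    · intro j hj
      simp only [Finset.mem_filter, not_not] at hj
      exact ⟨a j, Finset.mem_univ _, hj.2.symm⟩
    · intro b _; rfl
  have hdep2 : ∏ b : Fin t, Z (δsel b) (u (δsel b))
      = ∏ j ∈ F, (Z j (u (δsel (a j))))⁻¹ := by
    have h1 : ∀ b : Fin t, Z (δsel b) (u (δsel b))
        = ∏ j ∈ F.filter (fun j => a j = b), (Z j (u (δsel (a j))))⁻¹ := by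
      intro b
      rw [hZ b (u (δsel b))]
      refine Finset.prod_congr ?_ ?_
      · ext j; simp only [hF, Finset.mem_filter, Finset.mem_univ, true_and]
        constructor
        · rintro ⟨h1, h2⟩; exact ⟨by rw [h1]; exact h2, h1⟩
        · rintro ⟨h2, h1⟩; refine ⟨h1, ?_⟩; rw [← h1]; exact h2
      · intro j hj
        simp only [Finset.mem_filter] at hj
        rw [hj.2]
    rw [← Finset.prod_fiberwise_of_maps_to (g := a) (fun j _ => Finset.mem_univ (a j))]
    exact Finset.prod_congr rfl (fun b _ => h1 b)
  rw [hsplit, hdep, hdep2, ← Finset.prod_mul_distrib, hRHS]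
  exact Finset.prod_congr rfl (fun j hj => ((hinner j hj).symm))

/-- Expectation of a product of functions of independent discrete random variables. -/
lemma stmt6_keyB {Ω : Type} [MeasurableSpace Ω] (μ : Measure Ω) [IsProbabilityMeasure μ]
    {ι : Type} [Fintype ι] [DecidableEq ι]
    {G : Type} [Fintype G] [MeasurableSpace G] [DiscreteMeasurableSpace G]
    (Y : ι → Ω → G) (hmeas : ∀ i, Measurable (Y i))
    (hind : iIndepFun Y μ) (φ : ι → G → ℂ) :
    Integrable (fun ω => ∏ i, φ i (Y i ω)) μ ∧
    ∫ ω, ∏ i, φ i (Y i ω) ∂μ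
      = ∏ i, ∑ g : G, φ i g * ((μ {ω | Y i ω = g}).toReal : ℂ) := by
  classical
  set A : (ι → G) → Set Ω := fun c => ⋂ i ∈ (Finset.univ : Finset ι), Y i ⁻¹' {c i} with hA
  have hAmeas : ∀ c, MeasurableSet (A c) := by
    intro c
    exact MeasurableSet.biInter (Set.to_countable _)
      (fun i _ => hmeas i (measurableSet_singleton _))
  have hrep : (fun ω => ∏ i, φ i (Y i ω))
      = fun ω => ∑ c : ι → G, (A c).indicator (fun _ => ∏ i, φ i (c i)) ω := by
    funext ω
    rw [Fintype.sum_eq_single (fun i => Y i ω)]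
    · have hmem : ω ∈ A (fun i => Y i ω) := by
        simp [hA]
      rw [Set.indicator_of_mem hmem]
    · intro c hc
      have : ω ∉ A c := by
        intro hcon
        apply hc
        funext i
        simp only [hA, Set.mem_iInter] at hcon
        exact (hcon i (Finset.mem_univ i)).symm
      rw [Set.indicator_of_notMem this]
  have hint : ∀ c : ι → G, Integrable ((A c).indicator (fun _ => ∏ i, φ i (c i))) μ :=
    fun c => (integrable_const _).indicator (hAmeas c)
  constructor
  · rw [hrep]; exact integrable_finset_sum _ (fun c _ => hint c)
  rw [hrep, integral_finset_sum _ (fun c _ => hint c)]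
  have hμ : ∀ c : ι → G, μ (A c) = ∏ i, μ {ω | Y i ω = c i} := by
    intro c
    have := hind.measure_inter_preimage_eq_mul (Finset.univ)
      (sets := fun i => {c i}) (fun i _ => measurableSet_singleton _)
    simp only [hA, Finset.mem_univ, Set.iInter_true] at this ⊢
    exact this
  calc ∑ c : ι → G, ∫ ω, (A c).indicator (fun _ => ∏ i, φ i (c i)) ω ∂μ
      = ∑ c : ι → G, ∏ i, (φ i (c i) * ((μ {ω | Y i ω = c i}).toReal : ℂ)) := by
        refine Finset.sum_congr rfl (fun c _ => ?_)
        rw [integral_indicator_const _ (hAmeas c), measureReal_def, hμ c, ENNReal.toReal_prod]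
        rw [Complex.real_smul, Complex.ofReal_prod, ← Finset.prod_mul_distrib]
        refine Finset.prod_congr rfl (fun i _ => mul_comm _ _)
    _ = ∏ i, ∑ g : G, φ i g * ((μ {ω | Y i ω = g}).toReal : ℂ) :=
        (Fintype.prod_sum (fun i g => φ i g * ((μ {ω | Y i ω = g}).toReal : ℂ))).symm



set_option maxHeartbeats 2000000 in
/-- (Theorem classifying contributions to the variance, matrix case.)
The group `𝒢 = {±I, ±M, …, ±M^{d−1}}` (`d ≥ 2`) is modelled by a finite commutative group
with an injective monoid homomorphism `ρ` onto that set of matrices.  With the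
hash-function setup, let `T = (v, w)` be a `2k`-tuple of edges of `G` and
`Q(T1) = ρ (∏ j, X j (v j))`, `Q(T2) = ρ (∏ j, X j (w j))`.  Then: if `T` satisfies
Condition 1 at every vertex of `H`, `tr(Q(T1))·tr(Q(T2)) = d²` a.s.; if `T` satisfies
Condition 1, 2 or 3 at every vertex but not Condition 1 everywhere, then
`0 < E[tr(Q(T1))·tr(Q(T2))] ≤ d` (the expectation is a real number); otherwise the
expectation is `0`. -/
theorem stmt6
    {t k : ℕ}
    (H : SimpleGraph (Fin t)) [DecidableRel H.Adj]
    (hHconn : H.Connected) (hHdeg : ∀ b : Fin t, 2 ≤ H.degree b)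
    (a : Fin k × Bool → Fin t)
    (ha : ∀ i : Fin k, H.Adj (a (i, false)) (a (i, true)))
    (henum : ∀ e ∈ H.edgeSet, ∃! i : Fin k, e = s(a (i, false), a (i, true)))
    {VG : Type} [Fintype VG] [DecidableEq VG] (G : SimpleGraph VG) [DecidableRel G.Adj]
    {Ω : Type} [MeasurableSpace Ω] (μ : Measure Ω) [IsProbabilityMeasure μ]
    (d : ℕ) (hd : 2 ≤ d)
    {𝒢 : Type} [CommGroup 𝒢] [Fintype 𝒢] [MeasurableSpace 𝒢] [DiscreteMeasurableSpace 𝒢]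
    (ρ : 𝒢 →* Matrix (Fin d) (Fin d) ℂ)
    (hρinj : Function.Injective ρ)
    (hρrange : Set.range ρ = {A : Matrix (Fin d) (Fin d) ℂ |
      ∃ i : Fin d, A = stmt6M d ^ (i : ℕ) ∨ A = -(stmt6M d ^ (i : ℕ))})
    (δsel : Fin t → Fin k × Bool) (hδ : ∀ b : Fin t, a (δsel b) = b)
    (X : Fin k × Bool → VG → Ω → 𝒢)
    (hXmeas : ∀ j x, Measurable (X j x))
    (hXindep : iIndepFun
      (fun p : {q : (Fin k × Bool) × VG // q.1 ≠ δsel (a q.1)} => X p.1.1 p.1.2) μ)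
    (hXunif : ∀ (j : Fin k × Bool) (x : VG), j ≠ δsel (a j) →
      ∀ g : 𝒢, μ {ω | X j x ω = g} = ((Fintype.card 𝒢 : ENNReal))⁻¹)
    (hXdist : ∀ (b : Fin t) (x : VG) (ω : Ω),
      X (δsel b) x ω
        = ∏ j ∈ Finset.univ.filter (fun j : Fin k × Bool => a j = b ∧ j ≠ δsel b),
            (X j x ω)⁻¹)
    (v w : Fin k × Bool → VG)
    (hv : ∀ i : Fin k, G.Adj (v (i, false)) (v (i, true)))
    (hw : ∀ i : Fin k, G.Adj (w (i, false)) (w (i, true)))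
    (Cond1 Cond2 Cond3 : Fin t → Prop)
    (hCond1 : ∀ b, Cond1 b ↔ ((∀ i j : Fin k × Bool, a i = b → a j = b → v i = v j) ∧
      (∀ i j : Fin k × Bool, a i = b → a j = b → w i = w j)))
    (hCond2 : ∀ b, Cond2 b ↔ (∀ i : Fin k × Bool, a i = b → v i = w i))
    (hCond3 : ∀ b, Cond3 b ↔ (∃ x y : VG, ∀ i : Fin k × Bool, a i = b →
      (v i = x ∧ w i = y) ∨ (v i = y ∧ w i = x))) :
    ((∀ b : Fin t, Cond1 b) →
      μ {ω | Matrix.trace (ρ (∏ j : Fin k × Bool, X j (v j) ω)) *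
          Matrix.trace (ρ (∏ j : Fin k × Bool, X j (w j) ω)) = (d : ℂ) ^ 2} = 1) ∧
    (((∀ b : Fin t, Cond1 b ∨ Cond2 b ∨ Cond3 b) ∧ ¬ (∀ b : Fin t, Cond1 b)) →
      (∫ ω, Matrix.trace (ρ (∏ j : Fin k × Bool, X j (v j) ω)) *
          Matrix.trace (ρ (∏ j : Fin k × Bool, X j (w j) ω)) ∂μ).im = 0 ∧
      0 < (∫ ω, Matrix.trace (ρ (∏ j : Fin k × Bool, X j (v j) ω)) *
          Matrix.trace (ρ (∏ j : Fin k × Bool, X j (w j) ω)) ∂μ).re ∧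
      (∫ ω, Matrix.trace (ρ (∏ j : Fin k × Bool, X j (v j) ω)) *
          Matrix.trace (ρ (∏ j : Fin k × Bool, X j (w j) ω)) ∂μ).re ≤ (d : ℝ)) ∧
    ((¬ ∀ b : Fin t, Cond1 b ∨ Cond2 b ∨ Cond3 b) →
      ∫ ω, Matrix.trace (ρ (∏ j : Fin k × Bool, X j (v j) ω)) *
          Matrix.trace (ρ (∏ j : Fin k × Bool, X j (w j) ω)) ∂μ = 0) := by
  classical
  -- diagonality of all ρ g
  have hdiag : ∀ g : 𝒢, ∃ f : Fin d → ℂ, ρ g = Matrix.diagonal f := by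
    intro g
    have hg : ρ g ∈ Set.range ρ := ⟨g, rfl⟩
    rw [hρrange] at hg
    obtain ⟨i, hi | hi⟩ := hg
    · exact ⟨_, by rw [hi, stmt6M, Matrix.diagonal_pow]⟩
    · exact ⟨_, by rw [hi, stmt6M, Matrix.diagonal_pow, ← Matrix.diagonal_neg]⟩
  -- diagonal entries of ρ as unit-valued characters
  have hφ : ∀ r : Fin d, ∃ u : 𝒢 →* ℂˣ, ∀ g, (u g : ℂ) = ρ g r r := by
    intro r
    refine ⟨MonoidHom.toHomUnits
      { toFun := fun g => ρ g r r
        map_one' := by show ρ (1 : 𝒢) r r = 1; rw [map_one]; exact Matrix.one_apply_eq r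
        map_mul' := by
          intro g h
          show ρ (g * h) r r = ρ g r r * ρ h r r
          obtain ⟨f, hf⟩ := hdiag g
          obtain ⟨f', hf'⟩ := hdiag h
          rw [map_mul, hf, hf', Matrix.diagonal_mul_diagonal]
          simp }, fun g => rfl⟩
  choose ur hur using hφ
  have htr : ∀ g : 𝒢, Matrix.trace (ρ g) = ∑ r : Fin d, ((ur r g : ℂ)) := by
    intro g
    simp only [Matrix.trace, Matrix.diag, hur]
  -- exponents
  set ev : (Fin k × Bool → VG) → ((Fin k × Bool) × VG) → ℤ := fun u' q =>
    (if u' q.1 = q.2 then 1 else 0) - (if u' (δsel (a q.1)) = q.2 then 1 else 0) with hev_def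
  -- pointwise factorization over the free variables
  have hprod : ∀ (u' : Fin k × Bool → VG) (ω : Ω),
      ∏ j : Fin k × Bool, X j (u' j) ω
        = ∏ p : {q : (Fin k × Bool) × VG // q.1 ≠ δsel (a q.1)},
            (X p.1.1 p.1.2 ω) ^ (ev u' p.1) := by
    intro u' ω
    rw [hev_def]
    exact stmt6_keyA a δsel hδ (fun j x => X j x ω) (fun b x => hXdist b x ω) u'
  -- Part 1
  have part1 : (∀ b : Fin t, Cond1 b) →
      μ {ω | Matrix.trace (ρ (∏ j : Fin k × Bool, X j (v j) ω)) *
          Matrix.trace (ρ (∏ j : Fin k × Bool, X j (w j) ω)) = (d : ℂ) ^ 2} = 1 := by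
    intro hall
    have hzero : ∀ (u' : Fin k × Bool → VG),
        (∀ i : Fin k × Bool, u' i = u' (δsel (a i))) →
        ∀ ω, ∏ j : Fin k × Bool, X j (u' j) ω = 1 := by
      intro u' hu ω
      rw [hprod u' ω]
      refine Finset.prod_eq_one (fun p _ => ?_)
      have h0 : ev u' p.1 = 0 := by
        simp [hev_def, hu p.1.1]
      rw [h0, zpow_zero]
    have hv1 : ∀ i : Fin k × Bool, v i = v (δsel (a i)) :=
      fun i => ((hCond1 (a i)).1 (hall (a i))).1 i (δsel (a i)) rfl (hδ (a i))
    have hw1 : ∀ i : Fin k × Bool, w i = w (δsel (a i)) :=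
      fun i => ((hCond1 (a i)).1 (hall (a i))).2 i (δsel (a i)) rfl (hδ (a i))
    have hset : {ω | Matrix.trace (ρ (∏ j : Fin k × Bool, X j (v j) ω)) *
          Matrix.trace (ρ (∏ j : Fin k × Bool, X j (w j) ω)) = (d : ℂ) ^ 2} = Set.univ := by
      refine Set.eq_univ_of_forall (fun ω => ?_)
      show Matrix.trace (ρ (∏ j : Fin k × Bool, X j (v j) ω)) *
          Matrix.trace (ρ (∏ j : Fin k × Bool, X j (w j) ω)) = (d : ℂ) ^ 2
      rw [hzero v hv1 ω, hzero w hw1 ω, map_one, Matrix.trace_one]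
      simp [sq]
    rw [hset]
    exact measure_univ
  -- characters indexed by pairs (r,s) and free variables
  set χ : Fin d → Fin d → ((Fin k × Bool) × VG) → (𝒢 →* ℂˣ) := fun r s q =>
    ((ur r).comp (zpowGroupHom (ev v q))) * ((ur s).comp (zpowGroupHom (ev w q))) with hχ_def
  have hχval : ∀ (r s : Fin d) (q : (Fin k × Bool) × VG) (g : 𝒢),
      ((χ r s q g : ℂ)) = ((ur r g : ℂ)) ^ (ev v q) * ((ur s g : ℂ)) ^ (ev w q) := by
    intro r s q g
    rw [hχ_def]
    simp only [MonoidHom.mul_apply, MonoidHom.comp_apply, zpowGroupHom_apply, map_zpow,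
      Units.val_mul, Units.val_zpow_eq_zpow_val]
  -- the integrand as a sum over (r,s) of products over the free variables
  have hintegrand : ∀ ω : Ω,
      Matrix.trace (ρ (∏ j : Fin k × Bool, X j (v j) ω)) *
          Matrix.trace (ρ (∏ j : Fin k × Bool, X j (w j) ω))
        = ∑ rs : Fin d × Fin d, ∏ p : {q : (Fin k × Bool) × VG // q.1 ≠ δsel (a q.1)},
            ((χ rs.1 rs.2 p.1 (X p.1.1 p.1.2 ω) : ℂ)) := by
    intro ω
    rw [htr, htr, Fintype.sum_mul_sum, Fintype.sum_prod_type]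
    refine Finset.sum_congr rfl (fun r _ => Finset.sum_congr rfl (fun s _ => ?_))
    have hone : ∀ (u' : Fin k × Bool → VG) (r' : Fin d),
        ((ur r' (∏ j : Fin k × Bool, X j (u' j) ω) : ℂ))
          = ∏ p : {q : (Fin k × Bool) × VG // q.1 ≠ δsel (a q.1)},
              ((ur r' (X p.1.1 p.1.2 ω) : ℂ)) ^ (ev u' p.1) := by
      intro u' r'
      calc ((ur r' (∏ j : Fin k × Bool, X j (u' j) ω) : ℂ))
          = ((∏ p : {q : (Fin k × Bool) × VG // q.1 ≠ δsel (a q.1)},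
              ur r' ((X p.1.1 p.1.2 ω) ^ (ev u' p.1)) : ℂˣ) : ℂ) := by
            rw [hprod u' ω, map_prod]
        _ = ∏ p : {q : (Fin k × Bool) × VG // q.1 ≠ δsel (a q.1)},
              ((ur r' ((X p.1.1 p.1.2 ω) ^ (ev u' p.1)) : ℂ)) :=
            map_prod (Units.coeHom ℂ) _ _
        _ = ∏ p : {q : (Fin k × Bool) × VG // q.1 ≠ δsel (a q.1)},
              ((ur r' (X p.1.1 p.1.2 ω) : ℂ)) ^ (ev u' p.1) :=
            Finset.prod_congr rfl (fun p _ => by rw [map_zpow, Units.val_zpow_eq_zpow_val])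
    rw [hone v r, hone w s, ← Finset.prod_mul_distrib]
    exact Finset.prod_congr rfl (fun p _ => (hχval r s p.1 _).symm)
  -- expectation of each product via independence
  have hkey : ∀ r s : Fin d,
      Integrable (fun ω => ∏ p : {q : (Fin k × Bool) × VG // q.1 ≠ δsel (a q.1)},
        ((χ r s p.1 (X p.1.1 p.1.2 ω) : ℂ))) μ ∧
      ∫ ω, (∏ p : {q : (Fin k × Bool) × VG // q.1 ≠ δsel (a q.1)},
        ((χ r s p.1 (X p.1.1 p.1.2 ω) : ℂ))) ∂μ
        = ∏ p : {q : (Fin k × Bool) × VG // q.1 ≠ δsel (a q.1)},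
            ∑ g : 𝒢, ((χ r s p.1 g : ℂ)) * ((μ {ω | X p.1.1 p.1.2 ω = g}).toReal : ℂ) :=
    fun r s => stmt6_keyB μ (fun p : {q : (Fin k × Bool) × VG // q.1 ≠ δsel (a q.1)} =>
      X p.1.1 p.1.2) (fun p => hXmeas _ _) hXindep (fun p g => ((χ r s p.1 g : ℂ)))
  -- each factor is 0 or 1
  have hfactor : ∀ (r s : Fin d) (p : {q : (Fin k × Bool) × VG // q.1 ≠ δsel (a q.1)}),
      (∑ g : 𝒢, ((χ r s p.1 g : ℂ)) * ((μ {ω | X p.1.1 p.1.2 ω = g}).toReal : ℂ))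
        = if (∀ g : 𝒢, ((χ r s p.1 g : ℂ)) = 1) then 1 else 0 := by
    intro r s p
    have hcard : (Fintype.card 𝒢 : ℂ) ≠ 0 := by
      exact_mod_cast Nat.cast_ne_zero.2 Fintype.card_ne_zero
    have huni : ∀ g : 𝒢, ((μ {ω | X p.1.1 p.1.2 ω = g}).toReal : ℂ)
        = (Fintype.card 𝒢 : ℂ)⁻¹ := by
      intro g
      rw [hXunif p.1.1 p.1.2 p.2 g, ENNReal.toReal_inv]
      push_cast
      simp
    simp_rw [huni, ← Finset.sum_mul, stmt6_orth (χ r s p.1)]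
    split_ifs with h
    · rw [mul_inv_cancel₀ hcard]
    · rw [zero_mul]
  -- the expectation equals the number of "all trivial" pairs (r,s)
  have hE : ∫ ω, Matrix.trace (ρ (∏ j : Fin k × Bool, X j (v j) ω)) *
          Matrix.trace (ρ (∏ j : Fin k × Bool, X j (w j) ω)) ∂μ
      = ((Finset.univ.filter (fun rs : Fin d × Fin d =>
          ∀ p : {q : (Fin k × Bool) × VG // q.1 ≠ δsel (a q.1)},
            ∀ g : 𝒢, ((χ rs.1 rs.2 p.1 g : ℂ)) = 1)).card : ℂ) := by
    have h1 : ∫ ω, Matrix.trace (ρ (∏ j : Fin k × Bool, X j (v j) ω)) *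
          Matrix.trace (ρ (∏ j : Fin k × Bool, X j (w j) ω)) ∂μ
        = ∫ ω, (∑ rs : Fin d × Fin d,
            ∏ p : {q : (Fin k × Bool) × VG // q.1 ≠ δsel (a q.1)},
              ((χ rs.1 rs.2 p.1 (X p.1.1 p.1.2 ω) : ℂ))) ∂μ :=
      integral_congr_ae (Filter.Eventually.of_forall hintegrand)
    rw [h1]
    have h2 := integral_finset_sum (μ := μ) Finset.univ
      (f := fun (rs : Fin d × Fin d) (ω : Ω) =>
        ∏ p : {q : (Fin k × Bool) × VG // q.1 ≠ δsel (a q.1)},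
          ((χ rs.1 rs.2 p.1 (X p.1.1 p.1.2 ω) : ℂ)))
      (fun rs _ => (hkey rs.1 rs.2).1)
    rw [h2]
    rw [← Finset.sum_boole (fun rs : Fin d × Fin d =>
      ∀ p : {q : (Fin k × Bool) × VG // q.1 ≠ δsel (a q.1)},
        ∀ g : 𝒢, ((χ rs.1 rs.2 p.1 g : ℂ)) = 1) Finset.univ]
    refine Finset.sum_congr rfl (fun rs _ => ?_)
    rw [(hkey rs.1 rs.2).2]
    calc (∏ p : {q : (Fin k × Bool) × VG // q.1 ≠ δsel (a q.1)},
            ∑ g : 𝒢, ((χ rs.1 rs.2 p.1 g : ℂ)) * ((μ {ω | X p.1.1 p.1.2 ω = g}).toReal : ℂ))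
        = ∏ p : {q : (Fin k × Bool) × VG // q.1 ≠ δsel (a q.1)},
            (if (∀ g : 𝒢, ((χ rs.1 rs.2 p.1 g : ℂ)) = 1) then (1:ℂ) else 0) :=
          Finset.prod_congr rfl (fun p _ => hfactor rs.1 rs.2 p)
      _ = if (∀ p : {q : (Fin k × Bool) × VG // q.1 ≠ δsel (a q.1)},
            ∀ g : 𝒢, ((χ rs.1 rs.2 p.1 g : ℂ)) = 1) then (1:ℂ) else 0 := by
          rw [Fintype.prod_boole]
  haveI : NeZero d := ⟨by omega⟩
  -- special group elements
  obtain ⟨gM, hgM⟩ : ∃ g : 𝒢, ρ g = stmt6M d := by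
    have h1 : stmt6M d ∈ Set.range ρ := by
      rw [hρrange]
      refine ⟨⟨1, by omega⟩, Or.inl ?_⟩
      simp
    obtain ⟨g, hg⟩ := h1
    exact ⟨g, hg⟩
  obtain ⟨gneg, hgneg⟩ : ∃ g : 𝒢, ρ g = -1 := by
    have h1 : (-1 : Matrix (Fin d) (Fin d) ℂ) ∈ Set.range ρ := by
      rw [hρrange]
      refine ⟨⟨0, by omega⟩, Or.inr ?_⟩
      simp
    obtain ⟨g, hg⟩ := h1
    exact ⟨g, hg⟩
  have hurM : ∀ r : Fin d, (ur r gM : ℂ)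
      = Complex.exp (2 * Real.pi * Complex.I * (r : ℕ) / (d : ℕ)) := by
    intro r
    rw [hur, hgM, stmt6M, Matrix.diagonal_apply_eq]
  have hurneg : ∀ r : Fin d, (ur r gneg : ℂ) = -1 := by
    intro r
    rw [hur, hgneg]
    simp [Matrix.one_apply_eq]
  have hdC : ((d : ℕ) : ℂ) ≠ 0 := Nat.cast_ne_zero.2 (by omega)
  have hpi : (2 * (Real.pi : ℂ) * Complex.I) ≠ 0 := by
    simp [Real.pi_ne_zero, Complex.I_ne_zero]
  -- arithmetic consequences of triviality at gM
  have hdvd_add : ∀ r s : Fin d,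
      Complex.exp (2 * Real.pi * Complex.I * (r : ℕ) / (d : ℕ)) *
        Complex.exp (2 * Real.pi * Complex.I * (s : ℕ) / (d : ℕ)) = 1 →
      d ∣ (r.val + s.val) := by
    intro r s h
    rw [← Complex.exp_add, Complex.exp_eq_one_iff] at h
    obtain ⟨n, hn⟩ := h
    field_simp at hn
    have key : ((r.val : ℂ)) + (s.val : ℂ) = n * d :=
      mul_left_cancel₀ hpi (by push_cast at hn ⊢; linear_combination (2 * (Real.pi : ℂ) * Complex.I) * hn)
    have kint : ((r.val : ℤ)) + (s.val : ℤ) = n * d := by exact_mod_cast key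
    have : ((d : ℤ)) ∣ ((r.val : ℤ) + (s.val : ℤ)) := ⟨n, by rw [kint, mul_comm]⟩
    exact_mod_cast this
  have heq_of : ∀ r s : Fin d,
      Complex.exp (2 * Real.pi * Complex.I * (r : ℕ) / (d : ℕ)) *
        (Complex.exp (2 * Real.pi * Complex.I * (s : ℕ) / (d : ℕ)))⁻¹ = 1 →
      r = s := by
    intro r s h
    rw [← Complex.exp_neg, ← Complex.exp_add, Complex.exp_eq_one_iff] at h
    obtain ⟨n, hn⟩ := h
    field_simp at hn
    have key : ((r.val : ℂ)) - (s.val : ℂ) = n * d :=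
      mul_left_cancel₀ hpi (by push_cast at hn ⊢; linear_combination (2 * (Real.pi : ℂ) * Complex.I) * hn)
    have kint : ((r.val : ℤ)) - (s.val : ℤ) = n * d := by exact_mod_cast key
    have h1 : ((r.val : ℤ)) < d := by exact_mod_cast r.2
    have h2 : ((s.val : ℤ)) < d := by exact_mod_cast s.2
    have h1' : (0 : ℤ) ≤ (r.val : ℤ) := Int.ofNat_nonneg _
    have h2' : (0 : ℤ) ≤ (s.val : ℤ) := Int.ofNat_nonneg _
    have hd0 : (0 : ℤ) < d := by exact_mod_cast (by omega : 0 < d)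
    have hn0 : n = 0 := by
      by_contra h0
      rcases lt_or_gt_of_ne h0 with hlt | hgt
      · have : n * (d : ℤ) ≤ -1 * d :=
          mul_le_mul_of_nonneg_right (by omega) (le_of_lt hd0)
        linarith
      · have : 1 * (d : ℤ) ≤ n * d :=
          mul_le_mul_of_nonneg_right (by omega) (le_of_lt hd0)
        linarith
    refine Fin.ext ?_
    have : ((r.val : ℤ)) = (s.val : ℤ) := by rw [hn0] at kint; linarith
    exact_mod_cast this
  -- sign values
  have hsign : ∀ g : 𝒢, (ur ⟨0, by omega⟩ g : ℂ) = 1 ∨ (ur ⟨0, by omega⟩ g : ℂ) = -1 := by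
    intro g
    have hg : ρ g ∈ Set.range ρ := ⟨g, rfl⟩
    rw [hρrange] at hg
    obtain ⟨i, hi | hi⟩ := hg
    · left
      rw [hur, hi, stmt6M, Matrix.diagonal_pow, Matrix.diagonal_apply_eq]
      simp
    · right
      rw [hur, hi, Matrix.neg_apply, stmt6M, Matrix.diagonal_pow, Matrix.diagonal_apply_eq]
      simp
  -- parity implies triviality at (r,s) = (0,0)
  have htriv00 : ∀ p : (Fin k × Bool) × VG, Even (ev v p + ev w p) →
      ∀ g : 𝒢, ((χ ⟨0, by omega⟩ ⟨0, by omega⟩ p g : ℂ)) = 1 := by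
    intro p hp g
    rw [hχval]
    rcases hsign g with h | h <;> rw [h]
    · simp
    · rw [← zpow_add₀ (by norm_num : (-1 : ℂ) ≠ 0)]
      exact hp.neg_one_zpow
  -- parity from the three conditions
  have heven : ∀ p : (Fin k × Bool) × VG,
      (Cond1 (a p.1) ∨ Cond2 (a p.1) ∨ Cond3 (a p.1)) → Even (ev v p + ev w p) := by
    rintro ⟨j, x⟩ hc
    have hδb : a (δsel (a j)) = a j := hδ (a j)
    rcases hc with h1 | h2 | h3
    · have e1 : v j = v (δsel (a j)) := ((hCond1 _).1 h1).1 j _ rfl hδb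
      have e2 : w j = w (δsel (a j)) := ((hCond1 _).1 h1).2 j _ rfl hδb
      simp [hev_def, e1, e2]
    · have e1 : v j = w j := (hCond2 _).1 h2 j rfl
      have e2 : v (δsel (a j)) = w (δsel (a j)) := (hCond2 _).1 h2 _ hδb
      refine ⟨(if v j = x then 1 else 0) - (if v (δsel (a j)) = x then 1 else 0), ?_⟩
      simp only [hev_def]
      rw [← e1, ← e2]
    · obtain ⟨x0, y0, h⟩ := (hCond3 _).1 h3
      rcases h j rfl with ⟨e1, e2⟩ | ⟨e1, e2⟩ <;>
        rcases h _ hδb with ⟨f1, f2⟩ | ⟨f1, f2⟩ <;>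
        · refine ⟨0, ?_⟩
          simp only [hev_def, e1, e2, f1, f2]
          ring
  -- Part 3
  have part3 : (¬ ∀ b : Fin t, Cond1 b ∨ Cond2 b ∨ Cond3 b) →
      ∫ ω, Matrix.trace (ρ (∏ j : Fin k × Bool, X j (v j) ω)) *
          Matrix.trace (ρ (∏ j : Fin k × Bool, X j (w j) ω)) ∂μ = 0 := by
    intro hnot
    rw [hE]
    norm_cast
    rw [Finset.card_eq_zero, Finset.filter_eq_empty_iff]
    intro rs _
    obtain ⟨b₀, hb₀⟩ := not_forall.1 hnot
    push_neg at hb₀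
    obtain ⟨hn1, hn2, hn3⟩ := hb₀
    obtain ⟨j₂, hj₂b, hj₂⟩ : ∃ j₂, a j₂ = b₀ ∧ v j₂ ≠ w j₂ := by
      by_contra hcon
      push_neg at hcon
      exact hn2 ((hCond2 b₀).2 hcon)
    have hodd : ∃ (j₁ : Fin k × Bool) (x : VG), a j₁ = b₀ ∧ j₁ ≠ δsel b₀ ∧
        Odd (ev v (j₁, x) + ev w (j₁, x)) := by
      by_cases hde : v (δsel b₀) = w (δsel b₀)
      · refine ⟨j₂, v j₂, hj₂b, ?_, ?_⟩
        · rintro rfl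
          exact hj₂ hde
        · have hj₂' : w j₂ ≠ v j₂ := Ne.symm hj₂
          by_cases hA : v (δsel b₀) = v j₂ <;>
            · simp only [hev_def, hj₂b, ← hde]
              norm_num [hA, hj₂']
      · have h3' : ∃ i, a i = b₀ ∧
            ¬((v i = v (δsel b₀) ∧ w i = w (δsel b₀)) ∨
              (v i = w (δsel b₀) ∧ w i = v (δsel b₀))) := by
          by_contra hcon
          push_neg at hcon
          apply hn3
          rw [hCond3]
          exact ⟨v (δsel b₀), w (δsel b₀), fun i hi => hcon i hi⟩
        obtain ⟨j₁, hj₁b, hP⟩ := h3'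
        push_neg at hP
        have hj₁δ : j₁ ≠ δsel b₀ := by
          rintro rfl
          exact (hP.1 rfl) rfl
        by_cases hA : v j₁ = v (δsel b₀)
        · have hwne : w j₁ ≠ w (δsel b₀) := hP.1 hA
          refine ⟨j₁, w j₁, hj₁b, hj₁δ, ?_⟩
          have hwne' : w (δsel b₀) ≠ w j₁ := Ne.symm hwne
          simp only [hev_def, hj₁b, hA]
          norm_num [hwne']
        · by_cases hB : w j₁ = v (δsel b₀)
          · have hvw : v j₁ ≠ w (δsel b₀) := fun hc => (hP.2 hc) hB
            refine ⟨j₁, v j₁, hj₁b, hj₁δ, ?_⟩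
            have hA' : v (δsel b₀) ≠ v j₁ := fun hc => hA hc.symm
            have h1' : w j₁ ≠ v j₁ := fun hc => hA ((hB.symm.trans hc).symm)
            have h2' : w (δsel b₀) ≠ v j₁ := fun hc => hvw hc.symm
            simp only [hev_def, hj₁b]
            norm_num [hA', h1', h2']
          · refine ⟨j₁, v (δsel b₀), hj₁b, hj₁δ, ?_⟩
            have hde' : w (δsel b₀) ≠ v (δsel b₀) := fun hc => hde hc.symm
            simp only [hev_def, hj₁b]
            norm_num [hA, hB, hde']
    obtain ⟨j₁, x, hj₁b, hj₁δ, hoddp⟩ := hodd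
    have hp₀ : ((j₁, x) : (Fin k × Bool) × VG).1 ≠ δsel (a ((j₁, x) : (Fin k × Bool) × VG).1) := by
      show j₁ ≠ δsel (a j₁)
      rw [hj₁b]
      exact hj₁δ
    simp only [not_forall]
    refine ⟨⟨(j₁, x), hp₀⟩, gneg, ?_⟩
    have hval : ((χ rs.1 rs.2 (j₁, x) gneg : ℂ))
        = ((ur rs.1 gneg : ℂ)) ^ (ev v (j₁, x)) * ((ur rs.2 gneg : ℂ)) ^ (ev w (j₁, x)) :=
      hχval rs.1 rs.2 (j₁, x) gneg
    show ¬ ((χ rs.1 rs.2 (j₁, x) gneg : ℂ)) = 1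
    rw [hval, hurneg, hurneg, ← zpow_add₀ (by norm_num : (-1 : ℂ) ≠ 0),
      hoddp.neg_one_zpow]
    norm_num
  -- Part 2
  have part2 : ((∀ b : Fin t, Cond1 b ∨ Cond2 b ∨ Cond3 b) ∧ ¬ (∀ b : Fin t, Cond1 b)) →
      (∫ ω, Matrix.trace (ρ (∏ j : Fin k × Bool, X j (v j) ω)) *
          Matrix.trace (ρ (∏ j : Fin k × Bool, X j (w j) ω)) ∂μ).im = 0 ∧
      0 < (∫ ω, Matrix.trace (ρ (∏ j : Fin k × Bool, X j (v j) ω)) *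
          Matrix.trace (ρ (∏ j : Fin k × Bool, X j (w j) ω)) ∂μ).re ∧
      (∫ ω, Matrix.trace (ρ (∏ j : Fin k × Bool, X j (v j) ω)) *
          Matrix.trace (ρ (∏ j : Fin k × Bool, X j (w j) ω)) ∂μ).re ≤ (d : ℝ) := by
    rintro ⟨hall, hnot1⟩
    set S : Finset (Fin d × Fin d) := Finset.univ.filter (fun rs : Fin d × Fin d =>
      ∀ p : {q : (Fin k × Bool) × VG // q.1 ≠ δsel (a q.1)},
        ∀ g : 𝒢, ((χ rs.1 rs.2 p.1 g : ℂ)) = 1) with hS_def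
    have hmem : ((⟨0, by omega⟩ : Fin d), (⟨0, by omega⟩ : Fin d)) ∈ S := by
      rw [hS_def]
      exact Finset.mem_filter.2 ⟨Finset.mem_univ _,
        fun p g => htriv00 p.1 (heven p.1 (hall (a p.1.1))) g⟩
    have hstep : ∀ (q : (Fin k × Bool) × VG) (hq : q.1 ≠ δsel (a q.1)), ∀ rs ∈ S,
        ((ur rs.1 gM : ℂ)) ^ (ev v q) * ((ur rs.2 gM : ℂ)) ^ (ev w q) = 1 := by
      intro q hq rs hrs
      rw [hS_def] at hrs
      have h' := (Finset.mem_filter.1 hrs).2 ⟨q, hq⟩ gM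
      rw [hχval] at h'
      exact h'
    obtain ⟨b₀, hb₀⟩ := not_forall.1 hnot1
    have hcardle : S.card ≤ d := by
      rcases hall b₀ with h1 | h2 | h3
      · exact absurd h1 hb₀
      · -- Condition 2 at b₀, but not Condition 1
        have hC2 := (hCond2 b₀).1 h2
        obtain ⟨j₁, hj₁b, hj₁v⟩ : ∃ j₁, a j₁ = b₀ ∧ v j₁ ≠ v (δsel b₀) := by
          by_contra hcon
          push_neg at hcon
          apply hb₀
          rw [hCond1]
          constructor
          · intro i j hi hj; rw [hcon i hi, hcon j hj]
          · intro i j hi hj; rw [← hC2 i hi, ← hC2 j hj, hcon i hi, hcon j hj]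
        have hp₀ : ((j₁, v j₁) : (Fin k × Bool) × VG).1
            ≠ δsel (a ((j₁, v j₁) : (Fin k × Bool) × VG).1) := by
          show j₁ ≠ δsel (a j₁)
          rw [hj₁b]
          rintro rfl
          exact hj₁v rfl
        have hev_v : ev v (j₁, v j₁) = 1 := by
          have h' : v (δsel b₀) ≠ v j₁ := fun hc => hj₁v hc.symm
          simp only [hev_def, hj₁b]
          norm_num [h']
        have hev_w : ev w (j₁, v j₁) = 1 := by
          have e1 : w j₁ = v j₁ := (hC2 j₁ hj₁b).symm
          have e2 : w (δsel b₀) ≠ v j₁ := fun hc => hj₁v ((hC2 _ (hδ b₀)).trans hc).symm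
          simp only [hev_def, hj₁b]
          norm_num [e1, e2]
        calc S.card ≤ (Finset.univ : Finset (Fin d)).card := by
              refine Finset.card_le_card_of_injOn Prod.fst (fun _ _ => Finset.mem_univ _) ?_
              intro rs h1' rs' h2' heq
              have c1 := hstep (j₁, v j₁) hp₀ rs (Finset.mem_coe.1 h1')
              have c2 := hstep (j₁, v j₁) hp₀ rs' (Finset.mem_coe.1 h2')
              rw [hev_v, hev_w, zpow_one, zpow_one, hurM, hurM] at c1 c2
              have d1 := hdvd_add _ _ c1
              have d2 := hdvd_add _ _ c2
              have m1 : rs.1.val + rs.2.val ≡ 0 [MOD d] := (Nat.modEq_zero_iff_dvd).2 d1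
              have m2 : rs'.1.val + rs'.2.val ≡ 0 [MOD d] := (Nat.modEq_zero_iff_dvd).2 d2
              have hfst : rs.1 = rs'.1 := heq
              rw [← hfst] at m2
              have m3 : rs.2.val ≡ rs'.2.val [MOD d] :=
                Nat.ModEq.add_left_cancel' rs.1.val (m1.trans m2.symm)
              have m4 : rs.2.val % d = rs'.2.val % d := m3
              rw [Nat.mod_eq_of_lt rs.2.2, Nat.mod_eq_of_lt rs'.2.2] at m4
              exact Prod.ext hfst (Fin.ext m4)
          _ = d := by rw [Finset.card_univ, Fintype.card_fin]
      · -- Condition 3 at b₀, but not Condition 1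
        obtain ⟨x0, y0, h⟩ := (hCond3 b₀).1 h3
        obtain ⟨j₁, hj₁b, hj₁v⟩ : ∃ j₁, a j₁ = b₀ ∧ v j₁ ≠ v (δsel b₀) := by
          by_contra hcon
          push_neg at hcon
          apply hb₀
          rw [hCond1]
          constructor
          · intro i j hi hj; rw [hcon i hi, hcon j hj]
          · intro i j hi hj
            have hv' : v i = v j := by rw [hcon i hi, hcon j hj]
            rcases h i hi with ⟨e1, e2⟩ | ⟨e1, e2⟩ <;> rcases h j hj with ⟨f1, f2⟩ | ⟨f1, f2⟩
            · rw [e2, f2]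
            · have hxy : x0 = y0 := by rw [← e1, ← f1]; exact hv'
              rw [e2, f2, hxy]
            · have hxy : y0 = x0 := by rw [← e1, ← f1]; exact hv'
              rw [e2, f2, hxy]
            · rw [e2, f2]
        have hδb := hδ b₀
        have hfacts : v j₁ = w (δsel b₀) ∧ w j₁ = v (δsel b₀) := by
          rcases h j₁ hj₁b with ⟨e1, e2⟩ | ⟨e1, e2⟩ <;> rcases h _ hδb with ⟨f1, f2⟩ | ⟨f1, f2⟩
          · exact absurd (e1.trans f1.symm) hj₁v
          · exact ⟨e1.trans f2.symm, e2.trans f1.symm⟩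
          · exact ⟨e1.trans f2.symm, e2.trans f1.symm⟩
          · exact absurd (e1.trans f1.symm) hj₁v
        have hp₀ : ((j₁, v j₁) : (Fin k × Bool) × VG).1
            ≠ δsel (a ((j₁, v j₁) : (Fin k × Bool) × VG).1) := by
          show j₁ ≠ δsel (a j₁)
          rw [hj₁b]
          rintro rfl
          exact hj₁v rfl
        have hev_v : ev v (j₁, v j₁) = 1 := by
          have h' : v (δsel b₀) ≠ v j₁ := fun hc => hj₁v hc.symm
          simp only [hev_def, hj₁b]
          norm_num [h']
        have hev_w : ev w (j₁, v j₁) = -1 := by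
          have e1 : w j₁ ≠ v j₁ := by
            rw [hfacts.2]
            exact fun hc => hj₁v hc.symm
          have e2 : w (δsel b₀) = v j₁ := hfacts.1.symm
          simp only [hev_def, hj₁b]
          norm_num [e1, e2]
        calc S.card ≤ (Finset.univ : Finset (Fin d)).card := by
              refine Finset.card_le_card_of_injOn Prod.fst (fun _ _ => Finset.mem_univ _) ?_
              intro rs h1' rs' h2' heq
              have c1 := hstep (j₁, v j₁) hp₀ rs (Finset.mem_coe.1 h1')
              have c2 := hstep (j₁, v j₁) hp₀ rs' (Finset.mem_coe.1 h2')
              rw [hev_v, hev_w, zpow_one, zpow_neg_one, hurM, hurM] at c1 c2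
              have d1 := heq_of _ _ c1
              have d2 := heq_of _ _ c2
              have hfst : rs.1 = rs'.1 := heq
              refine Prod.ext hfst ?_
              rw [← d1, ← d2]
              exact hfst
          _ = d := by rw [Finset.card_univ, Fintype.card_fin]
    refine ⟨?_, ?_, ?_⟩
    · rw [hE]
      exact Complex.natCast_im _
    · rw [hE]
      simp only [Complex.natCast_re]
      exact_mod_cast Finset.card_pos.2 ⟨_, hmem⟩
    · rw [hE]
      simp only [Complex.natCast_re]
      exact_mod_cast hcardle
  exact ⟨part1, part2, part3⟩
end

section
/- With the setup below, let b be a vertex of H, let i ∈ Γ(b), and let j ∈ {1,…,2k} with j ∉ Γ(b). If T is distinctly colorable and T satisfies Condition 2 or Condition 3 at b but does not satisfy Condition 1 at b, then v_i ≠ v_j, v_i ≠ w_j, w_i ≠ v_j, and w_i ≠ w_j. -/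
/-- (Lemma `distinct_cond23`.)  Half-edges of `H` are indexed by
`Fin k × Bool`; `a j` is the vertex of `H` at half-edge `j`, and `Γ(b) = {j | a j = b}`.
A `2k`-tuple of edges of `G` is a pair `T = (v, w)` of tuples of vertices such that the
consecutive pairs are edges of `G`.  If `T` is distinctly colorable, and `T` satisfies
Condition 2 or Condition 3 at `b` but not Condition 1 at `b`, then for `i ∈ Γ(b)` and
`j ∉ Γ(b)` none of `v i, w i` equals any of `v j, w j`. -/
theorem stmt7
    {t k : ℕ}
    (H : SimpleGraph (Fin t)) [DecidableRel H.Adj]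
    (hHconn : H.Connected) (hHdeg : ∀ b : Fin t, 2 ≤ H.degree b)
    (a : Fin k × Bool → Fin t)
    (ha : ∀ i : Fin k, H.Adj (a (i, false)) (a (i, true)))
    (henum : ∀ e ∈ H.edgeSet, ∃! i : Fin k, e = s(a (i, false), a (i, true)))
    {VG : Type} (G : SimpleGraph VG)
    (v w : Fin k × Bool → VG)
    (hv : ∀ i : Fin k, G.Adj (v (i, false)) (v (i, true)))
    (hw : ∀ i : Fin k, G.Adj (w (i, false)) (w (i, true)))
    -- `T` is distinctly colorable
    (hdc : ∀ i j : Fin k × Bool, a i ≠ a j → v i ≠ v j ∧ w i ≠ w j)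
    (b : Fin t) (i j : Fin k × Bool) (hi : a i = b) (hj : a j ≠ b)
    -- Condition 2 or Condition 3 holds at `b`
    (hcond23 : (∀ i' : Fin k × Bool, a i' = b → v i' = w i') ∨
      (∃ x y : VG, ∀ i' : Fin k × Bool, a i' = b →
        (v i' = x ∧ w i' = y) ∨ (v i' = y ∧ w i' = x)))
    -- Condition 1 does not hold at `b`
    (hnot1 : ¬ ((∀ i' i'' : Fin k × Bool, a i' = b → a i'' = b → v i' = v i'') ∧
      (∀ i' i'' : Fin k × Bool, a i' = b → a i'' = b → w i' = w i''))) :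
    v i ≠ v j ∧ v i ≠ w j ∧ w i ≠ v j ∧ w i ≠ w j := by
  have haij : a i ≠ a j := by rw [hi]; exact Ne.symm hj
  obtain ⟨hvv, hww⟩ := hdc i j haij
  rcases hcond23 with h2 | ⟨x, y, h3⟩
  · have he := h2 i hi
    exact ⟨hvv, by rw [he]; exact hww, by rw [← he]; exact hvv, hww⟩
  · have key : ∃ i1 i2 : Fin k × Bool, a i1 = b ∧ a i2 = b ∧
        v i1 = x ∧ w i1 = y ∧ v i2 = y ∧ w i2 = x := by
      rw [not_and_or] at hnot1
      push_neg at hnot1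
      rcases hnot1 with ⟨i1, i2, hb1, hb2, hne⟩ | ⟨i1, i2, hb1, hb2, hne⟩ <;>
        rcases h3 i1 hb1 with ⟨h1, h1'⟩ | ⟨h1, h1'⟩ <;>
        rcases h3 i2 hb2 with ⟨h2, h2'⟩ | ⟨h2, h2'⟩ <;>
        first
          | exact ⟨i1, i2, hb1, hb2, h1, h1', h2, h2'⟩
          | exact ⟨i2, i1, hb2, hb1, h2, h2', h1, h1'⟩
          | exact absurd (h1.trans h2.symm) hne
          | exact absurd (h1'.trans h2'.symm) hne
    obtain ⟨i1, i2, hb1, hb2, hx1, hy1, hy2, hx2⟩ := key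
    have h1j := hdc i1 j (by rw [hb1]; exact Ne.symm hj)
    have h2j := hdc i2 j (by rw [hb2]; exact Ne.symm hj)
    rw [hx1, hy1] at h1j
    rw [hy2, hx2] at h2j
    obtain ⟨hxv, hyw⟩ := h1j
    obtain ⟨hyv, hxw⟩ := h2j
    rcases h3 i hi with ⟨hvi, hwi⟩ | ⟨hvi, hwi⟩ <;> rw [hvi, hwi] <;>
      exact ⟨by assumption, by assumption, by assumption, by assumption⟩
end

section
/- With the setup below, suppose α_1,β_1,…,α_s,β_s ∈ {1,…,2k} are indices such that for each 1 ≤ r ≤ s, {α_r, β_r} = {2i-1, 2i} for some 1 ≤ i ≤ k (so each pair traverses one listed edge of H in some direction), and a_{β_r} = a_{α_{r+1}} for all 1 ≤ r < s (so the edges a_{α_1}a_{β_1}, …, a_{α_s}a_{β_s} form a walk in H). Suppose T satisfies Condition 1 or Condition 3 at every internal vertex of this walk, i.e., at a_{β_r} for each 1 ≤ r < s. Then there is a walk in K from v_{α_1} to v_{β_s} or from v_{α_1} to w_{β_s}, and there is a walk in K from w_{α_1} to v_{β_s} or from w_{α_1} to w_{β_s}. -/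
/-- (Lemma `lift_walk`.)  Half-edges of `H` are indexed by `Fin k × Bool`.
`K` is the subgraph of `G` (realized as the graph on `V(G)` with edge set) consisting of the
`2k` edges of `T = (v, w)`.  Suppose `α, β : Fin (n+1) → Fin k × Bool` describe a walk of
`n+1` edges in `H`: each `β r` is the other half of the edge containing `α r`, and
`a (β r) = a (α (r+1))` for consecutive steps.  If `T` satisfies Condition 1 or Condition 3
at every internal vertex `a (β r.castSucc)` of the walk, then there is a walk in `K` from
`v (α 0)` to `v (β last)` or to `w (β last)`, and likewise from `w (α 0)`. -/
theorem stmt8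
    {t k : ℕ}
    (H : SimpleGraph (Fin t)) [DecidableRel H.Adj]
    (hHconn : H.Connected) (hHdeg : ∀ b : Fin t, 2 ≤ H.degree b)
    (a : Fin k × Bool → Fin t)
    (ha : ∀ i : Fin k, H.Adj (a (i, false)) (a (i, true)))
    (henum : ∀ e ∈ H.edgeSet, ∃! i : Fin k, e = s(a (i, false), a (i, true)))
    {VG : Type} (G : SimpleGraph VG)
    (v w : Fin k × Bool → VG)
    (hv : ∀ i : Fin k, G.Adj (v (i, false)) (v (i, true)))
    (hw : ∀ i : Fin k, G.Adj (w (i, false)) (w (i, true)))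
    -- the graph `K` of the `2k` edges of `T`
    (K : SimpleGraph VG)
    (hK : K = SimpleGraph.fromEdgeSet {e | ∃ i : Fin k,
      e = s(v (i, false), v (i, true)) ∨ e = s(w (i, false), w (i, true))})
    -- the walk in `H`
    (n : ℕ) (α β : Fin (n + 1) → Fin k × Bool)
    (hαβ : ∀ r : Fin (n + 1), (β r).1 = (α r).1 ∧ (β r).2 = !(α r).2)
    (hwalk : ∀ r : Fin n, a (β r.castSucc) = a (α r.succ))
    -- Condition 1 or Condition 3 at every internal vertex of the walk
    (hcond : ∀ r : Fin n,
      (((∀ i j : Fin k × Bool, a i = a (β r.castSucc) → a j = a (β r.castSucc) → v i = v j) ∧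
        (∀ i j : Fin k × Bool, a i = a (β r.castSucc) → a j = a (β r.castSucc) → w i = w j)) ∨
       (∃ x y : VG, ∀ i : Fin k × Bool, a i = a (β r.castSucc) →
        (v i = x ∧ w i = y) ∨ (v i = y ∧ w i = x)))) :
    (K.Reachable (v (α 0)) (v (β (Fin.last n))) ∨
      K.Reachable (v (α 0)) (w (β (Fin.last n)))) ∧
    (K.Reachable (w (α 0)) (v (β (Fin.last n))) ∨
      K.Reachable (w (α 0)) (w (β (Fin.last n)))) := by
  subst hK
  have hKv : ∀ p : Fin k × Bool, (SimpleGraph.fromEdgeSet {e | ∃ i : Fin k,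
      e = s(v (i, false), v (i, true)) ∨ e = s(w (i, false), w (i, true))}).Adj
      (v p) (v (p.1, !p.2)) := by
    rintro ⟨i, b⟩
    cases b
    · rw [SimpleGraph.fromEdgeSet_adj]
      exact ⟨⟨i, Or.inl rfl⟩, (hv i).ne⟩
    · apply SimpleGraph.Adj.symm
      rw [SimpleGraph.fromEdgeSet_adj]
      exact ⟨⟨i, Or.inl rfl⟩, (hv i).ne⟩
  have hKw : ∀ p : Fin k × Bool, (SimpleGraph.fromEdgeSet {e | ∃ i : Fin k,
      e = s(v (i, false), v (i, true)) ∨ e = s(w (i, false), w (i, true))}).Adj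
      (w p) (w (p.1, !p.2)) := by
    rintro ⟨i, b⟩
    cases b
    · rw [SimpleGraph.fromEdgeSet_adj]
      exact ⟨⟨i, Or.inr rfl⟩, (hw i).ne⟩
    · apply SimpleGraph.Adj.symm
      rw [SimpleGraph.fromEdgeSet_adj]
      exact ⟨⟨i, Or.inr rfl⟩, (hw i).ne⟩
  induction n with
  | zero =>
    have hβ0 : β 0 = ((α 0).1, !(α 0).2) := Prod.ext (hαβ 0).1 (hαβ 0).2
    rw [Fin.last_zero, hβ0]
    exact ⟨Or.inl (hKv (α 0)).reachable, Or.inr (hKw (α 0)).reachable⟩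
  | succ n ih =>
    set α' : Fin (n + 1) → Fin k × Bool := fun r => α r.succ with hα'
    set β' : Fin (n + 1) → Fin k × Bool := fun r => β r.succ with hβ'
    have hαβ' : ∀ r : Fin (n + 1), (β' r).1 = (α' r).1 ∧ (β' r).2 = !(α' r).2 :=
      fun r => hαβ r.succ
    have hwalk' : ∀ r : Fin n, a (β' r.castSucc) = a (α' r.succ) := by
      intro r
      have h := hwalk r.succ
      rw [← Fin.succ_castSucc] at h
      exact h
    have hcond' : ∀ r : Fin n,
        (((∀ i j : Fin k × Bool, a i = a (β' r.castSucc) → a j = a (β' r.castSucc) → v i = v j) ∧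
          (∀ i j : Fin k × Bool, a i = a (β' r.castSucc) → a j = a (β' r.castSucc) → w i = w j)) ∨
         (∃ x y : VG, ∀ i : Fin k × Bool, a i = a (β' r.castSucc) →
          (v i = x ∧ w i = y) ∨ (v i = y ∧ w i = x))) := by
      intro r
      have h := hcond r.succ
      rw [← Fin.succ_castSucc] at h
      exact h
    obtain ⟨ihv, ihw⟩ := ih α' β' hαβ' hwalk' hcond'
    have hl : β' (Fin.last n) = β (Fin.last (n + 1)) := by
      rw [hβ']
      simp [Fin.succ_last]
    rw [hl] at ihv ihw
    -- adjacency at the first edge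
    have hβ0 : β 0 = ((α 0).1, !(α 0).2) := Prod.ext (hαβ 0).1 (hαβ 0).2
    have r0v : (SimpleGraph.fromEdgeSet {e | ∃ i : Fin k, e = s(v (i, false), v (i, true)) ∨ e = s(w (i, false), w (i, true))}).Reachable (v (α 0)) (v (β 0)) := by
      rw [hβ0]; exact (hKv (α 0)).reachable
    have r0w : (SimpleGraph.fromEdgeSet {e | ∃ i : Fin k, e = s(v (i, false), v (i, true)) ∨ e = s(w (i, false), w (i, true))}).Reachable (w (α 0)) (w (β 0)) := by
      rw [hβ0]; exact (hKw (α 0)).reachable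
    -- the internal vertex condition at r = 0
    have hcs : (0 : Fin (n + 1)).castSucc = (0 : Fin (n + 2)) := rfl
    have hw0 : a (β 0) = a (α' 0) := by
      have h := hwalk 0
      rw [hcs] at h
      exact h
    have key : (v (β 0) = v (α' 0) ∧ w (β 0) = w (α' 0)) ∨
        (v (β 0) = w (α' 0) ∧ w (β 0) = v (α' 0)) := by
      have h := hcond 0
      rw [hcs] at h
      rcases h with ⟨hcv, hcw⟩ | ⟨x, y, hxy⟩
      · exact Or.inl ⟨hcv _ _ rfl hw0.symm, hcw _ _ rfl hw0.symm⟩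
      · rcases hxy (β 0) rfl with ⟨h1, h2⟩ | ⟨h1, h2⟩ <;>
          rcases hxy (α' 0) hw0.symm with ⟨h3, h4⟩ | ⟨h3, h4⟩
        · exact Or.inl ⟨h1.trans h3.symm, h2.trans h4.symm⟩
        · exact Or.inr ⟨h1.trans h4.symm, h2.trans h3.symm⟩
        · exact Or.inr ⟨h1.trans h4.symm, h2.trans h3.symm⟩
        · exact Or.inl ⟨h1.trans h3.symm, h2.trans h4.symm⟩
    rcases key with ⟨e1, e2⟩ | ⟨e1, e2⟩
    · have Rv : (SimpleGraph.fromEdgeSet {e | ∃ i : Fin k, e = s(v (i, false), v (i, true)) ∨ e = s(w (i, false), w (i, true))}).Reachable (v (α 0)) (v (α' 0)) := by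
        rw [← e1]; exact r0v
      have Rw : (SimpleGraph.fromEdgeSet {e | ∃ i : Fin k, e = s(v (i, false), v (i, true)) ∨ e = s(w (i, false), w (i, true))}).Reachable (w (α 0)) (w (α' 0)) := by
        rw [← e2]; exact r0w
      exact ⟨ihv.imp Rv.trans Rv.trans, ihw.imp Rw.trans Rw.trans⟩
    · have Rv : (SimpleGraph.fromEdgeSet {e | ∃ i : Fin k, e = s(v (i, false), v (i, true)) ∨ e = s(w (i, false), w (i, true))}).Reachable (v (α 0)) (w (α' 0)) := by
        rw [← e1]; exact r0v
      have Rw : (SimpleGraph.fromEdgeSet {e | ∃ i : Fin k, e = s(v (i, false), v (i, true)) ∨ e = s(w (i, false), w (i, true))}).Reachable (w (α 0)) (v (α' 0)) := by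
        rw [← e2]; exact r0w
      exact ⟨ihw.imp Rv.trans Rv.trans, ihv.imp Rw.trans Rw.trans⟩
end

section
/- With the setup below, suppose T satisfies Condition 1, 2, or 3 at every vertex of H and satisfies Condition 2 at some vertex of H. Let J be any connected component of K, and let J' be the subgraph of H consisting of all edges {a_{2i-1},a_{2i}} (1 ≤ i ≤ k) such that the edge {v_{2i-1},v_{2i}} or the edge {w_{2i-1},w_{2i}} belongs to J. Then J' contains at least one of the following: (i) two distinct vertices at which T satisfies Condition 2; (ii) a vertex of degree at least 2 in J' at which T satisfies Condition 2; (iii) a vertex of degree at least 3 in H at which T satisfies Condition 1 or Condition 3. -/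
/-- (Lemma `Kcomp`.)  Suppose `T = (v, w)` satisfies Condition 1, 2 or 3
at every vertex of `H` and Condition 2 at some vertex.  Let `J` be the connected component
of `K` containing a vertex `x₀` of `K`, and let `J'` be the subgraph of `H` consisting of
the edges of `H` one of whose lifts lies in `J`.  (`inJ i` says the `i`-th edge of `H` has
a lift in `J`; a vertex `b` belongs to `J'` iff some half-edge `j` with `a j = b` has
`inJ j.1`; the degree of `b` in `J'` is the number of such half-edges.)  Then `J'` contains:
two distinct vertices where Condition 2 holds, or a vertex of degree ≥ 2 in `J'` where
Condition 2 holds, or a vertex of degree ≥ 3 in `H` where Condition 1 or 3 holds. -/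
theorem stmt10
    {t k : ℕ}
    (H : SimpleGraph (Fin t)) [DecidableRel H.Adj]
    (hHconn : H.Connected) (hHdeg : ∀ b : Fin t, 2 ≤ H.degree b)
    (a : Fin k × Bool → Fin t)
    (ha : ∀ i : Fin k, H.Adj (a (i, false)) (a (i, true)))
    (henum : ∀ e ∈ H.edgeSet, ∃! i : Fin k, e = s(a (i, false), a (i, true)))
    {VG : Type} (G : SimpleGraph VG)
    (v w : Fin k × Bool → VG)
    (hv : ∀ i : Fin k, G.Adj (v (i, false)) (v (i, true)))
    (hw : ∀ i : Fin k, G.Adj (w (i, false)) (w (i, true)))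
    (K : SimpleGraph VG)
    (hK : K = SimpleGraph.fromEdgeSet {e | ∃ i : Fin k,
      e = s(v (i, false), v (i, true)) ∨ e = s(w (i, false), w (i, true))})
    (Cond1 Cond2 Cond3 : Fin t → Prop)
    (hCond1 : ∀ b, Cond1 b ↔ ((∀ i j : Fin k × Bool, a i = b → a j = b → v i = v j) ∧
      (∀ i j : Fin k × Bool, a i = b → a j = b → w i = w j)))
    (hCond2 : ∀ b, Cond2 b ↔ (∀ i : Fin k × Bool, a i = b → v i = w i))
    (hCond3 : ∀ b, Cond3 b ↔ (∃ x y : VG, ∀ i : Fin k × Bool, a i = b →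
      (v i = x ∧ w i = y) ∨ (v i = y ∧ w i = x)))
    (hall : ∀ b : Fin t, Cond1 b ∨ Cond2 b ∨ Cond3 b)
    (hsome2 : ∃ b : Fin t, Cond2 b)
    -- the component `J` of `K` is the one containing the vertex `x₀` of `K`
    (x₀ : VG) (hx₀ : ∃ j : Fin k × Bool, x₀ = v j ∨ x₀ = w j)
    -- `inJ i` : the `i`-th edge of `H` has a lift in `J`
    (inJ : Fin k → Prop)
    (hinJ : ∀ i : Fin k, inJ i ↔
      (K.Reachable x₀ (v (i, false)) ∨ K.Reachable x₀ (w (i, false)))) :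
    (∃ b₁ b₂ : Fin t, b₁ ≠ b₂ ∧ Cond2 b₁ ∧ Cond2 b₂ ∧
        (∃ j : Fin k × Bool, a j = b₁ ∧ inJ j.1) ∧
        (∃ j : Fin k × Bool, a j = b₂ ∧ inJ j.1)) ∨
    (∃ b : Fin t, Cond2 b ∧
        2 ≤ Nat.card {j : Fin k × Bool // a j = b ∧ inJ j.1}) ∨
    (∃ b : Fin t, (Cond1 b ∨ Cond3 b) ∧ 3 ≤ H.degree b ∧
        (∃ j : Fin k × Bool, a j = b ∧ inJ j.1)) := by
  
  classical
  by_contra hcon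
  rw [not_or, not_or] at hcon
  obtain ⟨h1, h2, h3⟩ := hcon
  -- K adjacency helper
  have hadjK : ∀ x y : VG, (∃ i : Fin k,
      s(x, y) = s(v (i, false), v (i, true)) ∨ s(x, y) = s(w (i, false), w (i, true))) →
      x ≠ y → K.Adj x y := by
    intro x y hmem hne
    rw [hK, SimpleGraph.fromEdgeSet_adj]
    exact ⟨hmem, hne⟩
  have hKv : ∀ i : Fin k, K.Adj (v (i, false)) (v (i, true)) := fun i =>
    hadjK _ _ ⟨i, Or.inl rfl⟩ (hv i).ne
  have hKw : ∀ i : Fin k, K.Adj (w (i, false)) (w (i, true)) := fun i =>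
    hadjK _ _ ⟨i, Or.inr rfl⟩ (hw i).ne
  -- reachability transfers along a lift edge
  have hRv : ∀ (i : Fin k) (ε ε' : Bool),
      K.Reachable x₀ (v (i, ε)) → K.Reachable x₀ (v (i, ε')) := by
    intro i ε ε' h
    cases ε <;> cases ε' <;>
      first
        | exact h
        | exact h.trans (hKv i).reachable
        | exact h.trans (hKv i).symm.reachable
  have hRw : ∀ (i : Fin k) (ε ε' : Bool),
      K.Reachable x₀ (w (i, ε)) → K.Reachable x₀ (w (i, ε')) := by
    intro i ε ε' h
    cases ε <;> cases ε' <;>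
      first
        | exact h
        | exact h.trans (hKw i).reachable
        | exact h.trans (hKw i).symm.reachable
  have hinJv : ∀ j : Fin k × Bool, K.Reachable x₀ (v j) → inJ j.1 := by
    rintro ⟨i, ε⟩ h
    exact (hinJ i).mpr (Or.inl (hRv i ε false h))
  have hinJw : ∀ j : Fin k × Bool, K.Reachable x₀ (w j) → inJ j.1 := by
    rintro ⟨i, ε⟩ h
    exact (hinJ i).mpr (Or.inr (hRw i ε false h))
  have hinJ2 : ∀ j : Fin k × Bool, inJ j.1 →
      K.Reachable x₀ (v j) ∨ K.Reachable x₀ (w j) := by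
    rintro ⟨i, ε⟩ h
    rcases (hinJ i).mp h with h' | h'
    · exact Or.inl (hRv i false ε h')
    · exact Or.inr (hRw i false ε h')
  -- fullness at vertices satisfying Condition 1 or 3
  have hfull : ∀ b : Fin t, (Cond1 b ∨ Cond3 b) → ∀ j j' : Fin k × Bool,
      a j = b → a j' = b → inJ j.1 → inJ j'.1 := by
    intro b hb j j' haj haj' hj
    rcases hb with hb | hb
    · obtain ⟨hbv, hbw⟩ := (hCond1 b).mp hb
      rcases hinJ2 j hj with h | h
      · exact hinJv j' (hbv j j' haj haj' ▸ h)
      · exact hinJw j' (hbw j j' haj haj' ▸ h)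
    · obtain ⟨x, y, hxy⟩ := (hCond3 b).mp hb
      rcases hinJ2 j hj with h | h
      · rcases hxy j haj with ⟨hvx, -⟩ | ⟨hvy, -⟩
        · rcases hxy j' haj' with ⟨hv', -⟩ | ⟨-, hw'⟩
          · exact hinJv j' (by rw [hv', ← hvx]; exact h)
          · exact hinJw j' (by rw [hw', ← hvx]; exact h)
        · rcases hxy j' haj' with ⟨-, hw'⟩ | ⟨hv', -⟩
          · exact hinJw j' (by rw [hw', ← hvy]; exact h)
          · exact hinJv j' (by rw [hv', ← hvy]; exact h)
      · rcases hxy j haj with ⟨-, hwy⟩ | ⟨-, hwx⟩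
        · rcases hxy j' haj' with ⟨-, hw'⟩ | ⟨hv', -⟩
          · exact hinJw j' (by rw [hw', ← hwy]; exact h)
          · exact hinJv j' (by rw [hv', ← hwy]; exact h)
        · rcases hxy j' haj' with ⟨hv', -⟩ | ⟨-, hw'⟩
          · exact hinJv j' (by rw [hv', ← hwx]; exact h)
          · exact hinJw j' (by rw [hw', ← hwx]; exact h)
  -- some edge is in J'
  have hP0 : ∃ j : Fin k × Bool, inJ j.1 := by
    obtain ⟨j, hj | hj⟩ := hx₀
    · exact ⟨j, hinJv j (hj ▸ SimpleGraph.Reachable.refl x₀)⟩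
    · exact ⟨j, hinJw j (hj ▸ SimpleGraph.Reachable.refl x₀)⟩
  -- the number of half-edges at `b` equals the degree of `b` in `H`
  have hcard : ∀ b : Fin t, Nat.card {j : Fin k × Bool // a j = b} = H.degree b := by
    intro b
    have hmem : ∀ (i : Fin k) (ε : Bool), a (i, ε) = b → H.Adj b (a (i, !ε)) := by
      intro i ε hj
      cases ε
      · simpa using hj ▸ ha i
      · simpa using hj ▸ (ha i).symm
    have hedge : ∀ (i : Fin k) (ε : Bool), a (i, ε) = b →
        s(b, a (i, !ε)) = s(a (i, false), a (i, true)) := by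
      intro i ε hj
      cases ε
      · simp only [Bool.not_false]
        rw [← hj]
      · simp only [Bool.not_true]
        rw [← hj, Sym2.eq_swap]
    let f : {j : Fin k × Bool // a j = b} → H.neighborSet b :=
      fun j => ⟨a (j.1.1, !j.1.2), hmem j.1.1 j.1.2 j.2⟩
    have hinj : Function.Injective f := by
      rintro ⟨⟨i, ε⟩, hj⟩ ⟨⟨i', ε'⟩, hj'⟩ heq
      have hc : a (i, !ε) = a (i', !ε') := congrArg Subtype.val heq
      have hii' : i = i' := by
        have he : s(b, a (i, !ε)) ∈ H.edgeSet := H.mem_edgeSet.mpr (hmem i ε hj)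
        obtain ⟨i₀, -, huniq⟩ := henum _ he
        have e1 : i = i₀ := huniq i (hedge i ε hj)
        have e2 : i' = i₀ := huniq i' (by rw [hc]; exact hedge i' ε' hj')
        rw [e1, e2]
      subst hii'
      have hee' : ε = ε' := by
        cases ε <;> cases ε'
        · rfl
        · exact absurd (hj.trans hj'.symm) (ha i).ne
        · exact absurd (hj'.trans hj.symm) (ha i).ne
        · rfl
      subst hee'
      rfl
    have hsurj : Function.Surjective f := by
      rintro ⟨c, hc⟩
      have he : s(b, c) ∈ H.edgeSet := H.mem_edgeSet.mpr hc
      obtain ⟨i, hi, -⟩ := henum _ he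
      rw [Sym2.eq_iff] at hi
      rcases hi with ⟨hb, hcc⟩ | ⟨hb, hcc⟩
      · exact ⟨⟨(i, false), hb.symm⟩, Subtype.ext hcc.symm⟩
      · exact ⟨⟨(i, true), hb.symm⟩, Subtype.ext hcc.symm⟩
    have := Nat.card_congr (Equiv.ofBijective f ⟨hinj, hsurj⟩)
    rw [this, Nat.card_eq_fintype_card, SimpleGraph.card_neighborSet_eq_degree]
  -- Nat.card of the half-edges of b in J', as a Finset card
  have hD : ∀ b : Fin t, Nat.card {j : Fin k × Bool // a j = b ∧ inJ j.1} =
      (Finset.univ.filter (fun j : Fin k × Bool => a j = b ∧ inJ j.1)).card := by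
    intro b
    rw [Nat.card_eq_fintype_card, Fintype.card_subtype]
  -- abbreviation for the degree in J'
  set D : Fin t → ℕ :=
    fun b => (Finset.univ.filter (fun j : Fin k × Bool => a j = b ∧ inJ j.1)).card with hDdef
  have hDpos : ∀ b : Fin t, (∃ j : Fin k × Bool, a j = b ∧ inJ j.1) ↔ 0 < D b := by
    intro b
    rw [Finset.card_pos]
    constructor
    · rintro ⟨j, hj⟩
      exact ⟨j, Finset.mem_filter.mpr ⟨Finset.mem_univ j, hj⟩⟩
    · rintro ⟨j, hj⟩
      exact ⟨j, (Finset.mem_filter.mp hj).2⟩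
  -- there is a vertex satisfying Condition 2 which belongs to J'
  have hC : ∃ b : Fin t, Cond2 b ∧ ∃ j : Fin k × Bool, a j = b ∧ inJ j.1 := by
    by_contra hno
    -- then every vertex of J' is full
    have hfull2 : ∀ b : Fin t, (∃ j : Fin k × Bool, a j = b ∧ inJ j.1) →
        ∀ j' : Fin k × Bool, a j' = b → inJ j'.1 := by
      rintro b ⟨j, haj, hj⟩ j' haj'
      rcases hall b with hb | hb | hb
      · exact hfull b (Or.inl hb) j j' haj haj' hj
      · exact absurd (⟨b, hb, j, haj, hj⟩ :
          ∃ b : Fin t, Cond2 b ∧ ∃ j : Fin k × Bool, a j = b ∧ inJ j.1) hno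
      · exact hfull b (Or.inr hb) j j' haj haj' hj
    -- stepping along an edge of H
    have hstep : ∀ b c : Fin t, (∃ j : Fin k × Bool, a j = b ∧ inJ j.1) →
        H.Adj b c → (∃ j : Fin k × Bool, a j = c ∧ inJ j.1) := by
      intro b c hb hadj
      obtain ⟨i, hi, -⟩ := henum _ (H.mem_edgeSet.mpr hadj)
      rw [Sym2.eq_iff] at hi
      rcases hi with ⟨hb', hc'⟩ | ⟨hb', hc'⟩
      · exact ⟨(i, true), hc'.symm, hfull2 b hb (i, false) hb'.symm⟩
      · exact ⟨(i, false), hc'.symm, hfull2 b hb (i, true) hb'.symm⟩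
    -- hence every vertex of H is in J'
    have hwalk : ∀ (x y : Fin t) (p : H.Walk x y),
        (∃ j : Fin k × Bool, a j = x ∧ inJ j.1) → (∃ j : Fin k × Bool, a j = y ∧ inJ j.1) := by
      intro x y p
      induction p with
      | nil => exact fun hx => hx
      | cons hadj p ih => exact fun hx => ih (hstep _ _ hx hadj)
    have hallP : ∀ c : Fin t, ∃ j : Fin k × Bool, a j = c ∧ inJ j.1 := by
      obtain ⟨j₀, hj₀⟩ := hP0
      intro c
      obtain ⟨p⟩ := hHconn.preconnected (a j₀) c
      exact hwalk _ _ p ⟨j₀, rfl, hj₀⟩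
    obtain ⟨bs, hbs⟩ := hsome2
    exact hno ⟨bs, hbs, hallP bs⟩
  obtain ⟨b₀, hb₀2, hb₀J⟩ := hC
  -- D b₀ = 1
  have hDb₀ : D b₀ = 1 := by
    have hge : 0 < D b₀ := (hDpos b₀).mp hb₀J
    have hlt : D b₀ < 2 := by
      by_contra hge2
      push_neg at hge2
      exact h2 ⟨b₀, hb₀2, (hD b₀).symm ▸ hge2⟩
    omega
  -- every other vertex has even degree in J'
  have hDeven : ∀ b : Fin t, b ≠ b₀ → Even (D b) := by
    intro b hne
    by_cases hb : ∃ j : Fin k × Bool, a j = b ∧ inJ j.1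
    · have hnc2 : ¬ Cond2 b := by
        intro hc2
        exact h1 ⟨b, b₀, hne, hc2, hb₀2, hb, hb₀J⟩
      have h13 : Cond1 b ∨ Cond3 b := by
        rcases hall b with hb' | hb' | hb'
        · exact Or.inl hb'
        · exact absurd hb' hnc2
        · exact Or.inr hb'
      have hdlt : H.degree b < 3 := by
        by_contra hge3
        push_neg at hge3
        exact h3 ⟨b, h13, hge3, hb⟩
      have hdeg2 : H.degree b = 2 := le_antisymm (by omega) (hHdeg b)
      -- b is full, so D b = H.degree b = 2
      obtain ⟨j, haj, hj⟩ := hb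
      have hfilter : Nat.card {j : Fin k × Bool // a j = b ∧ inJ j.1} =
          Nat.card {j : Fin k × Bool // a j = b} := by
        apply Nat.card_congr
        apply Equiv.subtypeEquivRight
        intro j'
        constructor
        · exact fun h => h.1
        · exact fun h => ⟨h, hfull b h13 j j' haj h hj⟩
      have : D b = 2 := by
        show (Finset.univ.filter (fun j : Fin k × Bool => a j = b ∧ inJ j.1)).card = 2
        rw [← hD b, hfilter, hcard b, hdeg2]
      rw [this]
      exact even_two
    · have : D b = 0 := by
        rcases Nat.eq_zero_or_pos (D b) with h0 | hpos
        · exact h0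
        · exact absurd ((hDpos b).mpr hpos) hb
      rw [this]
      exact Even.zero
  -- the total degree sum is even
  have hNeven : Even ((Finset.univ.filter (fun j : Fin k × Bool => inJ j.1)).card) := by
    have : (Finset.univ.filter (fun j : Fin k × Bool => inJ j.1)).card =
        Fintype.card {j : Fin k × Bool // inJ j.1} := (Fintype.card_subtype _).symm
    rw [this]
    have e : {j : Fin k × Bool // inJ j.1} ≃ {i : Fin k // inJ i} × Bool :=
      { toFun := fun j => (⟨j.1.1, j.2⟩, j.1.2)
        invFun := fun p => ⟨(p.1.1, p.2), p.1.2⟩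
        left_inv := fun j => rfl
        right_inv := fun p => rfl }
    rw [Fintype.card_congr e, Fintype.card_prod, Fintype.card_bool]
    exact ⟨Fintype.card {i : Fin k // inJ i}, by ring⟩
  -- but the sum decomposes into fibers
  have hsum : ∑ b : Fin t, D b =
      (Finset.univ.filter (fun j : Fin k × Bool => inJ j.1)).card := by
    rw [Finset.card_eq_sum_card_fiberwise
      (f := a) (t := Finset.univ) (fun j _ => Finset.mem_univ (a j))]
    refine Finset.sum_congr rfl fun b _ => ?_
    show (Finset.univ.filter (fun j : Fin k × Bool => a j = b ∧ inJ j.1)).card = _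
    rw [Finset.filter_filter]
    congr 1
    exact Finset.filter_congr (fun j _ => by constructor <;> exact fun h => ⟨h.2, h.1⟩)
  have hsumEven : Even (∑ b : Fin t, D b) := hsum ▸ hNeven
  have hsplit : D b₀ + ∑ b ∈ Finset.univ.erase b₀, D b = ∑ b : Fin t, D b :=
    Finset.add_sum_erase _ D (Finset.mem_univ b₀)
  have hrestEven : Even (∑ b ∈ Finset.univ.erase b₀, D b) := by
    apply Finset.even_sum
    intro b hb
    exact hDeven b (Finset.ne_of_mem_erase hb)
  rw [← hsplit, hDb₀] at hsumEven
  rcases hrestEven with ⟨m, hm⟩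
  rw [hm] at hsumEven
  rcases hsumEven with ⟨n, hn⟩
  omega
end

section
/- With the setup below, suppose T satisfies Condition 1, 2, or 3 at every vertex of H and satisfies Condition 2 at some vertex b of H, and let δ be the degree of b in H. For a connected component J of K, let J' be the subgraph of H consisting of all edges {a_{2i-1},a_{2i}} such that {v_{2i-1},v_{2i}} or {w_{2i-1},w_{2i}} belongs to J; say a vertex x of J satisfies Condition 2 if x = v_i or x = w_i for some i such that T satisfies Condition 2 at a_i. Let κ be the number of connected components J of K such that J has at most one vertex satisfying Condition 2 and b has degree at least 2 in J'. Then the number of distinct vertices of K lying over b, i.e., |{v_i : i ∈ Γ(b)} ∪ {w_i : i ∈ Γ(b)}|, is at most δ − κ. -/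
/-- (Lemma `degree_cond2`.)  Suppose `T = (v, w)` satisfies Condition 1, 2
or 3 at every vertex of `H` and Condition 2 at the vertex `b`, of degree `δ` in `H`.  For a
connected component `c` of `K`, the subgraph `J'` of `H` below `c` consists of the edges of
`H` one of whose lifts lies in `c`; a vertex `x` of `c` satisfies Condition 2 if `x = v i`
or `x = w i` for some `i` with Condition 2 holding at `a i`.  Let `κ` be the number of
components of `K` (i.e. components of the edge graph containing a vertex of `K`) with at
most one vertex satisfying Condition 2 and in which `b` has degree ≥ 2 in `J'`.  Then the
number of distinct vertices of `K` lying over `b` is at most `δ - κ`. -/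
theorem stmt11
    {t k : ℕ}
    (H : SimpleGraph (Fin t)) [DecidableRel H.Adj]
    (hHconn : H.Connected) (hHdeg : ∀ b : Fin t, 2 ≤ H.degree b)
    (a : Fin k × Bool → Fin t)
    (ha : ∀ i : Fin k, H.Adj (a (i, false)) (a (i, true)))
    (henum : ∀ e ∈ H.edgeSet, ∃! i : Fin k, e = s(a (i, false), a (i, true)))
    {VG : Type} [Fintype VG] (G : SimpleGraph VG)
    (v w : Fin k × Bool → VG)
    (hv : ∀ i : Fin k, G.Adj (v (i, false)) (v (i, true)))
    (hw : ∀ i : Fin k, G.Adj (w (i, false)) (w (i, true)))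
    (K : SimpleGraph VG)
    (hK : K = SimpleGraph.fromEdgeSet {e | ∃ i : Fin k,
      e = s(v (i, false), v (i, true)) ∨ e = s(w (i, false), w (i, true))})
    (Cond1 Cond2 Cond3 : Fin t → Prop)
    (hCond1 : ∀ b, Cond1 b ↔ ((∀ i j : Fin k × Bool, a i = b → a j = b → v i = v j) ∧
      (∀ i j : Fin k × Bool, a i = b → a j = b → w i = w j)))
    (hCond2 : ∀ b, Cond2 b ↔ (∀ i : Fin k × Bool, a i = b → v i = w i))
    (hCond3 : ∀ b, Cond3 b ↔ (∃ x y : VG, ∀ i : Fin k × Bool, a i = b →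
      (v i = x ∧ w i = y) ∨ (v i = y ∧ w i = x)))
    (hall : ∀ b : Fin t, Cond1 b ∨ Cond2 b ∨ Cond3 b)
    (b : Fin t) (hb2 : Cond2 b)
    (κ : ℕ)
    (hκ : κ = Nat.card {c : K.ConnectedComponent //
      -- `c` is a component of `K`, i.e. contains a vertex of `K`
      (∃ j : Fin k × Bool,
        K.connectedComponentMk (v j) = c ∨ K.connectedComponentMk (w j) = c) ∧
      -- `c` has at most one vertex satisfying Condition 2
      Nat.card {x : VG // K.connectedComponentMk x = c ∧
        ∃ j : Fin k × Bool, (x = v j ∨ x = w j) ∧ Cond2 (a j)} ≤ 1 ∧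
      -- `b` has degree at least 2 in `J'`
      2 ≤ Nat.card {j : Fin k × Bool // a j = b ∧
        (K.connectedComponentMk (v (j.1, false)) = c ∨
         K.connectedComponentMk (w (j.1, false)) = c)}}) :
    Nat.card {x : VG // ∃ j : Fin k × Bool, a j = b ∧ (x = v j ∨ x = w j)}
      ≤ H.degree b - κ := by
  classical
  have hb2' : ∀ i : Fin k × Bool, a i = b → v i = w i := (hCond2 b).mp hb2
  -- adjacency in K
  have hKv : ∀ i : Fin k, K.Adj (v (i, false)) (v (i, true)) := by
    intro i
    rw [hK, SimpleGraph.fromEdgeSet_adj]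
    exact ⟨⟨i, Or.inl rfl⟩, (hv i).ne⟩
  have hKw : ∀ i : Fin k, K.Adj (w (i, false)) (w (i, true)) := by
    intro i
    rw [hK, SimpleGraph.fromEdgeSet_adj]
    exact ⟨⟨i, Or.inr rfl⟩, (hw i).ne⟩
  have hcompv : ∀ i : Fin k,
      K.connectedComponentMk (v (i, false)) = K.connectedComponentMk (v (i, true)) :=
    fun i => SimpleGraph.ConnectedComponent.sound (hKv i).reachable
  have hcompw : ∀ i : Fin k,
      K.connectedComponentMk (w (i, false)) = K.connectedComponentMk (w (i, true)) :=
    fun i => SimpleGraph.ConnectedComponent.sound (hKw i).reachable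
  -- Claim A : both standard lifts of the edge of j lie in the component of v j
  have claimA : ∀ j : Fin k × Bool, a j = b →
      K.connectedComponentMk (v (j.1, false)) = K.connectedComponentMk (v j) ∧
      K.connectedComponentMk (w (j.1, false)) = K.connectedComponentMk (v j) := by
    rintro ⟨i, ε⟩ hj
    have hvw : v (i, ε) = w (i, ε) := hb2' (i, ε) hj
    cases ε with
    | false => exact ⟨rfl, congrArg K.connectedComponentMk hvw.symm⟩
    | true => exact ⟨hcompv i, (hcompw i).trans (congrArg K.connectedComponentMk hvw.symm)⟩
  -- bad components
  set BadC := {c : K.ConnectedComponent //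
      (∃ j : Fin k × Bool,
        K.connectedComponentMk (v j) = c ∨ K.connectedComponentMk (w j) = c) ∧
      Nat.card {x : VG // K.connectedComponentMk x = c ∧
        ∃ j : Fin k × Bool, (x = v j ∨ x = w j) ∧ Cond2 (a j)} ≤ 1 ∧
      2 ≤ Nat.card {j : Fin k × Bool // a j = b ∧
        (K.connectedComponentMk (v (j.1, false)) = c ∨
         K.connectedComponentMk (w (j.1, false)) = c)}} with hBadC
  -- constancy of v on the fiber over a bad component
  have hconst : ∀ c : BadC, ∀ j₁ j₂ : Fin k × Bool, a j₁ = b → a j₂ = b →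
      K.connectedComponentMk (v j₁) = c.1 → K.connectedComponentMk (v j₂) = c.1 →
      v j₁ = v j₂ := by
    intro c j₁ j₂ hj₁ hj₂ hc₁ hc₂
    by_contra hne
    have hnt : Nontrivial {x : VG // K.connectedComponentMk x = c.1 ∧
        ∃ j : Fin k × Bool, (x = v j ∨ x = w j) ∧ Cond2 (a j)} := by
      refine ⟨⟨v j₁, hc₁, j₁, Or.inl rfl, ?_⟩, ⟨v j₂, hc₂, j₂, Or.inl rfl, ?_⟩, ?_⟩
      · rw [hj₁]; exact hb2
      · rw [hj₂]; exact hb2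
      · intro h
        exact hne (congrArg Subtype.val h)
    have := Finite.one_lt_card_iff_nontrivial.mpr hnt
    omega
  -- choose two distinct fiber elements over each bad component
  have hP : ∀ c : BadC, ∃ p : (Fin k × Bool) × (Fin k × Bool), p.1 ≠ p.2 ∧
      a p.1 = b ∧ a p.2 = b ∧ K.connectedComponentMk (v p.1) = c.1 ∧
      K.connectedComponentMk (v p.2) = c.1 := by
    intro c
    have h2 := c.2.2.2
    have hnt : Nontrivial {j : Fin k × Bool // a j = b ∧
        (K.connectedComponentMk (v (j.1, false)) = c.1 ∨
         K.connectedComponentMk (w (j.1, false)) = c.1)} := by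
      rw [← Finite.one_lt_card_iff_nontrivial]
      omega
    obtain ⟨x, y, hxy⟩ := hnt
    have hx : K.connectedComponentMk (v x.1) = c.1 := by
      rcases x.2.2 with h | h
      · rw [← (claimA x.1 x.2.1).1]; exact h
      · rw [← (claimA x.1 x.2.1).2]; exact h
    have hy : K.connectedComponentMk (v y.1) = c.1 := by
      rcases y.2.2 with h | h
      · rw [← (claimA y.1 y.2.1).1]; exact h
      · rw [← (claimA y.1 y.2.1).2]; exact h
    exact ⟨(x.1, y.1), fun h => hxy (Subtype.ext h), x.2.1, y.2.1, hx, hy⟩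
  set ψ : BadC → Fin k × Bool := fun c => (Classical.choose (hP c)).1 with hψ
  set ψ' : BadC → Fin k × Bool := fun c => (Classical.choose (hP c)).2 with hψ'
  have hspec : ∀ c : BadC, ψ c ≠ ψ' c ∧ a (ψ c) = b ∧ a (ψ' c) = b ∧
      K.connectedComponentMk (v (ψ c)) = c.1 ∧
      K.connectedComponentMk (v (ψ' c)) = c.1 := fun c => Classical.choose_spec (hP c)
  have hψinj : Function.Injective ψ := by
    intro c₁ c₂ h
    apply Subtype.ext
    rw [← (hspec c₁).2.2.2.1, ← (hspec c₂).2.2.2.1, h]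
  -- the sets
  set S : Set (Fin k × Bool) := {j | a j = b} with hS
  set R : Set (Fin k × Bool) := Set.range ψ with hR
  have hRS : R ⊆ S := by
    rintro j ⟨c, rfl⟩
    exact (hspec c).2.1
  -- the image does not shrink after deleting R
  have hcover : v '' S = v '' (S \ R) := by
    apply Set.Subset.antisymm _ (Set.image_mono Set.diff_subset)
    rintro x ⟨j, hj, rfl⟩
    by_cases hjR : j ∈ R
    · obtain ⟨c, rfl⟩ := hjR
      refine ⟨ψ' c, ⟨(hspec c).2.2.1, ?_⟩, ?_⟩
      · rintro ⟨c', hc'⟩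
        have : c' = c := by
          apply Subtype.ext
          rw [← (hspec c').2.2.2.1, hc', (hspec c).2.2.2.2]
        rw [this] at hc'
        exact (hspec c).1 hc'
      · exact (hconst c (ψ' c) (ψ c) (hspec c).2.2.1 (hspec c).2.1
          (hspec c).2.2.2.2 (hspec c).2.2.2.1)
    · exact ⟨j, ⟨hj, hjR⟩, rfl⟩
  -- identify the target set
  have hset : {x : VG | ∃ j : Fin k × Bool, a j = b ∧ (x = v j ∨ x = w j)} = v '' S := by
    ext x
    constructor
    · rintro ⟨j, hj, hx | hx⟩
      · exact ⟨j, hj, hx.symm⟩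
      · exact ⟨j, hj, (hx.trans (hb2' j hj).symm).symm⟩
    · rintro ⟨j, hj, rfl⟩
      exact ⟨j, hj, Or.inl rfl⟩
  -- counting
  have hcard1 : Nat.card {x : VG // ∃ j : Fin k × Bool, a j = b ∧ (x = v j ∨ x = w j)}
      = (v '' S).ncard := by
    rw [← hset]
    exact Nat.card_coe_set_eq _
  have hcardR : R.ncard = κ := by
    rw [← Nat.card_coe_set_eq, hR, Nat.card_range_of_injective hψinj, hκ]
  have hcardS : S.ncard = H.degree b := by
    rw [← Nat.card_coe_set_eq]
    have e : S ≃ H.incidenceSet b := by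
      refine Equiv.ofBijective (fun j => ⟨s(a (j.1.1, false), a (j.1.1, true)), ?_, ?_⟩) ⟨?_, ?_⟩
      · exact H.mem_edgeSet.mpr (ha j.1.1)
      · rcases j with ⟨⟨i, ε⟩, hj⟩
        rw [Sym2.mem_iff]
        cases ε
        · exact Or.inl hj.symm
        · exact Or.inr hj.symm
      · rintro ⟨⟨i₁, ε₁⟩, hj₁⟩ ⟨⟨i₂, ε₂⟩, hj₂⟩ h
        have he : s(a (i₁, false), a (i₁, true)) = s(a (i₂, false), a (i₂, true)) :=
          congrArg Subtype.val h
        obtain ⟨i, hi, hiu⟩ := henum s(a (i₁, false), a (i₁, true)) (H.mem_edgeSet.mpr (ha i₁))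
        have hii : i₁ = i₂ := (hiu i₁ rfl).trans (hiu i₂ he).symm
        subst hii
        have hee : ε₁ = ε₂ := by
          cases ε₁ <;> cases ε₂
          · rfl
          · exact absurd (hj₁.trans hj₂.symm) (ha i₁).ne
          · exact absurd (hj₂.trans hj₁.symm) (ha i₁).ne
          · rfl
        subst hee
        rfl
      · rintro ⟨e, he, hbe⟩
        obtain ⟨i, hi, -⟩ := henum e he
        subst hi
        rw [Sym2.mem_iff] at hbe
        rcases hbe with hb1 | hb1
        · exact ⟨⟨(i, false), hb1.symm⟩, rfl⟩
        · exact ⟨⟨(i, true), hb1.symm⟩, rfl⟩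
    rw [Nat.card_congr e, Nat.card_eq_fintype_card]
    exact H.card_incidenceSet_eq_degree b
  calc Nat.card {x : VG // ∃ j : Fin k × Bool, a j = b ∧ (x = v j ∨ x = w j)}
      = (v '' (S \ R)).ncard := by rw [hcard1, hcover]
    _ ≤ (S \ R).ncard := Set.ncard_image_le (Set.toFinite _)
    _ = S.ncard - R.ncard := Set.ncard_diff hRS (Set.toFinite _)
    _ = H.degree b - κ := by rw [hcardS, hcardR]
end

section
/- With the setup below, suppose T satisfies Condition 1 or Condition 3 at every vertex of H. Then K has at most two connected components. -/
/-- (Lemma `2comps`.)  If `T = (v, w)` satisfies Condition 1 or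
Condition 3 at every vertex of `H`, then `K` has at most two connected components:
there are two vertices of `K` such that every vertex of `K` is reachable in `K` from
one of them. -/
theorem stmt14
    {t k : ℕ}
    (H : SimpleGraph (Fin t)) [DecidableRel H.Adj]
    (hHconn : H.Connected) (hHdeg : ∀ b : Fin t, 2 ≤ H.degree b)
    (a : Fin k × Bool → Fin t)
    (ha : ∀ i : Fin k, H.Adj (a (i, false)) (a (i, true)))
    (henum : ∀ e ∈ H.edgeSet, ∃! i : Fin k, e = s(a (i, false), a (i, true)))
    {VG : Type} (G : SimpleGraph VG)
    (v w : Fin k × Bool → VG)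
    (hv : ∀ i : Fin k, G.Adj (v (i, false)) (v (i, true)))
    (hw : ∀ i : Fin k, G.Adj (w (i, false)) (w (i, true)))
    (K : SimpleGraph VG)
    (hK : K = SimpleGraph.fromEdgeSet {e | ∃ i : Fin k,
      e = s(v (i, false), v (i, true)) ∨ e = s(w (i, false), w (i, true))})
    (hall : ∀ b : Fin t,
      ((∀ i j : Fin k × Bool, a i = b → a j = b → v i = v j) ∧
       (∀ i j : Fin k × Bool, a i = b → a j = b → w i = w j)) ∨
      (∃ x y : VG, ∀ i : Fin k × Bool, a i = b →
        (v i = x ∧ w i = y) ∨ (v i = y ∧ w i = x))) :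
    ∃ x y : VG, ∀ j : Fin k × Bool,
      (K.Reachable (v j) x ∨ K.Reachable (v j) y) ∧
      (K.Reachable (w j) x ∨ K.Reachable (w j) y) := by
  classical
  -- K contains the edges coming from v and w
  have hKv : ∀ i : Fin k, K.Adj (v (i, false)) (v (i, true)) := by
    intro i
    rw [hK, SimpleGraph.fromEdgeSet_adj]
    exact ⟨⟨i, Or.inl rfl⟩, (hv i).ne⟩
  have hKw : ∀ i : Fin k, K.Adj (w (i, false)) (w (i, true)) := by
    intro i
    rw [hK, SimpleGraph.fromEdgeSet_adj]
    exact ⟨⟨i, Or.inr rfl⟩, (hw i).ne⟩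
  -- H has an edge, hence k ≥ 1: find i0
  obtain ⟨b0⟩ := hHconn.nonempty
  have hdeg : 0 < H.degree b0 := lt_of_lt_of_le two_pos (hHdeg b0)
  obtain ⟨c0, hbc⟩ := H.degree_pos_iff_exists_adj b0 |>.mp hdeg
  obtain ⟨i0, hi0, -⟩ := henum s(b0, c0) hbc
  set x := v (i0, false) with hx
  set y := w (i0, false) with hy
  set P : Fin k × Bool → Prop := fun j =>
    (K.Reachable (v j) x ∧ K.Reachable (w j) y) ∨
    (K.Reachable (v j) y ∧ K.Reachable (w j) x) with hP
  -- spreading P within a fiber of a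
  have key : ∀ (b : Fin t) (i : Fin k × Bool), a i = b → P i →
      ∀ j : Fin k × Bool, a j = b → P j := by
    intro b i hib hPi j hjb
    rcases hall b with ⟨h1, h2⟩ | ⟨xb, yb, h3⟩
    · have hv' : v j = v i := h1 j i hjb hib
      have hw' : w j = w i := h2 j i hjb hib
      simp only [hP] at hPi ⊢
      rw [hv', hw']; exact hPi
    · rcases h3 i hib with ⟨hvi, hwi⟩ | ⟨hvi, hwi⟩ <;>
        rcases h3 j hjb with ⟨hvj, hwj⟩ | ⟨hvj, hwj⟩ <;>
        simp only [hP] at hPi ⊢ <;>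
        [rw [hvj, hwj, ← hvi, ← hwi];
         rw [hvj, hwj, ← hwi, ← hvi];
         rw [hvj, hwj, ← hwi, ← hvi];
         rw [hvj, hwj, ← hvi, ← hwi]] <;>
        tauto
  -- transferring P along an edge of H
  have step : ∀ (i : Fin k) (ε : Bool), P (i, ε) → P (i, !ε) := by
    intro i ε h
    have rv : K.Reachable (v (i, !ε)) (v (i, ε)) := by
      cases ε
      · exact (hKv i).symm.reachable
      · exact (hKv i).reachable
    have rw : K.Reachable (w (i, !ε)) (w (i, ε)) := by
      cases ε
      · exact (hKw i).symm.reachable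
      · exact (hKw i).reachable
    rcases h with ⟨h1, h2⟩ | ⟨h1, h2⟩
    · exact Or.inl ⟨rv.trans h1, rw.trans h2⟩
    · exact Or.inr ⟨rv.trans h1, rw.trans h2⟩
  set Q : Fin t → Prop := fun b => ∀ j : Fin k × Bool, a j = b → P j with hQ
  have spread : ∀ b c : Fin t, H.Adj b c → Q b → Q c := by
    intro b c hbc' hQb
    obtain ⟨i, hi, -⟩ := henum s(b, c) hbc'
    rcases Sym2.eq_iff.mp hi with ⟨h1, h2⟩ | ⟨h1, h2⟩
    · -- b = a (i, false), c = a (i, true)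
      have pb : P (i, false) := hQb (i, false) h1.symm
      have pc : P (i, true) := step i false pb
      exact key c (i, true) h2.symm pc
    · have pb : P (i, true) := hQb (i, true) h1.symm
      have pc : P (i, false) := step i true pb
      exact key c (i, false) h2.symm pc
  have base : Q (a (i0, false)) := by
    refine key (a (i0, false)) (i0, false) rfl ?_ 
    exact Or.inl ⟨SimpleGraph.Reachable.refl _, SimpleGraph.Reachable.refl _⟩
  have main : ∀ (u c : Fin t), H.Walk u c → Q u → Q c := by
    intro u c p
    induction p with
    | nil => exact id
    | cons h p ih => exact fun hu => ih (spread _ _ h hu)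
  refine ⟨x, y, ?_⟩
  intro j
  obtain ⟨p⟩ := hHconn.preconnected (a (i0, false)) (a j)
  have hPj : P j := main _ _ p base j rfl
  rcases hPj with ⟨h1, h2⟩ | ⟨h1, h2⟩
  · exact ⟨Or.inl h1, Or.inr h2⟩
  · exact ⟨Or.inr h1, Or.inl h2⟩
end
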